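/- arXiv:math/0607229 — 7 statements merged into one kernel-verified Lean document; each statement's English description precedes it below -/
import Mathlib

section
/- If X is a path-connected, locally path-connected topological space such that for some (equivalently, any) basepoint x the fundamental group π₁(X, x) does not admit the group of integers ℤ as a retract (i.e., there is no pair of group homomorphisms ι : ℤ → π₁(X,x), ρ : π₁(X,x) → ℤ with ρ ∘ ι = id), then X has the Phragmen–Brouwer Property. -/
open Set Topology
open scoped Classical

namespace PBP

universe u v

variable {E : Type u} {X : Type v} [TopologicalSpace E] [TopologicalSpace X] {p : E → X}

/-- `g : ℝ → E` is a lift (on `[0,1]`) of `γ : ℝ → X` starting at `e`. -/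
def IsLiftOf (p : E → X) (γ : ℝ → X) (e : E) (g : ℝ → E) : Prop :=
  Continuous g ∧ g 0 = e ∧ ∀ t ∈ Icc (0:ℝ) 1, p (g t) = γ t

theorem IsLiftOf.eq_at_one (hp : IsCoveringMap p) {γ : ℝ → X} {e : E} {g₁ g₂ : ℝ → E}
    (h₁ : IsLiftOf p γ e g₁) (h₂ : IsLiftOf p γ e g₂) : g₁ 1 = g₂ 1 := by
  have := hp.eqOn_of_comp_eqOn (isPreconnected_Icc (a := (0:ℝ)) (b := 1))
    h₁.1.continuousOn h₂.1.continuousOn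
    (fun t ht => by simp only [Function.comp_apply, h₁.2.2 t ht, h₂.2.2 t ht])
    (⟨le_refl 0, zero_le_one⟩ : (0:ℝ) ∈ Icc (0:ℝ) 1) (h₁.2.1.trans h₂.2.1.symm)
  exact this ⟨zero_le_one, le_refl 1⟩

/-- Lifting a homotopy (or path) over one horizontal strip, given trivializations
covering each cell of a subdivision. -/
theorem strip_lift {H : ℝ × ℝ → X} (hH : Continuous H)
    {n : ℕ} (hn : 0 < n)
    (charts : ∀ i : ℕ, i < n → ∃ (F : Type u) (_ : TopologicalSpace F)
      (T : Bundle.Trivialization F p),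
      ∀ t ∈ Icc ((i:ℝ)/n) (((i:ℝ)+1)/n), ∀ s : ℝ, H (t, s) ∈ T.baseSet)
    {e₀ : ℝ → E} (he₀ : Continuous e₀) (hpe₀ : ∀ s, p (e₀ s) = H (0, s)) :
    ∃ g : ℝ × ℝ → E, Continuous g ∧ (∀ s, g (0, s) = e₀ s) ∧
      ∀ t ∈ Icc (0:ℝ) 1, ∀ s, p (g (t, s)) = H (t, s) := by
  classical
  have hn' : (0:ℝ) < n := by exact_mod_cast hn
  have key : ∀ k : ℕ, k ≤ n → ∃ g : ℝ × ℝ → E, Continuous g ∧ (∀ s, g (0, s) = e₀ s) ∧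
      ∀ t ∈ Icc (0:ℝ) ((k:ℝ)/n), ∀ s, p (g (t, s)) = H (t, s) := by
    intro k hk
    induction k with
    | zero =>
      refine ⟨fun z => e₀ z.2, he₀.comp continuous_snd, fun s => rfl, ?_⟩
      intro t ht s
      have : t = 0 := le_antisymm (by simpa using ht.2) ht.1
      simp [this, hpe₀]
    | succ k ih =>
      obtain ⟨g, hg, hg0, hgl⟩ := ih (le_of_lt (Nat.lt_of_succ_le hk))
      obtain ⟨F, _, T, hT⟩ := charts k (Nat.lt_of_succ_le hk)
      set a : ℝ := (k:ℝ)/n with ha_def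
      set b : ℝ := ((k:ℝ)+1)/n with hb_def
      have ha0 : 0 ≤ a := by positivity
      have hab : a ≤ b := by
        exact (div_le_div_iff_of_pos_right hn').mpr (by linarith)
      have hbase : ∀ s : ℝ, H (a, s) ∈ T.baseSet :=
        fun s => hT a ⟨le_refl a, hab⟩ s
      have hmemg : ∀ s : ℝ, g (a, s) ∈ T.source := by
        intro s
        rw [T.mem_source, hgl a ⟨ha0, le_refl a⟩ s]
        exact hbase s
      set ℓ : ℝ → F := fun s => (T (g (a, s))).2 with hℓ
      have hcont_ga : Continuous fun s : ℝ => g (a, s) :=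
        hg.comp (continuous_const.prodMk continuous_id)
      have hcontℓ : Continuous ℓ := by
        have : Continuous fun s : ℝ => T (g (a, s)) :=
          T.continuousOn_toFun.comp_continuous hcont_ga hmemg
        exact this.snd
      have hTg : ∀ s : ℝ, T (g (a, s)) = (H (a, s), ℓ s) := by
        intro s
        refine Prod.ext ?_ rfl
        rw [T.coe_fst (hmemg s), hgl a ⟨ha0, le_refl a⟩ s]
      set c : ℝ × ℝ → ℝ := fun z => max a (min b z.1) with hc
      have hc_mem : ∀ z : ℝ × ℝ, c z ∈ Icc a b :=
        fun z => ⟨le_max_left _ _, max_le hab (min_le_left _ _)⟩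
      have hc_cont : Continuous c :=
        continuous_const.max (continuous_const.min continuous_fst)
      set g2 : ℝ × ℝ → E := fun z =>
        T.toOpenPartialHomeomorph.symm (H (c z, z.2), ℓ z.2) with hg2
      have hinner : Continuous fun z : ℝ × ℝ => (H (c z, z.2), ℓ z.2) :=
        (hH.comp (hc_cont.prodMk continuous_snd)).prodMk (hcontℓ.comp continuous_snd)
      have hmaps : ∀ z : ℝ × ℝ, (H (c z, z.2), ℓ z.2) ∈ T.target := by
        intro z
        rw [T.mem_target]
        exact hT _ (hc_mem z) _
      have hg2cont : Continuous g2 :=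
        T.toOpenPartialHomeomorph.continuousOn_symm.comp_continuous hinner hmaps
      have hpg2 : ∀ z : ℝ × ℝ, p (g2 z) = H (c z, z.2) :=
        fun z => T.proj_symm_apply (hmaps z)
      have hfront : ∀ z : ℝ × ℝ, z.1 = a → g z = g2 z := by
        intro z hz
        have hca : c z = a := by
          rw [hc]; simp only [hz, min_eq_right hab, max_self]
        have h2 : g2 z = g (a, z.2) := by
          rw [hg2]; simp only [hca]
          rw [← hTg z.2]
          exact T.toOpenPartialHomeomorph.left_inv (hmemg z.2)
        rw [h2, ← hz]
      refine ⟨fun z => if z.1 ≤ a then g z else g2 z, ?_, ?_, ?_⟩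
      · exact Continuous.if_le hg hg2cont continuous_fst continuous_const
          (fun z hz => hfront z hz)
      · intro s
        simp only [if_pos ha0]
        exact hg0 s
      · intro t ht s
        have htb : t ≤ b := by
          have := ht.2; rw [hb_def]; push_cast at this; linarith
        by_cases htl : t ≤ a
        · simp only [if_pos htl]
          exact hgl t ⟨ht.1, htl⟩ s
        · simp only [if_neg htl]
          rw [hpg2]
          push_neg at htl
          have hcb : max a (min b t) = t := by
            rw [min_eq_right htb, max_eq_right htl.le]
          show H (max a (min b t), s) = H (t, s)
          rw [hcb]
  obtain ⟨g, h1, h2, h3⟩ := key n (le_refl n)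
  refine ⟨g, h1, h2, ?_⟩
  intro t ht s
  apply h3
  rwa [div_self (ne_of_gt hn')]

/-- Lebesgue-number subdivision: a grid fine enough that every cell maps into
the base set of some trivialization. -/
theorem nonempty_fiber_of_connected (hp : IsCoveringMap p) {Y : Type*} [TopologicalSpace Y]
    [PreconnectedSpace Y] {f : Y → X} (hf : Continuous f) (y₀ : Y) (e : E) (he : p e = f y₀)
    (y : Y) : Nonempty (p ⁻¹' {f y}) := by
  have hcl : IsClosed (range p) := by
    rw [← isOpen_compl_iff, isOpen_iff_forall_mem_open]
    intro x hx
    obtain ⟨_, U, hxU, hU, _, Hm, _⟩ := hp x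
    refine ⟨U, ?_, hU, hxU⟩
    rintro z hzU ⟨w, rfl⟩
    exact hx ⟨((Hm ⟨w, hzU⟩).2 : p ⁻¹' {x}).1, ((Hm ⟨w, hzU⟩).2).2⟩
  have hop : IsOpen (range p) := hp.isOpenMap.isOpen_range
  have huniv := (IsClopen.preimage ⟨hcl, hop⟩ hf).eq_univ ⟨y₀, e, he⟩
  have hy : y ∈ f ⁻¹' range p := huniv ▸ mem_univ y
  obtain ⟨w, hw⟩ := hy
  exact ⟨⟨w, hw⟩⟩

theorem exists_subdiv (hp : IsCoveringMap p) {H : ℝ × ℝ → X} (hH : Continuous H)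
    (hne : ∀ z, Nonempty (p ⁻¹' {H z})) :
    ∃ n : ℕ, 0 < n ∧ ∀ i j : ℕ, i < n → j < n →
      ∃ (F : Type u) (_ : TopologicalSpace F) (T : Bundle.Trivialization F p),
        ∀ t ∈ Icc ((i:ℝ)/n) (((i:ℝ)+1)/n), ∀ s ∈ Icc ((j:ℝ)/n) (((j:ℝ)+1)/n),
          H (t, s) ∈ T.baseSet := by
  classical
  have hK : IsCompact ((Icc (0:ℝ) 1) ×ˢ (Icc (0:ℝ) 1)) := isCompact_Icc.prod isCompact_Icc
  have hopen : ∀ x : ℝ × ℝ, IsOpen (H ⁻¹' ((hp (H x)).toTrivialization.baseSet)) :=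
    fun x => (hp (H x)).toTrivialization.open_baseSet.preimage hH
  have hcover : (Icc (0:ℝ) 1) ×ˢ (Icc (0:ℝ) 1) ⊆
      ⋃ x : ℝ × ℝ, H ⁻¹' ((hp (H x)).toTrivialization.baseSet) := by
    intro z _
    exact mem_iUnion.2 ⟨z, (hp (H z)).mem_toTrivialization_baseSet⟩
  obtain ⟨δ, hδ, hball⟩ := lebesgue_number_lemma_of_metric hK hopen hcover
  obtain ⟨m, hm⟩ := exists_nat_one_div_lt hδ
  refine ⟨m + 1, Nat.succ_pos m, ?_⟩
  intro i j hi hj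
  have hn' : (0:ℝ) < (m+1:ℕ) := by positivity
  have hcorner : ((i:ℝ)/(m+1:ℕ), (j:ℝ)/(m+1:ℕ)) ∈ (Icc (0:ℝ) 1) ×ˢ (Icc (0:ℝ) 1) := by
    constructor <;> constructor
    · positivity
    · rw [div_le_one hn']; exact_mod_cast hi.le
    · positivity
    · rw [div_le_one hn']; exact_mod_cast hj.le
  obtain ⟨x, hx⟩ := hball _ hcorner
  refine ⟨_, _, (hp (H x)).toTrivialization, ?_⟩
  intro t ht s hs
  apply hx
  rw [Metric.mem_ball, Prod.dist_eq]
  have hstep : ((i:ℝ)+1)/(m+1:ℕ) - (i:ℝ)/(m+1:ℕ) = 1/(m+1:ℕ) := by ring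
  have h1 : dist t ((i:ℝ)/(m+1:ℕ)) < δ := by
    rw [Real.dist_eq, abs_lt]
    constructor
    · have := ht.1; linarith
    · have h2 := ht.2
      have : (1:ℝ)/(m+1:ℕ) < δ := by exact_mod_cast hm
      linarith
  have h2 : dist s ((j:ℝ)/(m+1:ℕ)) < δ := by
    rw [Real.dist_eq, abs_lt]
    have hstep' : ((j:ℝ)+1)/(m+1:ℕ) - (j:ℝ)/(m+1:ℕ) = 1/(m+1:ℕ) := by ring
    constructor
    · have := hs.1; linarith
    · have h2 := hs.2
      have : (1:ℝ)/(m+1:ℕ) < δ := by exact_mod_cast hm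
      linarith
  exact max_lt h1 h2

/-- The clamped version of a path, as a map `ℝ → X`. -/
noncomputable def pext {c₀ c₁ : X} (γ : Path c₀ c₁) : ℝ → X :=
  fun t => γ (projIcc 0 1 zero_le_one t)

theorem pext_continuous {c₀ c₁ : X} (γ : Path c₀ c₁) : Continuous (pext γ) :=
  γ.continuous.comp continuous_projIcc

theorem projIcc_clamp (t : ℝ) :
    projIcc (0:ℝ) 1 zero_le_one (max 0 (min 1 t)) = projIcc 0 1 zero_le_one t := by
  apply Subtype.ext
  show max 0 (min 1 (max 0 (min 1 t))) = max 0 (min 1 t)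
  simp only [min_def, max_def]
  split_ifs <;> linarith

theorem pext_zero {c₀ c₁ : X} (γ : Path c₀ c₁) : pext γ 0 = c₀ := by
  simp [pext, projIcc_left]

theorem pext_one {c₀ c₁ : X} (γ : Path c₀ c₁) : pext γ 1 = c₁ := by
  simp [pext, projIcc_right]

theorem exists_liftOf (hp : IsCoveringMap p) {c₀ c₁ : X} (γ : Path c₀ c₁) (e : E)
    (he : p e = c₀) : ∃ g, IsLiftOf p (pext γ) e g := by
  obtain ⟨n, hn, hsub⟩ := exists_subdiv hp
    (H := fun z => pext γ z.1) ((pext_continuous γ).comp continuous_fst)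
    (nonempty_fiber_of_connected hp ((pext_continuous γ).comp continuous_fst) (0, 0) e
      (he.trans (pext_zero γ).symm))
  have hn' : (0:ℝ) < n := by exact_mod_cast hn
  have hcharts : ∀ i : ℕ, i < n → ∃ (F : Type u) (_ : TopologicalSpace F)
      (T : Bundle.Trivialization F p),
      ∀ t ∈ Icc ((i:ℝ)/n) (((i:ℝ)+1)/n), ∀ s : ℝ, pext γ (t, s).1 ∈ T.baseSet := by
    intro i hi
    obtain ⟨F, _, T, hT⟩ := hsub i 0 hi hn
    refine ⟨F, ‹_›, T, fun t ht s => hT t ht 0 ⟨?_, ?_⟩⟩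
    · simp
    · positivity
  obtain ⟨g, hg, hg0, hgl⟩ := strip_lift (p := p) ((pext_continuous γ).comp continuous_fst)
    hn hcharts (e₀ := fun _ => e) continuous_const
    (fun s => by rw [he]; exact (pext_zero γ).symm)
  exact ⟨fun t => g (t, 0), hg.comp (continuous_id.prodMk continuous_const),
    hg0 0, fun t ht => hgl t ht 0⟩

/-- The endpoint of the lift of `γ` starting at `e`. -/
noncomputable def liftEnd (hp : IsCoveringMap p) {c₀ c₁ : X} (γ : Path c₀ c₁) (e : E) : E :=
  if he : p e = c₀ then (exists_liftOf hp γ e he).choose 1 else e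

theorem liftEnd_eq (hp : IsCoveringMap p) {c₀ c₁ : X} {γ : Path c₀ c₁} {e : E}
    (he : p e = c₀) {g : ℝ → E} (hg : IsLiftOf p (pext γ) e g) :
    liftEnd hp γ e = g 1 := by
  rw [liftEnd, dif_pos he]
  exact IsLiftOf.eq_at_one hp (exists_liftOf hp γ e he).choose_spec hg

theorem p_liftEnd (hp : IsCoveringMap p) {c₀ c₁ : X} (γ : Path c₀ c₁) (e : E)
    (he : p e = c₀) : p (liftEnd hp γ e) = c₁ := by
  rw [liftEnd, dif_pos he]
  have := (exists_liftOf hp γ e he).choose_spec.2.2 1 ⟨zero_le_one, le_refl 1⟩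
  rw [this, pext_one]

theorem liftEnd_comm (hp : IsCoveringMap p) {c₀ c₁ : X} (γ : Path c₀ c₁) (e : E)
    (he : p e = c₀) {φ : E → E} (hφ : Continuous φ) (hpφ : ∀ y, p (φ y) = p y) :
    liftEnd hp γ (φ e) = φ (liftEnd hp γ e) := by
  obtain ⟨g, hg⟩ := exists_liftOf hp γ e he
  have h1 : liftEnd hp γ e = g 1 := liftEnd_eq hp he hg
  have h2 : IsLiftOf p (pext γ) (φ e) (φ ∘ g) :=
    ⟨hφ.comp hg.1, by simp [Function.comp, hg.2.1], fun t ht => by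
      simp only [Function.comp_apply, hpφ]; exact hg.2.2 t ht⟩
  rw [liftEnd_eq hp (by rw [hpφ, he]) h2, h1, Function.comp_apply]

theorem liftEnd_trans (hp : IsCoveringMap p) {c₀ c₁ c₂ : X} (γ : Path c₀ c₁)
    (δ : Path c₁ c₂) (e : E) (he : p e = c₀) :
    liftEnd hp (γ.trans δ) e = liftEnd hp δ (liftEnd hp γ e) := by
  obtain ⟨g, hg⟩ := exists_liftOf hp γ e he
  obtain ⟨f, hf⟩ := exists_liftOf hp δ (g 1)
    (by rw [hg.2.2 1 ⟨zero_le_one, le_refl 1⟩, pext_one])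
  have hg1 : liftEnd hp γ e = g 1 := liftEnd_eq hp he hg
  have hfront : ∀ t : ℝ, t = (1:ℝ)/2 → g (2*t) = f (2*t - 1) := by
    intro t ht
    rw [ht]
    norm_num [hf.2.1]
  have hG : IsLiftOf p (pext (γ.trans δ)) e fun t => if t ≤ 1/2 then g (2*t) else f (2*t-1) := by
    refine ⟨?_, ?_, ?_⟩
    · exact Continuous.if_le (hg.1.comp (continuous_const.mul continuous_id))
        (hf.1.comp ((continuous_const.mul continuous_id).sub continuous_const))
        continuous_id continuous_const hfront
    · norm_num [hg.2.1]
    · intro t ht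
      have hpt : projIcc (0:ℝ) 1 zero_le_one t = ⟨t, ht⟩ := projIcc_of_mem _ ht
      show p (if t ≤ 1/2 then g (2*t) else f (2*t-1)) = pext (γ.trans δ) t
      by_cases h2 : t ≤ 1/2
      · rw [if_pos h2]
        have h2t : (2*t : ℝ) ∈ Icc (0:ℝ) 1 := ⟨by linarith [ht.1], by linarith⟩
        rw [hg.2.2 _ h2t]
        show pext γ (2*t) = pext (γ.trans δ) t
        rw [pext, pext, hpt, projIcc_of_mem _ h2t, Path.trans_apply]
        simp only [h2, dif_pos]
      · rw [if_neg h2]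
        push_neg at h2
        have h2t : (2*t - 1 : ℝ) ∈ Icc (0:ℝ) 1 := ⟨by linarith, by linarith [ht.2]⟩
        rw [hf.2.2 _ h2t]
        show pext δ (2*t-1) = pext (γ.trans δ) t
        rw [pext, pext, hpt, projIcc_of_mem _ h2t, Path.trans_apply]
        simp only [not_le.2 h2, dif_neg]
        norm_num [h2.not_ge]
  rw [liftEnd_eq hp he hG, hg1, liftEnd_eq hp _ hf]
  · norm_num
  · rw [hg.2.2 1 ⟨zero_le_one, le_refl 1⟩, pext_one]

theorem liftEnd_homotopic (hp : IsCoveringMap p) {c₀ c₁ : X} {γ₀ γ₁ : Path c₀ c₁}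
    (h : γ₀.Homotopic γ₁) (e : E) (he : p e = c₀) :
    liftEnd hp γ₀ e = liftEnd hp γ₁ e := by
  obtain ⟨H⟩ := h
  set pI : ℝ → unitInterval := fun t => projIcc (0:ℝ) 1 zero_le_one t with hpI
  set Hh : ℝ × ℝ → X := fun z => H (pI z.2, pI z.1) with hHh
  have hHc : Continuous Hh := H.continuous.comp
    ((continuous_projIcc.comp continuous_snd).prodMk (continuous_projIcc.comp continuous_fst))
  have hps0 : ∀ s : ℝ, s ≤ 0 → pI s = 0 := by
    intro s hs
    apply Subtype.ext
    rw [hpI]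
    simp only [coe_projIcc, Icc.coe_zero]
    rw [min_eq_right (hs.trans zero_le_one), max_eq_left hs]
  have hps1 : ∀ s : ℝ, 1 ≤ s → pI s = 1 := by
    intro s hs
    apply Subtype.ext
    rw [hpI]
    simp only [coe_projIcc, Icc.coe_one]
    rw [min_eq_left hs, max_eq_right zero_le_one]
  have hedge0 : ∀ t s : ℝ, s ≤ 0 → Hh (t, s) = pext γ₀ t := by
    intro t s hs
    show H (pI s, pI t) = γ₀ (pI t)
    rw [hps0 s hs]
    exact H.apply_zero (pI t)
  have hedge1 : ∀ t s : ℝ, 1 ≤ s → Hh (t, s) = pext γ₁ t := by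
    intro t s hs
    show H (pI s, pI t) = γ₁ (pI t)
    rw [hps1 s hs]
    exact H.apply_one (pI t)
  have hleft : ∀ t s : ℝ, t ≤ 0 → Hh (t, s) = c₀ := by
    intro t s ht
    show H (pI s, pI t) = c₀
    rw [hps0 t ht, H.eq_fst (pI s) (by simp : (0:unitInterval) ∈ ({0,1} : Set unitInterval))]
    exact γ₀.source
  have hright : ∀ t s : ℝ, 1 ≤ t → Hh (t, s) = c₁ := by
    intro t s ht
    show H (pI s, pI t) = c₁
    rw [hps1 t ht, H.eq_fst (pI s) (by simp : (1:unitInterval) ∈ ({0,1} : Set unitInterval))]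
    exact γ₀.target
  obtain ⟨n, hn, hsub⟩ := exists_subdiv hp hHc
    (nonempty_fiber_of_connected hp hHc (0, 0) e (he.trans (hleft 0 0 le_rfl).symm))
  have hn' : (0:ℝ) < n := by exact_mod_cast hn
  have hdiv : ∀ x y : ℝ, x ≤ y → x/(n:ℝ) ≤ y/n := fun x y hxy => by gcongr
  have hstrip : ∀ j : ℕ, j < n → ∃ g : ℝ × ℝ → E, Continuous g ∧ (∀ s, g (0,s) = e) ∧
      ∀ t ∈ Icc (0:ℝ) 1, ∀ s, p (g (t,s)) =
        Hh (t, max ((j:ℝ)/n) (min (((j:ℝ)+1)/n) s)) := by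
    intro j hj
    have hjj : (j:ℝ)/n ≤ ((j:ℝ)+1)/n := hdiv _ _ (by linarith)
    apply strip_lift (p := p)
      (H := fun z => Hh (z.1, max ((j:ℝ)/n) (min (((j:ℝ)+1)/n) z.2)))
      (hH := hHc.comp (continuous_fst.prodMk
        (continuous_const.max (continuous_const.min continuous_snd)))) hn
    · intro i hi
      obtain ⟨F, _, T, hT⟩ := hsub i j hi hj
      refine ⟨F, ‹_›, T, fun t ht s => hT t ht _ ?_⟩
      exact ⟨le_max_left _ _, max_le hjj (min_le_left _ _)⟩
    · exact continuous_const
    · intro s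
      rw [he]
      exact (hleft 0 _ le_rfl).symm
  choose g hgc hg0 hgl using hstrip
  have hconst : ∀ j (hj : j < n), ∀ s s' : ℝ, g j hj (1, s) = g j hj (1, s') := by
    intro j hj s s'
    refine hp.const_of_comp ((hgc j hj).comp (continuous_const.prodMk continuous_id)) ?_ s s'
    intro u u'
    show p (g j hj (1, u)) = p (g j hj (1, u'))
    rw [hgl j hj 1 ⟨zero_le_one, le_refl 1⟩ u, hgl j hj 1 ⟨zero_le_one, le_refl 1⟩ u',
      hright 1 _ le_rfl, hright 1 _ le_rfl]
  have claim : ∀ j (hj : j < n), ∀ s : ℝ, g j hj (1, s) = liftEnd hp γ₀ e := by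
    intro j
    induction j with
    | zero =>
      intro hj s
      have hclamp : (max (((0:ℕ):ℝ)/n) (min ((((0:ℕ):ℝ)+1)/n) 0)) = 0 := by
        push_cast
        rw [zero_div, min_eq_right (by positivity), max_self]
      have hlift : IsLiftOf p (pext γ₀) e (fun t => g 0 hj (t, 0)) := by
        refine ⟨(hgc 0 hj).comp (continuous_id.prodMk continuous_const), hg0 0 hj 0, ?_⟩
        intro t ht
        rw [hgl 0 hj t ht 0, hclamp, hedge0 t 0 le_rfl]
      rw [hconst 0 hj s 0, liftEnd_eq hp he hlift]
    | succ k ih =>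
      intro hj s
      have hk : k < n := Nat.lt_of_succ_lt hj
      set sstar : ℝ := ((k:ℝ)+1)/n with hsstar
      have hcl1 : max ((k:ℝ)/n) (min (((k:ℝ)+1)/n) sstar) = sstar := by
        rw [hsstar, min_self, max_eq_right (hdiv _ _ (by linarith))]
      have hcl2 : max ((((k+1:ℕ)):ℝ)/n) (min (((((k+1:ℕ)):ℝ)+1)/n) sstar) = sstar := by
        push_cast
        have h1 : sstar ≤ ((k:ℝ)+1+1)/n := by
          rw [hsstar]; exact hdiv _ _ (by linarith)
        rw [min_eq_right h1, max_eq_right (le_of_eq hsstar.symm)]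
      have l1 : IsLiftOf p (fun t => Hh (t, sstar)) e (fun t => g k hk (t, sstar)) := by
        refine ⟨(hgc k hk).comp (continuous_id.prodMk continuous_const),
          hg0 k hk sstar, fun t ht => ?_⟩
        rw [hgl k hk t ht sstar, hcl1]
      have l2 : IsLiftOf p (fun t => Hh (t, sstar)) e (fun t => g (k+1) hj (t, sstar)) := by
        refine ⟨(hgc (k+1) hj).comp (continuous_id.prodMk continuous_const),
          hg0 (k+1) hj sstar, fun t ht => ?_⟩
        rw [hgl (k+1) hj t ht sstar]
        push_cast
        rw [show ((k:ℝ)+1)/(n:ℝ) ⊔ ((k:ℝ)+1+1)/(n:ℝ) ⊓ sstar = sstar by push_cast at hcl2; exact hcl2]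
      have heq := IsLiftOf.eq_at_one hp l1 l2
      rw [hconst (k+1) hj s sstar]
      show g (k+1) hj (1, sstar) = _
      rw [← heq, hconst k hk sstar 0, ih hk 0]
  -- conclude
  obtain ⟨j, hjn⟩ : ∃ j : ℕ, j + 1 = n := ⟨n - 1, Nat.succ_pred_eq_of_pos hn⟩
  have hjlt : j < n := by omega
  have hcl3 : max ((j:ℝ)/n) (min (((j:ℝ)+1)/n) 1) = 1 := by
    have h1 : ((j:ℝ)+1)/n = 1 := by
      rw [div_eq_one_iff_eq (ne_of_gt hn')]
      exact_mod_cast hjn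
    rw [h1, min_self, max_eq_right]
    rw [div_le_one hn']
    exact_mod_cast Nat.le_of_lt hjlt
  have hlift1 : IsLiftOf p (pext γ₁) e (fun t => g j hjlt (t, 1)) := by
    refine ⟨(hgc j hjlt).comp (continuous_id.prodMk continuous_const), hg0 j hjlt 1, ?_⟩
    intro t ht
    rw [hgl j hjlt t ht 1, hcl3, hedge1 t 1 le_rfl]
  rw [liftEnd_eq hp he hlift1, claim j hjlt 1]

/-! ### The glued `ℤ`-covering space -/

section CovSection

variable {X : Type v} [TopologicalSpace X]

/-- Points of the covering space glued from `ℤ` copies of `U` and `V`,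
shifted across the component `C` of `U ∩ V`. -/
structure Cov (U V C : Set X) : Type v where
  pt : X
  lvl : ℤ

variable {U V C : Set X}

/-- Basic open box over an open subset of `U`. -/
def uBox (O : Set X) (k : ℤ) : Set (Cov U V C) := {y | y.pt ∈ O ∧ y.lvl = k}

/-- Basic open box over an open subset of `V`. -/
def vBox (O : Set X) (k : ℤ) : Set (Cov U V C) :=
  {y | (y.pt ∈ O \ C ∧ y.lvl = k) ∨ (y.pt ∈ O ∩ C ∧ y.lvl = k - 1)}

/-- Generating sets for the topology of `Cov U V C`. -/
def covBasis (U V C : Set X) : Set (Set (Cov U V C)) :=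
  {B | ∃ O k, IsOpen O ∧ O ⊆ U ∧ B = uBox O k} ∪
  {B | ∃ O k, IsOpen O ∧ O ⊆ V ∧ B = vBox O k}

instance : TopologicalSpace (Cov U V C) := .generateFrom (covBasis U V C)

theorem isOpen_covBasis {B : Set (Cov U V C)} (hB : B ∈ covBasis U V C) : IsOpen B :=
  TopologicalSpace.isOpen_generateFrom_of_mem hB

theorem isOpen_uBox {O : Set X} (hO : IsOpen O) (hOU : O ⊆ U) (k : ℤ) :
    IsOpen (uBox O k : Set (Cov U V C)) :=
  isOpen_covBasis (Or.inl ⟨O, k, hO, hOU, rfl⟩)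

theorem isOpen_vBox {O : Set X} (hO : IsOpen O) (hOV : O ⊆ V) (k : ℤ) :
    IsOpen (vBox O k : Set (Cov U V C)) :=
  isOpen_covBasis (Or.inr ⟨O, k, hO, hOV, rfl⟩)

variable (hU : IsOpen U) (hV : IsOpen V) (hUV : U ∪ V = univ)
  (hC : IsOpen C) (hCW : C ⊆ U ∩ V) (hWC : IsOpen ((U ∩ V) \ C))

include hU hV hUV hCW in
theorem continuous_pt : Continuous (Cov.pt : Cov U V C → X) := by
  refine continuous_def.mpr fun O hO => ?_
  have : (Cov.pt : Cov U V C → X) ⁻¹' O =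
      (⋃ k : ℤ, uBox (O ∩ U) k) ∪ (⋃ k : ℤ, vBox (O ∩ V) k) := by
    ext y
    simp only [mem_preimage, mem_union, mem_iUnion, uBox, vBox, mem_setOf_eq,
      mem_inter_iff, mem_diff]
    constructor
    · intro hy
      by_cases hyU : y.pt ∈ U
      · exact Or.inl ⟨y.lvl, ⟨hy, hyU⟩, rfl⟩
      · have hyV : y.pt ∈ V := by
          have := hUV ▸ mem_univ y.pt
          rcases (mem_union _ _ _).mp (hUV ▸ mem_univ y.pt) with h | h
          · exact absurd h hyU
          · exact h
        have hyC : y.pt ∉ C := fun hc => hyU (hCW hc).1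
        exact Or.inr ⟨y.lvl, Or.inl ⟨⟨⟨hy, hyV⟩, hyC⟩, rfl⟩⟩
    · rintro (⟨k, ⟨h1, _⟩, _⟩ | ⟨k, ⟨⟨⟨h1, _⟩, _⟩, _⟩ | ⟨⟨⟨h1, _⟩, _⟩, _⟩⟩) <;> exact h1
  rw [this]
  exact ((isOpen_iUnion fun k => isOpen_uBox (hO.inter hU) inter_subset_right k).union
    (isOpen_iUnion fun k => isOpen_vBox (hO.inter hV) inter_subset_right k))

include hU hV hUV hCW hWC in
/-- Trivialization of the covering over `U`. -/
noncomputable def trivU : Bundle.Trivialization ℤ (Cov.pt : Cov U V C → X) where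
  toFun y := (y.pt, y.lvl)
  invFun z := ⟨z.1, z.2⟩
  source := {y | y.pt ∈ U}
  target := U ×ˢ univ
  map_source' y hy := ⟨hy, mem_univ _⟩
  map_target' z hz := hz.1
  left_inv' y _ := rfl
  right_inv' z _ := rfl
  open_source := by
    show IsOpen {y : Cov U V C | y.pt ∈ U}
    have : {y : Cov U V C | y.pt ∈ U} = ⋃ k : ℤ, uBox U k := by
      ext y
      simp only [mem_setOf_eq, mem_iUnion, uBox]
      exact ⟨fun hy => ⟨y.lvl, hy, rfl⟩, fun ⟨k, hk, _⟩ => hk⟩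
    rw [this]
    exact isOpen_iUnion fun k => isOpen_uBox hU (subset_refl U) k
  open_target := hU.prod isOpen_univ
  continuousOn_toFun := by
    rw [continuousOn_iff_continuous_restrict]
    refine Continuous.prodMk ((continuous_pt hU hV hUV hCW).comp continuous_subtype_val) ?_
    refine continuous_discrete_rng.mpr fun k => ?_
    convert (isOpen_uBox (U := U) (V := V) (C := C) hU (subset_refl U) k).preimage
      (continuous_subtype_val) using 1
    ext y
    exact ⟨fun h => ⟨y.2, h⟩, fun h => h.2⟩
  continuousOn_invFun := by
    rw [continuousOn_iff_continuous_restrict]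
    refine continuous_generateFrom_iff.mpr fun B hB => ?_
    rcases hB with ⟨O, k, hO, hOU, rfl⟩ | ⟨O, k, hO, hOV, rfl⟩
    · have : (fun z : {z : X × ℤ // z ∈ U ×ˢ univ} => (⟨z.val.1, z.val.2⟩ : Cov U V C)) ⁻¹'
          uBox O k = Subtype.val ⁻¹' (O ×ˢ {k}) := by
        ext z
        exact Iff.rfl
      rw [show ((U ×ˢ univ).domRestrict fun z : X × ℤ => (⟨z.1, z.2⟩ : Cov U V C)) =
        (fun z : {z : X × ℤ // z ∈ U ×ˢ univ} => (⟨z.val.1, z.val.2⟩ : Cov U V C)) from rfl, this]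
      exact (hO.prod (isOpen_discrete _)).preimage continuous_subtype_val
    · have : (fun z : {z : X × ℤ // z ∈ U ×ˢ univ} => (⟨z.val.1, z.val.2⟩ : Cov U V C)) ⁻¹'
          vBox O k = Subtype.val ⁻¹' (((O ∩ ((U ∩ V) \ C)) ×ˢ {k}) ∪ ((O ∩ C) ×ˢ {k-1})) := by
        ext z
        have hzU : z.val.1 ∈ U := z.2.1
        simp only [mem_preimage, vBox, mem_setOf_eq, mem_union, Set.mem_prod,
          mem_singleton_iff, mem_inter_iff, mem_diff]
        constructor
        · rintro (⟨⟨h1, h2⟩, h3⟩ | ⟨⟨h1, h2⟩, h3⟩)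
          · exact Or.inl ⟨⟨h1, ⟨hzU, hOV h1⟩, h2⟩, h3⟩
          · exact Or.inr ⟨⟨h1, h2⟩, h3⟩
        · rintro (⟨⟨h1, _, h2⟩, h3⟩ | ⟨⟨h1, h2⟩, h3⟩)
          · exact Or.inl ⟨⟨h1, h2⟩, h3⟩
          · exact Or.inr ⟨⟨h1, h2⟩, h3⟩
      rw [show ((U ×ˢ univ).domRestrict fun z : X × ℤ => (⟨z.1, z.2⟩ : Cov U V C)) =
        (fun z : {z : X × ℤ // z ∈ U ×ˢ univ} => (⟨z.val.1, z.val.2⟩ : Cov U V C)) from rfl, this]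
      exact (((hO.inter hWC).prod (isOpen_discrete _)).union
        ((hO.inter hC).prod (isOpen_discrete _))).preimage continuous_subtype_val
  baseSet := U
  open_baseSet := hU
  source_eq := rfl
  target_eq := rfl
  proj_toFun y _ := rfl

/-- The level shift `ε`: `1` on `C`, `0` elsewhere. -/
noncomputable def eps (C : Set X) (z : X) : ℤ := if z ∈ C then 1 else 0

include hU hV hUV hC hCW hWC in
/-- Trivialization of the covering over `V`. -/
noncomputable def trivV : Bundle.Trivialization ℤ (Cov.pt : Cov U V C → X) where
  toFun y := (y.pt, y.lvl + eps C y.pt)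
  invFun z := ⟨z.1, z.2 - eps C z.1⟩
  source := {y | y.pt ∈ V}
  target := V ×ˢ univ
  map_source' y hy := ⟨hy, mem_univ _⟩
  map_target' z hz := hz.1
  left_inv' y _ := by simp
  right_inv' z _ := by simp
  open_source := by
    show IsOpen {y : Cov U V C | y.pt ∈ V}
    have : {y : Cov U V C | y.pt ∈ V} = ⋃ k : ℤ, vBox V k := by
      ext y
      simp only [mem_setOf_eq, mem_iUnion, vBox, mem_diff, mem_inter_iff]
      constructor
      · intro hy
        by_cases hyC : y.pt ∈ C
        · exact ⟨y.lvl + 1, Or.inr ⟨⟨hy, hyC⟩, by ring⟩⟩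
        · exact ⟨y.lvl, Or.inl ⟨⟨hy, hyC⟩, rfl⟩⟩
      · rintro ⟨k, ⟨⟨h1, _⟩, _⟩ | ⟨⟨h1, _⟩, _⟩⟩ <;> exact h1
    rw [this]
    exact isOpen_iUnion fun k => isOpen_vBox hV (subset_refl V) k
  open_target := hV.prod isOpen_univ
  continuousOn_toFun := by
    rw [continuousOn_iff_continuous_restrict]
    refine Continuous.prodMk ((continuous_pt hU hV hUV hCW).comp continuous_subtype_val) ?_
    refine continuous_discrete_rng.mpr fun k => ?_
    convert (isOpen_vBox (U := U) (V := V) (C := C) hV (subset_refl V) k).preimage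
      (continuous_subtype_val) using 1
    ext y
    simp only [mem_preimage, mem_singleton_iff, vBox, mem_setOf_eq, mem_diff, mem_inter_iff]
    have hyV : y.val.pt ∈ V := y.2
    by_cases hyC : y.val.pt ∈ C
    · simp only [eps, if_pos hyC]
      constructor
      · intro h; exact Or.inr ⟨⟨hyV, hyC⟩, by omega⟩
      · rintro (⟨⟨_, hc⟩, _⟩ | ⟨⟨_, _⟩, hk⟩)
        · exact absurd hyC hc
        · omega
    · simp only [eps, if_neg hyC]
      constructor
      · intro h; exact Or.inl ⟨⟨hyV, hyC⟩, by omega⟩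
      · rintro (⟨⟨_, _⟩, hk⟩ | ⟨⟨_, hc⟩, _⟩)
        · omega
        · exact absurd hc hyC
  continuousOn_invFun := by
    rw [continuousOn_iff_continuous_restrict]
    refine continuous_generateFrom_iff.mpr fun B hB => ?_
    rcases hB with ⟨O, k, hO, hOU, rfl⟩ | ⟨O, k, hO, hOV, rfl⟩
    · have : (fun z : {z : X × ℤ // z ∈ V ×ˢ univ} =>
          (⟨z.val.1, z.val.2 - eps C z.val.1⟩ : Cov U V C)) ⁻¹' uBox O k =
          Subtype.val ⁻¹' (((O ∩ C) ×ˢ {k+1}) ∪ ((O ∩ ((U ∩ V) \ C)) ×ˢ {k})) := by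
        ext z
        have hzV : z.val.1 ∈ V := z.2.1
        simp only [mem_preimage, uBox, mem_setOf_eq, mem_union, Set.mem_prod,
          mem_singleton_iff, mem_inter_iff, mem_diff]
        by_cases hzC : z.val.1 ∈ C
        · simp only [eps, if_pos hzC]
          constructor
          · rintro ⟨h1, h2⟩; exact Or.inl ⟨⟨h1, hzC⟩, by omega⟩
          · rintro (⟨⟨h1, _⟩, h2⟩ | ⟨⟨h1, ⟨_, _⟩, hc⟩, _⟩)
            · exact ⟨h1, by omega⟩
            · exact absurd hzC hc
        · simp only [eps, if_neg hzC]
          constructor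
          · rintro ⟨h1, h2⟩; exact Or.inr ⟨⟨h1, ⟨hOU h1, hzV⟩, hzC⟩, by omega⟩
          · rintro (⟨⟨_, hc⟩, _⟩ | ⟨⟨h1, _, _⟩, h2⟩)
            · exact absurd hc hzC
            · exact ⟨h1, by omega⟩
      rw [show ((V ×ˢ univ).domRestrict fun z : X × ℤ => (⟨z.1, z.2 - eps C z.1⟩ : Cov U V C)) =
        (fun z : {z : X × ℤ // z ∈ V ×ˢ univ} =>
          (⟨z.val.1, z.val.2 - eps C z.val.1⟩ : Cov U V C)) from rfl, this]
      exact (((hO.inter hC).prod (isOpen_discrete _)).union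
        ((hO.inter hWC).prod (isOpen_discrete _))).preimage continuous_subtype_val
    · have : (fun z : {z : X × ℤ // z ∈ V ×ˢ univ} =>
          (⟨z.val.1, z.val.2 - eps C z.val.1⟩ : Cov U V C)) ⁻¹' vBox O k =
          Subtype.val ⁻¹' (O ×ˢ {k}) := by
        ext z
        simp only [mem_preimage, vBox, mem_setOf_eq, mem_union, Set.mem_prod,
          mem_singleton_iff, mem_inter_iff, mem_diff]
        by_cases hzC : z.val.1 ∈ C
        · simp only [eps, if_pos hzC]
          constructor
          · rintro (⟨⟨_, hc⟩, _⟩ | ⟨⟨h1, _⟩, h2⟩)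
            · exact absurd hzC hc
            · exact ⟨h1, by omega⟩
          · rintro ⟨h1, h2⟩; exact Or.inr ⟨⟨h1, hzC⟩, by omega⟩
        · simp only [eps, if_neg hzC]
          constructor
          · rintro (⟨⟨h1, _⟩, h2⟩ | ⟨⟨_, hc⟩, _⟩)
            · exact ⟨h1, by omega⟩
            · exact absurd hc hzC
          · rintro ⟨h1, h2⟩; exact Or.inl ⟨⟨h1, hzC⟩, by omega⟩
      rw [show ((V ×ˢ univ).domRestrict fun z : X × ℤ => (⟨z.1, z.2 - eps C z.1⟩ : Cov U V C)) =
        (fun z : {z : X × ℤ // z ∈ V ×ˢ univ} =>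
          (⟨z.val.1, z.val.2 - eps C z.val.1⟩ : Cov U V C)) from rfl, this]
      exact (hO.prod (isOpen_discrete _)).preimage continuous_subtype_val
  baseSet := V
  open_baseSet := hV
  source_eq := rfl
  target_eq := rfl
  proj_toFun y _ := rfl

include hU hV hUV hC hCW hWC in
theorem isCoveringMap_pt : IsCoveringMap (Cov.pt : Cov U V C → X) := by
  apply IsCoveringMap.mk _ (fun _ => ℤ)
    (fun x => if x ∈ U then trivU hU hV hUV hC hCW hWC else trivV hU hV hUV hC hCW hWC)
  intro x
  by_cases hx : x ∈ U
  · rw [if_pos hx]; exact hx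
  · rw [if_neg hx]
    show x ∈ V
    rcases (mem_union _ _ _).mp (hUV ▸ mem_univ x) with h | h
    · exact absurd h hx
    · exact h

/-- The deck transformation shifting levels by `m`. -/
def covShift (m : ℤ) : Cov U V C → Cov U V C := fun y => ⟨y.pt, y.lvl + m⟩

theorem continuous_covShift (m : ℤ) : Continuous (covShift m : Cov U V C → Cov U V C) := by
  refine continuous_generateFrom_iff.mpr fun B hB => ?_
  rcases hB with ⟨O, k, hO, hOU, rfl⟩ | ⟨O, k, hO, hOV, rfl⟩
  · have : (covShift m : Cov U V C → Cov U V C) ⁻¹' uBox O k = uBox O (k - m) := by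
      ext y
      simp only [mem_preimage, uBox, covShift, mem_setOf_eq]
      constructor
      · rintro ⟨h1, h2⟩; exact ⟨h1, by omega⟩
      · rintro ⟨h1, h2⟩; exact ⟨h1, by omega⟩
    rw [this]
    exact isOpen_uBox hO hOU _
  · have : (covShift m : Cov U V C → Cov U V C) ⁻¹' vBox O k = vBox O (k - m) := by
      ext y
      simp only [mem_preimage, vBox, covShift, mem_setOf_eq]
      constructor
      · rintro (⟨h1, h2⟩ | ⟨h1, h2⟩)
        · exact Or.inl ⟨h1, by omega⟩
        · exact Or.inr ⟨h1, by omega⟩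
      · rintro (⟨h1, h2⟩ | ⟨h1, h2⟩)
        · exact Or.inl ⟨h1, by omega⟩
        · exact Or.inr ⟨h1, by omega⟩
    rw [this]
    exact isOpen_vBox hO hOV _

include hU hV hUV hC hCW hWC in
/-- The `U`-side section at level `k` is continuous. -/
theorem continuousOn_secU (k : ℤ) :
    ContinuousOn (fun z => (⟨z, k⟩ : Cov U V C)) U := by
  have h := (trivU (C := C) hU hV hUV hC hCW hWC).toOpenPartialHomeomorph.continuousOn_symm
  have h3 := h.comp ((continuous_id.prodMk continuous_const).continuousOn :
      ContinuousOn (fun z : X => (z, k)) U) (fun z hz => ⟨hz, mem_univ _⟩)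
  exact h3

include hU hV hUV hC hCW hWC in
/-- The `V`-side section at level `k` is continuous. -/
theorem continuousOn_secV (k : ℤ) :
    ContinuousOn (fun z => (⟨z, k - eps C z⟩ : Cov U V C)) V := by
  have h := (trivV (C := C) hU hV hUV hC hCW hWC).toOpenPartialHomeomorph.continuousOn_symm
  have h3 := h.comp ((continuous_id.prodMk continuous_const).continuousOn :
      ContinuousOn (fun z : X => (z, k)) V) (fun z hz => ⟨hz, mem_univ _⟩)
  exact h3

end CovSection

section Monodromy

open CategoryTheory

attribute [local instance] Path.Homotopic.setoid

variable {X : Type v} [TopologicalSpace X]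

theorem exists_retract {U V C : Set X} (hU : IsOpen U) (hV : IsOpen V) (hUV : U ∪ V = univ)
    (hC : IsOpen C) (hCW : C ⊆ U ∩ V) (hWC : IsOpen ((U ∩ V) \ C))
    {a b : X} (haC : a ∉ C) (hbC : b ∈ C)
    (α : Path a b) (hα : ∀ t, α t ∈ U) (β : Path b a) (hβ : ∀ t, β t ∈ V) :
    ∃ (ι : Multiplicative ℤ →* FundamentalGroup X a)
      (ρ : FundamentalGroup X a →* Multiplicative ℤ),
        ρ.comp ι = MonoidHom.id (Multiplicative ℤ) := by
  have hp := isCoveringMap_pt hU hV hUV hC hCW hWC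
  set e0 : Cov U V C := ⟨a, 0⟩ with he0def
  set ρfun : Path a a → ℤ := fun γ => (liftEnd hp γ e0).lvl with hρfun
  have hfib : ∀ γ : Path a a, liftEnd hp γ e0 = ⟨a, ρfun γ⟩ := by
    intro γ
    have h1 : (liftEnd hp γ e0).pt = a := p_liftEnd hp γ e0 rfl
    rcases hγ : liftEnd hp γ e0 with ⟨z, m⟩
    rw [hγ] at h1
    have h2 : z = a := h1
    rw [hρfun]
    simp only [hγ, h2]
  have hadd : ∀ γ δ : Path a a, ρfun (γ.trans δ) = ρfun γ + ρfun δ := by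
    intro γ δ
    have h1 := liftEnd_trans hp γ δ e0 rfl
    rw [hfib γ] at h1
    have h2 : (⟨a, ρfun γ⟩ : Cov U V C) = covShift (ρfun γ) e0 := by
      simp [covShift, he0def]
    rw [h2, liftEnd_comm hp δ e0 rfl (continuous_covShift (ρfun γ)) (fun y => rfl),
      hfib δ] at h1
    show (liftEnd hp (γ.trans δ) e0).lvl = _
    rw [h1]
    show ρfun δ + ρfun γ = ρfun γ + ρfun δ
    omega
  set ρQ : Path.Homotopic.Quotient a a → ℤ :=
    Quotient.lift ρfun (fun γ δ h => congrArg Cov.lvl (liftEnd_homotopic hp h e0 rfl))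
    with hρQ
  have hρQcomp : ∀ f g : Path.Homotopic.Quotient a a, ρQ (f.trans g) = ρQ f + ρQ g := by
    intro f g
    induction f using Quotient.inductionOn with
    | h γ =>
    induction g using Quotient.inductionOn with
    | h δ =>
    show ρQ ⟦γ.trans δ⟧ = ρQ ⟦γ⟧ + ρQ ⟦δ⟧
    exact hadd γ δ
  set ρ : FundamentalGroup X a →* Multiplicative ℤ :=
    MonoidHom.mk' (fun g => Multiplicative.ofAdd (ρQ g)) (by
      intro g1 g2
      show Multiplicative.ofAdd (ρQ (Path.Homotopic.Quotient.trans g2 g1)) = _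
      rw [hρQcomp, add_comm, ofAdd_add]) with hρ
  -- the basic loop
  set γ₀ : Path a a := α.trans β with hγ₀
  have hliftα : liftEnd hp α e0 = ⟨b, 0⟩ := by
    have hgα : IsLiftOf (Cov.pt : Cov U V C → X) (pext α) e0
        (fun t => ⟨pext α t, 0⟩) := by
      refine ⟨(continuousOn_secU hU hV hUV hC hCW hWC 0).comp_continuous
        (pext_continuous α) (fun t => hα _), ?_, fun t ht => rfl⟩
      show (⟨pext α 0, 0⟩ : Cov U V C) = e0
      rw [pext_zero]
    rw [liftEnd_eq hp rfl hgα]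
    show (⟨pext α 1, 0⟩ : Cov U V C) = ⟨b, 0⟩
    rw [pext_one]
  have hliftβ : liftEnd hp β (⟨b, 0⟩ : Cov U V C) = ⟨a, 1⟩ := by
    have hgβ : IsLiftOf (Cov.pt : Cov U V C → X) (pext β) (⟨b, 0⟩ : Cov U V C)
        (fun t => ⟨pext β t, 1 - eps C (pext β t)⟩) := by
      refine ⟨(continuousOn_secV hU hV hUV hC hCW hWC 1).comp_continuous
        (pext_continuous β) (fun t => hβ _), ?_, fun t ht => rfl⟩
      show (⟨pext β 0, 1 - eps C (pext β 0)⟩ : Cov U V C) = ⟨b, 0⟩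
      rw [pext_zero]
      simp [eps, if_pos hbC]
    rw [liftEnd_eq hp rfl hgβ]
    show (⟨pext β 1, 1 - eps C (pext β 1)⟩ : Cov U V C) = ⟨a, 1⟩
    rw [pext_one]
    simp [eps, if_neg haC]
  have hρ₀ : ρfun γ₀ = 1 := by
    show (liftEnd hp (α.trans β) e0).lvl = 1
    rw [liftEnd_trans hp α β e0 rfl, hliftα, hliftβ]
  set elt : FundamentalGroup X a :=
    (⟦γ₀⟧ : Path.Homotopic.Quotient a a) with helt
  have heltρ : ρ elt = Multiplicative.ofAdd 1 := by
    show Multiplicative.ofAdd (ρQ elt) = Multiplicative.ofAdd 1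
    have : elt = (⟦γ₀⟧ : Path.Homotopic.Quotient a a) := rfl
    rw [this]
    show Multiplicative.ofAdd (ρfun γ₀) = _
    rw [hρ₀]
  refine ⟨zpowersHom _ elt, ρ, MonoidHom.ext_mint ?_⟩
  show ρ ((zpowersHom _ elt) (Multiplicative.ofAdd 1)) = Multiplicative.ofAdd 1
  rw [zpowersHom_apply]
  show ρ (elt ^ (1:ℤ)) = _
  rw [zpow_one, heltρ]

end Monodromy

end PBP

/-- A topological space `X` has the Phragmen–Brouwer Property if it is connected and
whenever `D`, `E` are disjoint closed subsets and `a, b ∉ D ∪ E` lie in the same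
component of `X \ D` and in the same component of `X \ E`, then they lie in the same
component of `X \ (D ∪ E)`. -/
def PhragmenBrouwer (X : Type*) [TopologicalSpace X] : Prop :=
  ConnectedSpace X ∧
    ∀ D E : Set X, IsClosed D → IsClosed E → Disjoint D E →
      ∀ a b : X, a ∉ D ∪ E → b ∉ D ∪ E →
        b ∈ connectedComponentIn Dᶜ a → b ∈ connectedComponentIn Eᶜ a →
          b ∈ connectedComponentIn (D ∪ E)ᶜ a

theorem pbp_of_not_int_retract {X : Type*} [TopologicalSpace X]
    [PathConnectedSpace X] [LocallyPathConnectedSpace X] (x : X)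
    (h : ¬ ∃ (ι : Multiplicative ℤ →* FundamentalGroup X x)
          (ρ : FundamentalGroup X x →* Multiplicative ℤ),
            ρ.comp ι = MonoidHom.id (Multiplicative ℤ)) :
    PhragmenBrouwer X := by
  constructor
  · exact pathConnectedSpace_iff_connectedSpace.mp inferInstance
  intro D E hD hE hDE a b haDE hbDE haD haE
  by_contra hW
  apply h
  clear h
  set U : Set X := Dᶜ with hUdef
  set V : Set X := Eᶜ with hVdef
  have hU : IsOpen U := hD.isOpen_compl
  have hV : IsOpen V := hE.isOpen_compl
  have hUV : U ∪ V = Set.univ := by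
    rw [hUdef, hVdef, ← Set.compl_inter, Set.disjoint_iff_inter_eq_empty.mp hDE,
      Set.compl_empty]
  have hWeq : (D ∪ E)ᶜ = U ∩ V := Set.compl_union D E
  set W : Set X := U ∩ V with hWdef
  have ha : a ∈ W := hWeq ▸ haDE
  have hb : b ∈ W := hWeq ▸ hbDE
  have hJU : JoinedIn U a b := by
    have haU : a ∈ U := ha.1
    have hKopen : IsOpen (connectedComponentIn U a) := hU.connectedComponentIn
    have hKconn : IsConnected (connectedComponentIn U a) :=
      isConnected_connectedComponentIn_iff.mpr haU
    have hKpath := hKopen.isConnected_iff_isPathConnected.mp hKconn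
    exact (hKpath.joinedIn a (mem_connectedComponentIn haU) b haD).mono
      (connectedComponentIn_subset _ _)
  have hJV : JoinedIn V a b := by
    have haV : a ∈ V := ha.2
    have hKopen : IsOpen (connectedComponentIn V a) := hV.connectedComponentIn
    have hKconn : IsConnected (connectedComponentIn V a) :=
      isConnected_connectedComponentIn_iff.mpr haV
    have hKpath := hKopen.isConnected_iff_isPathConnected.mp hKconn
    exact (hKpath.joinedIn a (mem_connectedComponentIn haV) b haE).mono
      (connectedComponentIn_subset _ _)
  have hnJW : ¬ JoinedIn W a b := by
    intro hJ
    apply hW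
    rw [hWeq]
    obtain ⟨γ, hγ⟩ := hJ
    have hpre : IsPreconnected (Set.range γ) := isPreconnected_range γ.continuous_toFun
    have hsub : Set.range γ ⊆ W := Set.range_subset_iff.mpr hγ
    exact hpre.subset_connectedComponentIn ⟨0, γ.source⟩ hsub ⟨1, γ.target⟩
  set C : Set X := pathComponentIn W b with hCdef
  have hCopen : IsOpen C := (hU.inter hV).pathComponentIn b
  have hCW : C ⊆ W := pathComponentIn_subset
  have hbC : b ∈ C := mem_pathComponentIn_self hb
  have haC : a ∉ C := fun hx => hnJW (JoinedIn.symm hx)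
  have hWC : IsOpen (W \ C) := by
    rw [isOpen_iff_mem_nhds]
    intro z hz
    have hzW : z ∈ W := hz.1
    have hopen : IsOpen (pathComponentIn W z) := (hU.inter hV).pathComponentIn z
    refine Filter.mem_of_superset (hopen.mem_nhds (mem_pathComponentIn_self hzW)) ?_
    intro w hw
    refine ⟨pathComponentIn_subset hw, fun hwC => hz.2 ?_⟩
    have h1 := pathComponentIn_congr hw
    have h2 := pathComponentIn_congr hwC
    have h3 : pathComponentIn W z = pathComponentIn W b := h1.symm.trans h2
    exact hCdef ▸ (h3 ▸ mem_pathComponentIn_self hzW)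
  obtain ⟨α, hα⟩ := hJU
  obtain ⟨β, hβ⟩ := hJV.symm
  obtain ⟨ι, ρ, hretract⟩ :=
    PBP.exists_retract hU hV hUV hCopen hCW hWC haC hbC α hα β hβ
  let e := FundamentalGroup.fundamentalGroupMulEquivOfPathConnected x a
  refine ⟨e.symm.toMonoidHom.comp ι, ρ.comp e.toMonoidHom, ?_⟩
  refine MonoidHom.ext fun n => ?_
  show ρ (e (e.symm (ι n))) = MonoidHom.id _ n
  rw [MulEquiv.apply_symm_apply]
  exact DFunLike.congr_fun hretract n
end

section
/- For n > 1, the sphere Sⁿ has the Phragmen–Brouwer Property. -/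
open Set Real

def CircleMapsLift (X : Type*) [TopologicalSpace X] : Prop :=
  ∀ f : C(X, Circle), ∃ g : C(X, ℝ), ∀ x, Circle.exp (g x) = f x

theorem circleMapsLift_of_simplyConnectedSpace (X : Type*) [TopologicalSpace X]
    [SimplyConnectedSpace X] [LocallyPathConnectedSpace X] : CircleMapsLift X := by
  intro f
  obtain ⟨x₀⟩ : Nonempty X := inferInstance
  obtain ⟨t₀, ht₀⟩ := Circle.exp_surjective (f x₀)
  obtain ⟨g, -, hg⟩ :=
    (Circle.isCoveringMap_exp.existsUnique_continuousMap_lifts f x₀ t₀ ht₀).exists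
  exact ⟨g, congrFun hg⟩

section LocalLifts

variable {X : Type*} [TopologicalSpace X]

theorem IsPreconnected.exists_eq_add_int_mul_two_pi {s : Set X} (hs : IsPreconnected s)
    {g₁ g₂ : X → ℝ} (h₁ : ContinuousOn g₁ s) (h₂ : ContinuousOn g₂ s)
    (h : ∀ x ∈ s, Circle.exp (g₁ x) = Circle.exp (g₂ x)) :
    ∃ k : ℤ, ∀ x ∈ s, g₁ x = g₂ x + k * (2 * π) := by
  rcases s.eq_empty_or_nonempty with rfl | ⟨x₀, hx₀⟩
  · exact ⟨0, by simp⟩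
  obtain ⟨k, hk⟩ := Circle.exp_eq_exp.mp (h x₀ hx₀)
  have hmaps : MapsTo (g₁ - g₂) s (AddSubgroup.zmultiples (2 * π)) := fun y hy => by
    obtain ⟨m, hm⟩ := Circle.exp_eq_exp.mp (h y hy)
    exact AddSubgroup.mem_zmultiples_iff.mpr ⟨m, by simp [hm]⟩
  refine ⟨k, fun x hx => ?_⟩
  have := hs.constant_of_mapsTo (SetLike.isDiscrete_iff_discreteTopology.mpr inferInstance)
    (h₁.sub h₂) hmaps hx hx₀
  simp only [Pi.sub_apply] at this
  linarith

theorem exists_circleExp_lift_of_isOpen_cover {U V : Set X} (hU : IsOpen U) (hV : IsOpen V)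
    (hcover : U ∪ V = univ) (hUV : IsPreconnected (U ∩ V)) {f : X → Circle} {gU gV : X → ℝ}
    (hgU : ContinuousOn gU U) (hgV : ContinuousOn gV V)
    (hfU : ∀ x ∈ U, Circle.exp (gU x) = f x) (hfV : ∀ x ∈ V, Circle.exp (gV x) = f x) :
    ∃ g : C(X, ℝ), ∀ x, Circle.exp (g x) = f x := by
  classical
  obtain ⟨k, hk⟩ := hUV.exists_eq_add_int_mul_two_pi (hgU.mono inter_subset_left)
    (hgV.mono inter_subset_right) fun x hx => (hfU x hx.1).trans (hfV x hx.2).symm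
  set g := U.piecewise gU (fun x => gV x + k * (2 * π))
  have hgV' : EqOn g (fun x => gV x + k * (2 * π)) V := fun x hx => by
    by_cases hxU : x ∈ U
    · simp [g, hxU, hk x ⟨hxU, hx⟩]
    · simp [g, hxU]
  have mem_V_of_notMem_U {x : X} (hxU : x ∉ U) : x ∈ V :=
    (hcover.symm ▸ mem_univ x : x ∈ U ∪ V).resolve_left hxU
  refine ⟨⟨g, continuous_iff_continuousAt.mpr fun x => ?_⟩, fun x => ?_⟩
  · by_cases hxU : x ∈ U
    · exact (hgU.congr (U.piecewise_eqOn _ _)).continuousAt (hU.mem_nhds hxU)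
    · exact ((hgV.add continuousOn_const).congr hgV').continuousAt
        (hV.mem_nhds (mem_V_of_notMem_U hxU))
  · by_cases hxU : x ∈ U
    · simp [g, hxU, hfU x hxU]
    · simp [g, hxU, Circle.exp_add, hfV x (mem_V_of_notMem_U hxU)]

theorem OpenPartialHomeomorph.exists_circleExp_lift_on_source {Y : Type*} [TopologicalSpace Y]
    (hY : CircleMapsLift Y) (φ : OpenPartialHomeomorph X Y) (hφ : φ.target = univ)
    (f : C(X, Circle)) :
    ∃ g : X → ℝ, ContinuousOn g φ.source ∧ ∀ x ∈ φ.source, Circle.exp (g x) = f x := by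
  obtain ⟨g, hg⟩ :=
    hY ⟨f ∘ φ.symm, f.continuous.comp (continuousOn_univ.mp (hφ ▸ φ.continuousOn_symm))⟩
  refine ⟨g ∘ φ, g.continuous.comp_continuousOn φ.continuousOn, fun x hx => ?_⟩
  simp [hg, φ.left_inv hx]

end LocalLifts

section Sphere

variable {E : Type*} [NormedAddCommGroup E] [InnerProductSpace ℝ E] {n : ℕ}
  [Fact (Module.finrank ℝ E = n + 1)]

theorem stereographic'_neg_apply (v : Metric.sphere (0 : E) 1) :
    stereographic' n (-v) v = 0 := by
  simp only [stereographic', OpenPartialHomeomorph.coe_trans, Function.comp_apply]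
  rw [stereographic_neg_apply]
  exact (OrthonormalBasis.fromOrthogonalSpanSingleton n
    (ne_zero_of_mem_unit_sphere (-v))).repr.map_zero

theorem isPreconnected_sphere_compl_antipodes (hn : 1 < n) (v : Metric.sphere (0 : E) 1) :
    IsPreconnected ({-v}ᶜ ∩ {v}ᶜ : Set (Metric.sphere (0 : E) 1)) := by
  set φ := stereographic' n (-v)
  have hφv : φ v = 0 := stereographic'_neg_apply v
  have hv : v ∈ φ.source := by simp [φ, ne_neg_of_mem_unit_sphere ℝ v]
  have himage : φ.symm '' {0}ᶜ = {-v}ᶜ ∩ {v}ᶜ := by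
    rw [φ.symm_image_eq_source_inter_preimage (by simp [φ]), stereographic'_source]
    ext x
    simp only [mem_inter_iff, mem_compl_iff, mem_singleton_iff, mem_preimage,
      and_congr_right_iff]
    intro hx
    refine not_congr ⟨fun h => φ.injOn (by simpa [φ]) hv (h.trans hφv.symm), ?_⟩
    rintro rfl
    exact hφv
  have hrank : 1 < Module.rank ℝ (EuclideanSpace ℝ (Fin n)) := by
    rw [← Module.finrank_eq_rank, finrank_euclideanSpace_fin]
    exact_mod_cast hn
  rw [← himage]
  exact (isConnected_compl_singleton_of_one_lt_rank hrank 0).isPreconnected.image _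
    (φ.continuousOn_symm.mono (by simp [φ]))

theorem circleMapsLift_sphere (hn : 1 < n) : CircleMapsLift (Metric.sphere (0 : E) 1) := by
  intro f
  have : Nontrivial E :=
    Module.nontrivial_of_finrank_eq_succ (R := ℝ) (Fact.out (p := Module.finrank ℝ E = n + 1))
  obtain ⟨v⟩ : Nonempty (Metric.sphere (0 : E) 1) :=
    (NormedSpace.sphere_nonempty.mpr zero_le_one).to_subtype
  have hlift (w : Metric.sphere (0 : E) 1) := (stereographic' n w).exists_circleExp_lift_on_source
    (circleMapsLift_of_simplyConnectedSpace _) (stereographic'_target w) f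
  obtain ⟨g₁, hg₁, hf₁⟩ := hlift (-v)
  obtain ⟨g₂, hg₂, hf₂⟩ := hlift v
  simp only [stereographic'_source] at hg₁ hf₁ hg₂ hf₂
  refine exists_circleExp_lift_of_isOpen_cover isOpen_compl_singleton isOpen_compl_singleton ?_
    (isPreconnected_sphere_compl_antipodes hn v) hg₁ hg₂ hf₁ hf₂
  rw [← compl_inter, compl_univ_iff]
  exact singleton_inter_eq_empty.mpr (ne_neg_of_mem_unit_sphere ℝ v).symm

end Sphere

section PhragmenBrouwer

variable {X : Type*} [TopologicalSpace X]

theorem exists_continuous_zero_one_iff_of_isClosed [PerfectlyNormalSpace X] {D E : Set X}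
    (hD : IsClosed D) (hE : IsClosed E) (hDE : Disjoint D E) :
    ∃ u : C(X, ℝ), (∀ x, u x = 0 ↔ x ∈ D) ∧ (∀ x, u x = 1 ↔ x ∈ E) ∧
      ∀ x, u x ∈ Icc (0 : ℝ) 1 := by
  obtain ⟨p, rfl, hp⟩ := perfectlyNormalSpace_iff_forall_isClosed_preimage_zero.mp ‹_› D hD
  obtain ⟨q, rfl, hq⟩ := perfectlyNormalSpace_iff_forall_isClosed_preimage_zero.mp ‹_› E hE
  have hpq (x : X) : 0 < p x + q x := by
    rcases (hp x).1.eq_or_lt with h | h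
    · have : q x ≠ 0 := fun h' => disjoint_left.mp hDE h.symm h'
      linarith [(hq x).1.lt_of_ne this.symm]
    · linarith [(hq x).1]
  refine ⟨⟨fun x => p x / (p x + q x), by fun_prop (disch := exact fun x => (hpq x).ne')⟩,
    fun x => ?_, fun x => ?_, fun x => ?_⟩
  · simp [div_eq_zero_iff, (hpq x).ne']
  · simp [div_eq_one_iff_eq (hpq x).ne']
  · exact ⟨div_nonneg (hp x).1 (hpq x).le, div_le_one_of_le₀ (by linarith [(hq x).1]) (hpq x).le⟩

theorem IsOpen.frontier_connectedComponentIn_subset [LocallyConnectedSpace X] {F : Set X}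
    (hF : IsOpen F) (x : X) : frontier (connectedComponentIn F x) ⊆ Fᶜ := by
  intro y hy hyF
  rw [hF.connectedComponentIn.frontier_eq] at hy
  obtain ⟨z, hzy, hzx⟩ := mem_closure_iff.mp hy.1 _ hF.connectedComponentIn
    (mem_connectedComponentIn hyF)
  rw [connectedComponentIn_eq hzx, ← connectedComponentIn_eq hzy] at hy
  exact hy.2 (mem_connectedComponentIn hyF)

theorem CircleMapsLift.exists_angle_negated_on (hX : CircleMapsLift X) (S : Set X)
    (θ : C(X, ℝ)) (hθ : ∀ x ∈ frontier S, sin (θ x) = 0) :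
    ∃ g : C(X, ℝ), (∀ x, cos (g x) = cos (θ x)) ∧ (∀ x ∈ S, sin (g x) = -sin (θ x)) ∧
      ∀ x ∉ S, sin (g x) = sin (θ x) := by
  classical
  have hfr : ∀ x ∈ frontier {x | x ∈ S}, Circle.exp (-θ x) = Circle.exp (θ x) := fun x hx => by
    obtain ⟨k, hk⟩ := sin_eq_zero_iff.mp (hθ x hx)
    exact Circle.exp_eq_exp.mpr ⟨-k, by rw [← hk]; push_cast; ring⟩
  obtain ⟨g, hg⟩ := hX ⟨_, Continuous.if hfr (by fun_prop) (by fun_prop)⟩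
  have hgS (x : X) (hx : x ∈ S) : ∃ k : ℤ, g x = -θ x + k * (2 * π) :=
    Circle.exp_eq_exp.mp ((hg x).trans (if_pos hx))
  have hgSc (x : X) (hx : x ∉ S) : ∃ k : ℤ, g x = θ x + k * (2 * π) :=
    Circle.exp_eq_exp.mp ((hg x).trans (if_neg hx))
  refine ⟨g, fun x => ?_, fun x hx => ?_, fun x hx => ?_⟩
  · by_cases hx : x ∈ S
    · obtain ⟨k, hk⟩ := hgS x hx
      rw [hk, cos_add_int_mul_two_pi, cos_neg]
    · obtain ⟨k, hk⟩ := hgSc x hx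
      rw [hk, cos_add_int_mul_two_pi]
  · obtain ⟨k, hk⟩ := hgS x hx
    rw [hk, sin_add_int_mul_two_pi, sin_neg]
  · obtain ⟨k, hk⟩ := hgSc x hx
    rw [hk, sin_add_int_mul_two_pi]

theorem sin_nonneg_of_sin_pos_of_isPreconnected {g : X → ℝ} (hg : Continuous g) {P Q : Set X}
    (hP : IsPreconnected P) (hQ : IsPreconnected Q) {a b : X} (haP : a ∈ P) (hbP : b ∈ P)
    (haQ : a ∈ Q) (hbQ : b ∈ Q) (hP1 : ∀ y ∈ P, cos (g y) ≠ 1)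
    (hQ1 : ∀ y ∈ Q, cos (g y) ≠ -1) (ha : 0 < sin (g a)) : 0 ≤ sin (g b) := by
  by_contra! hb
  obtain ⟨t, ht, hsint⟩ : ∃ t ∈ uIcc (g a) (g b), sin t = 0 :=
    intermediate_value_uIcc continuous_sin.continuousOn (mem_uIcc.mpr (.inr ⟨hb.le, ha.le⟩))
  have hmem {s : Set X} (hs : IsPreconnected s) (has : a ∈ s) (hbs : b ∈ s) : t ∈ g '' s :=
    (hs.image _ hg.continuousOn).ordConnected.uIcc_subset (mem_image_of_mem _ has)
      (mem_image_of_mem _ hbs) ht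
  rcases sin_eq_zero_iff_cos_eq.mp hsint with h | h
  · obtain ⟨y, hy, rfl⟩ := hmem hP haP hbP
    exact hP1 y hy h
  · obtain ⟨y, hy, rfl⟩ := hmem hQ haQ hbQ
    exact hQ1 y hy h

theorem PhragmenBrouwer.of_circleMapsLift [PerfectlyNormalSpace X] [ConnectedSpace X]
    [LocallyConnectedSpace X] (hX : CircleMapsLift X) : PhragmenBrouwer X := by
  refine ⟨‹_›, fun D E hD hE hDE a b ha hb hbD hbE => ?_⟩
  by_contra hab
  obtain ⟨u, hu0, hu1, hu⟩ := exists_continuous_zero_one_iff_of_isClosed hD hE hDE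
  let θ : C(X, ℝ) := ⟨fun x => π * u x, by fun_prop⟩
  have hθ_pos (x : X) (hx : x ∉ D) : 0 < θ x :=
    mul_pos pi_pos ((hu x).1.lt_of_ne (Ne.symm fun h => hx ((hu0 x).mp h)))
  have hθ_lt (x : X) (hx : x ∉ E) : θ x < π :=
    mul_lt_of_lt_one_right pi_pos ((hu x).2.lt_of_ne fun h => hx ((hu1 x).mp h))
  set B := connectedComponentIn (D ∪ E)ᶜ b
  have haB : a ∉ B := fun h => hab (connectedComponentIn_eq h ▸ mem_connectedComponentIn hb)
  obtain ⟨g, hcos, hsinB, hsin⟩ := hX.exists_angle_negated_on B θ fun x hx => by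
    rcases not_not.mp ((hD.union hE).isOpen_compl.frontier_connectedComponentIn_subset b hx)
      with h | h
    · simp [θ, (hu0 x).mpr h]
    · simp [θ, (hu1 x).mpr h]
  have hsinθ (x : X) (hx : x ∉ D ∪ E) : 0 < sin (θ x) :=
    sin_pos_of_pos_of_lt_pi (hθ_pos x fun h => hx (.inl h)) (hθ_lt x fun h => hx (.inr h))
  have hP1 (y : X) (hy : y ∈ connectedComponentIn Dᶜ a) : cos (g y) ≠ 1 := by
    rw [hcos, ← cos_zero]
    exact (cos_lt_cos_of_nonneg_of_le_pi le_rfl (mul_le_of_le_one_right pi_pos.le (hu y).2)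
      (hθ_pos y (connectedComponentIn_subset _ _ hy))).ne
  have hQ1 (y : X) (hy : y ∈ connectedComponentIn Eᶜ a) : cos (g y) ≠ -1 := by
    rw [hcos, ← cos_pi]
    exact (cos_lt_cos_of_nonneg_of_le_pi (mul_nonneg pi_pos.le (hu y).1) le_rfl
      (hθ_lt y (connectedComponentIn_subset _ _ hy))).ne'
  have haD : a ∈ Dᶜ := fun h => ha (.inl h)
  have haE : a ∈ Eᶜ := fun h => ha (.inr h)
  have hgb := sin_nonneg_of_sin_pos_of_isPreconnected g.continuous
    isPreconnected_connectedComponentIn isPreconnected_connectedComponentIn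
    (mem_connectedComponentIn haD) hbD (mem_connectedComponentIn haE) hbE hP1 hQ1
    (hsin a haB ▸ hsinθ a ha)
  rw [hsinB b (mem_connectedComponentIn hb)] at hgb
  exact (hsinθ b hb).not_ge (neg_nonneg.mp hgb)

end PhragmenBrouwer

theorem phragmenBrouwer_sphere {E : Type*} [NormedAddCommGroup E] [InnerProductSpace ℝ E]
    {n : ℕ} [Fact (Module.finrank ℝ E = n + 1)] (hn : 1 < n) :
    PhragmenBrouwer (Metric.sphere (0 : E) 1) := by
  have : ConnectedSpace (Metric.sphere (0 : E) 1) := by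
    refine Subtype.connectedSpace (isConnected_sphere ?_ 0 zero_le_one)
    have : FiniteDimensional ℝ E :=
      Module.finite_of_finrank_eq_succ (Fact.out (p := Module.finrank ℝ E = n + 1))
    rw [← Module.finrank_eq_rank, Fact.out (p := Module.finrank ℝ E = n + 1)]
    exact_mod_cast hn.trans (Nat.lt_succ_self n)
  have : LocallyConnectedSpace (Metric.sphere (0 : E) 1) :=
    ChartedSpace.locallyConnectedSpace (EuclideanSpace ℝ (Fin n)) _
  exact .of_circleMapsLift (circleMapsLift_sphere hn)

theorem sphere_pbp (n : ℕ) (hn : 1 < n) :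
    PhragmenBrouwer (Metric.sphere (0 : EuclideanSpace ℝ (Fin (n + 1))) 1) :=
  have : Fact (Module.finrank ℝ (EuclideanSpace ℝ (Fin (n + 1))) = n + 1) :=
    ⟨finrank_euclideanSpace_fin⟩
  phragmenBrouwer_sphere hn
end

section
/- For every n ≥ 2, the complement in Sⁿ of any arc (subspace homeomorphic to [0,1]) is path-connected. -/
open Classical in
noncomputable def pch (P : Prop) : ZMod 2 := if P then 1 else 0

lemma pch_true {P : Prop} (h : P) : pch P = 1 := by simp [pch, h]
lemma pch_false {P : Prop} (h : ¬P) : pch P = 0 := by simp [pch, h]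
lemma pch_congr {P Q : Prop} (h : P ↔ Q) : pch P = pch Q := by
  by_cases hP : P
  · rw [pch_true hP, pch_true (h.mp hP)]
  · rw [pch_false hP, pch_false (fun hq => hP (h.mpr hq))]
lemma pch_ne (X Y : Prop) : pch (¬(X ↔ Y)) = pch X + pch Y := by
  by_cases hX : X <;> by_cases hY : Y <;> simp [pch, hX, hY] <;> decide
lemma pch_and_split (P Q : Prop) : pch (P ∧ Q) = pch Q + pch (¬P ∧ Q) := by
  by_cases hP : P <;> by_cases hQ : Q <;> simp [pch, hP, hQ] <;> decide
lemma pch_eq_one {P : Prop} (h : pch P = 1) : P := by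
  by_cases hP : P
  · exact hP
  · rw [pch_false hP] at h; exact absurd h (by decide)

lemma sum_pch_eq {α : Type*} [DecidableEq α] (B : Finset α) (c : α) (X : Prop) :
    ∑ u ∈ B, pch (u = c ∧ X) = pch (c ∈ B ∧ X) := by
  have h : ∀ u, pch (u = c ∧ X) = if u = c then pch X else 0 := by
    intro u; by_cases h : u = c <;> by_cases hX : X <;> simp [pch, h, hX]
  rw [Finset.sum_congr rfl (fun u _ => h u), Finset.sum_ite_eq' B c (fun _ => pch X)]
  by_cases hc : c ∈ B <;> by_cases hX : X <;> simp [pch, hc, hX]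

namespace ArcComp

variable (N : ℕ) (R : ℤ → ℤ → Prop)

def rho (i j : ℤ) : Prop :=
  if i < 0 then True else if (N : ℤ) ≤ i then False
  else if j < 0 ∨ (N : ℤ) ≤ j then i = 0 else R i j

def Dv (i b : ℤ) : Prop := ¬ (rho N R i (b - 1) ↔ rho N R i b)

def Dh (a j : ℤ) : Prop := ¬ (rho N R (a - 1) j ↔ rho N R a j)

def Adj (w u : ℤ × ℤ) : Prop :=
  (u.2 = w.2 ∧ ((u.1 = w.1 + 1 ∧ Dv N R w.1 w.2) ∨ (w.1 = u.1 + 1 ∧ Dv N R u.1 w.2)))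
  ∨ (u.1 = w.1 ∧ ((u.2 = w.2 + 1 ∧ Dh N R w.1 w.2) ∨ (w.2 = u.2 + 1 ∧ Dh N R w.1 u.2)))

def GoodStep (w u : ℤ × ℤ) : Prop :=
  (0 ≤ w.1 ∧ w.1 ≤ N ∧ 0 ≤ w.2 ∧ w.2 ≤ N) ∧ (0 ≤ u.1 ∧ u.1 ≤ N ∧ 0 ≤ u.2 ∧ u.2 ≤ N) ∧
  ((u.2 = w.2 ∧ 1 ≤ w.2 ∧ w.2 ≤ (N : ℤ) - 1 ∧
      ((u.1 = w.1 + 1 ∧ ¬(R w.1 (w.2 - 1) ↔ R w.1 w.2)) ∨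
       (w.1 = u.1 + 1 ∧ ¬(R u.1 (w.2 - 1) ↔ R u.1 w.2))))
  ∨ (u.1 = w.1 ∧ 1 ≤ w.1 ∧ w.1 ≤ (N : ℤ) - 1 ∧
      ((u.2 = w.2 + 1 ∧ ¬(R (w.1 - 1) w.2 ↔ R w.1 w.2)) ∨
       (w.2 = u.2 + 1 ∧ ¬(R (w.1 - 1) u.2 ↔ R w.1 u.2)))))

variable {N R}

lemma adj_symm {w u : ℤ × ℤ} (h : Adj N R w u) : Adj N R u w := by
  rcases h with ⟨h2, h⟩ | ⟨h1, h⟩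
  · rcases h with ⟨e, hD⟩ | ⟨e, hD⟩
    · exact Or.inl ⟨h2.symm, Or.inr ⟨e, by rwa [h2]⟩⟩
    · exact Or.inl ⟨h2.symm, Or.inl ⟨e, by rwa [h2]⟩⟩
  · rcases h with ⟨e, hD⟩ | ⟨e, hD⟩
    · exact Or.inr ⟨h1.symm, Or.inr ⟨e, by rwa [h1]⟩⟩
    · exact Or.inr ⟨h1.symm, Or.inl ⟨e, by rwa [h1]⟩⟩

lemma adj_irrefl {w : ℤ × ℤ} (h : Adj N R w w) : False := by
  rcases h with ⟨_, ⟨e, _⟩ | ⟨e, _⟩⟩ | ⟨_, ⟨e, _⟩ | ⟨e, _⟩⟩ <;> omega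

lemma rho_neg {i j : ℤ} (h : i < 0) : rho N R i j := by rw [rho, if_pos h]; trivial

lemma rho_big {i j : ℤ} (h : (N : ℤ) ≤ i) : ¬ rho N R i j := by
  have h0 : ¬ i < 0 := by omega
  rw [rho, if_neg h0, if_pos h]
  exact not_false

lemma rho_side (hN : 1 ≤ N) {i j : ℤ} (h : j < 0 ∨ (N : ℤ) ≤ j) : rho N R i j ↔ i ≤ 0 := by
  have hN' : (1 : ℤ) ≤ (N : ℤ) := by exact_mod_cast hN
  by_cases h0 : i < 0
  · rw [rho, if_pos h0]; simp; omega
  · by_cases h1 : (N : ℤ) ≤ i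
    · rw [rho, if_neg h0, if_pos h1]; simp; omega
    · rw [rho, if_neg h0, if_neg h1, if_pos h]; omega

lemma rho_inner {i j : ℤ} (h0 : 0 ≤ i) (h1 : i < N) (h2 : 0 ≤ j) (h3 : j < N) :
    rho N R i j ↔ R i j := by
  have h0' : ¬ i < 0 := by omega
  have h1' : ¬ (N : ℤ) ≤ i := by omega
  have h23 : ¬ (j < 0 ∨ (N : ℤ) ≤ j) := by omega
  rw [rho, if_neg h0', if_neg h1', if_neg h23]

lemma Dh_side (hN : 1 ≤ N) {a j : ℤ} (h : j < 0 ∨ (N : ℤ) ≤ j) : Dh N R a j ↔ a = 1 := by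
  rw [Dh, rho_side hN h, rho_side hN h]; omega

section main

variable (hN : 2 ≤ N)
    (hbot : ∀ j : ℤ, 0 ≤ j → j < (N : ℤ) → R 0 j)
    (htop : ∀ j : ℤ, 0 ≤ j → j < (N : ℤ) → ¬ R ((N : ℤ) - 1) j)
    (hcol0 : ∀ i : ℤ, 0 ≤ i → i < (N : ℤ) → (R i 0 ↔ i = 0))
    (hcolN : ∀ i : ℤ, 0 ≤ i → i < (N : ℤ) → (R i ((N : ℤ) - 1) ↔ i = 0))

include hN hcol0 hcolN in
lemma Dv_inner {i b : ℤ} (h0 : 0 ≤ i) (h1 : i < N) (hb0 : 0 ≤ b) (hbN : b ≤ N)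
    (hD : Dv N R i b) : 1 ≤ b ∧ b ≤ (N : ℤ) - 1 ∧ ¬ (R i (b - 1) ↔ R i b) := by
  by_cases hb : b = 0
  · exfalso
    subst hb
    rw [Dv, rho_side (by omega) (by omega), rho_inner h0 h1 (by omega) (by omega), hcol0 i h0 h1] at hD
    omega
  by_cases hbN' : b = (N : ℤ)
  · exfalso
    subst hbN'
    rw [Dv, rho_inner h0 h1 (by omega) (by omega), hcolN i h0 h1,
      rho_side (by omega) (by omega)] at hD
    omega
  · refine ⟨by omega, by omega, ?_⟩
    rwa [Dv, rho_inner h0 h1 (by omega) (by omega),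
      rho_inner h0 h1 (by omega) (by omega)] at hD

include hN hbot htop in
lemma Dh_inner {a j : ℤ} (hj0 : 0 ≤ j) (hj1 : j < N) (ha0 : 0 ≤ a) (haN : a ≤ N)
    (hD : Dh N R a j) : 1 ≤ a ∧ a ≤ (N : ℤ) - 1 ∧ ¬ (R (a - 1) j ↔ R a j) := by
  by_cases ha : a = 0
  · exfalso
    subst ha
    rw [Dh, rho_inner le_rfl (by omega) hj0 hj1] at hD
    exact hD (iff_of_true (rho_neg (by omega)) (hbot j hj0 hj1))
  by_cases haN' : a = N
  · exfalso
    subst haN'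
    rw [Dh, rho_inner (by omega) (by omega) hj0 hj1] at hD
    exact hD (iff_of_false (htop j hj0 hj1) (rho_big le_rfl))
  · refine ⟨by omega, by omega, ?_⟩
    rwa [Dh, rho_inner (by omega) (by omega) hj0 hj1,
      rho_inner (by omega) (by omega) hj0 hj1] at hD

include hN hbot htop hcol0 hcolN in
lemma comb_main :
    Relation.ReflTransGen (GoodStep N R) (1, 0) (1, (N : ℤ)) := by
  classical
  set B : Finset (ℤ × ℤ) := Finset.Icc (0, 0) ((N : ℤ), (N : ℤ)) with hBdef
  have memB : ∀ w : ℤ × ℤ, w ∈ B ↔ 0 ≤ w.1 ∧ w.1 ≤ N ∧ 0 ≤ w.2 ∧ w.2 ≤ N := by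
    intro w
    rw [hBdef, Finset.mem_Icc, Prod.le_def, Prod.le_def]
    dsimp only
    tauto
  set d : ℤ × ℤ → ZMod 2 := fun w => ∑ u ∈ B, pch (Adj N R w u) with hd
  -- pointwise decomposition of adjacency
  have adj_iff : ∀ a b : ℤ, ∀ u : ℤ × ℤ, Adj N R (a, b) u ↔
      ((u = ((a + 1 : ℤ), b) ∧ Dv N R a b) ∨ ((u = ((a - 1 : ℤ), b) ∧ Dv N R (a - 1) b)
      ∨ ((u = (a, (b + 1 : ℤ)) ∧ Dh N R a b) ∨ (u = (a, (b - 1 : ℤ)) ∧ Dh N R a (b - 1))))) := by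
    rintro a b ⟨x, y⟩
    simp only [Adj, Prod.mk.injEq]
    constructor
    · rintro (⟨h2, ⟨h1, hD⟩ | ⟨h1, hD⟩⟩ | ⟨h1, ⟨h2, hD⟩ | ⟨h2, hD⟩⟩)
      · exact Or.inl ⟨⟨h1, h2⟩, hD⟩
      · refine Or.inr (Or.inl ⟨⟨by omega, h2⟩, ?_⟩)
        have hx : x = a - 1 := by omega
        rwa [hx] at hD
      · exact Or.inr (Or.inr (Or.inl ⟨⟨h1, h2⟩, hD⟩))
      · refine Or.inr (Or.inr (Or.inr ⟨⟨h1, by omega⟩, ?_⟩))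
        have hy : y = b - 1 := by omega
        rwa [hy] at hD
    · rintro (⟨⟨hx, hy⟩, hD⟩ | ⟨⟨hx, hy⟩, hD⟩ | ⟨⟨hx, hy⟩, hD⟩ | ⟨⟨hx, hy⟩, hD⟩) <;>
        subst hx <;> subst hy
      · exact Or.inl ⟨rfl, Or.inl ⟨rfl, hD⟩⟩
      · exact Or.inl ⟨rfl, Or.inr ⟨by omega, hD⟩⟩
      · exact Or.inr ⟨rfl, Or.inl ⟨rfl, hD⟩⟩
      · exact Or.inr ⟨rfl, Or.inr ⟨by omega, hD⟩⟩
  have pch_or : ∀ (A B : Prop), ¬(A ∧ B) → pch (A ∨ B) = pch A + pch B := by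
    intro A B h
    by_cases hA : A <;> by_cases hB : B
    · exact absurd ⟨hA, hB⟩ h
    all_goals simp [pch, hA, hB]
  have pch_or4 : ∀ (c1 c2 c3 c4 : ℤ × ℤ) (X1 X2 X3 X4 : Prop), c1 ≠ c2 → c1 ≠ c3 → c1 ≠ c4 →
      c2 ≠ c3 → c2 ≠ c4 → c3 ≠ c4 → ∀ u : ℤ × ℤ,
      pch ((u = c1 ∧ X1) ∨ ((u = c2 ∧ X2) ∨ ((u = c3 ∧ X3) ∨ (u = c4 ∧ X4)))) =
        pch (u = c1 ∧ X1) + pch (u = c2 ∧ X2) + pch (u = c3 ∧ X3) + pch (u = c4 ∧ X4) := by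
    intro c1 c2 c3 c4 X1 X2 X3 X4 h12 h13 h14 h23 h24 h34 u
    have d1 : ¬((u = c1 ∧ X1) ∧ ((u = c2 ∧ X2) ∨ ((u = c3 ∧ X3) ∨ (u = c4 ∧ X4)))) := by
      rintro ⟨⟨rfl, -⟩, ⟨h, -⟩ | ⟨h, -⟩ | ⟨h, -⟩⟩
      exacts [h12 h, h13 h, h14 h]
    have d2 : ¬((u = c2 ∧ X2) ∧ ((u = c3 ∧ X3) ∨ (u = c4 ∧ X4))) := by
      rintro ⟨⟨rfl, -⟩, ⟨h, -⟩ | ⟨h, -⟩⟩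
      exacts [h23 h, h24 h]
    have d3 : ¬((u = c3 ∧ X3) ∧ (u = c4 ∧ X4)) := by
      rintro ⟨⟨rfl, -⟩, h, -⟩
      exact h34 h
    rw [pch_or _ _ d1, pch_or _ _ d2, pch_or _ _ d3]
    ring
  -- evaluation of d on the box
  have d_eval : ∀ w ∈ B, d w = pch (w = ((1 : ℤ), (0 : ℤ))) + pch (w = ((1 : ℤ), (N : ℤ))) := by
    rintro ⟨a, b⟩ hw
    obtain ⟨ha0, haN, hb0, hbN⟩ := (memB _).mp hw
    have hsum : d (a, b) =
        pch (((a + 1 : ℤ), b) ∈ B ∧ Dv N R a b) + pch (((a - 1 : ℤ), b) ∈ B ∧ Dv N R (a - 1) b)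
        + pch ((a, (b + 1 : ℤ)) ∈ B ∧ Dh N R a b)
        + pch ((a, (b - 1 : ℤ)) ∈ B ∧ Dh N R a (b - 1)) := by
      rw [hd]
      dsimp only
      rw [Finset.sum_congr rfl (fun u _ => pch_congr (adj_iff a b u)),
        Finset.sum_congr rfl (fun u _ => pch_or4 _ _ _ _ _ _ _ _
          (by intro h; rw [Prod.ext_iff] at h; dsimp only at h; omega)
          (by intro h; rw [Prod.ext_iff] at h; dsimp only at h; omega)
          (by intro h; rw [Prod.ext_iff] at h; dsimp only at h; omega)
          (by intro h; rw [Prod.ext_iff] at h; dsimp only at h; omega)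
          (by intro h; rw [Prod.ext_iff] at h; dsimp only at h; omega)
          (by intro h; rw [Prod.ext_iff] at h; dsimp only at h; omega) u)]
      rw [Finset.sum_add_distrib, Finset.sum_add_distrib, Finset.sum_add_distrib]
      rw [sum_pch_eq, sum_pch_eq, sum_pch_eq, sum_pch_eq]
    rw [hsum, pch_and_split (((a + 1 : ℤ), b) ∈ B) (Dv N R a b),
      pch_and_split (((a - 1 : ℤ), b) ∈ B) (Dv N R (a - 1) b),
      pch_and_split ((a, (b + 1 : ℤ)) ∈ B) (Dh N R a b),
      pch_and_split ((a, (b - 1 : ℤ)) ∈ B) (Dh N R a (b - 1))]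
    -- the four "global" terms cancel
    have hglob : pch (Dv N R a b) + pch (Dv N R (a - 1) b) + pch (Dh N R a b)
        + pch (Dh N R a (b - 1)) = 0 := by
      rw [Dv, Dv, Dh, Dh, pch_ne, pch_ne, pch_ne, pch_ne]
      generalize pch (rho N R a (b - 1)) = p
      generalize pch (rho N R a b) = q
      generalize pch (rho N R (a - 1) (b - 1)) = s
      generalize pch (rho N R (a - 1) b) = t
      revert p q s t
      decide
    -- correction terms
    have t1 : pch (¬ ((a + 1 : ℤ), b) ∈ B ∧ Dv N R a b) = 0 := by
      apply pch_false
      rintro ⟨hnB, hD⟩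
      have haN' : a = N := by
        rcases (not_iff_not.mpr (memB ((a + 1 : ℤ), b))).mp hnB with h
        dsimp only at h
        omega
      subst haN'
      rw [Dv] at hD
      exact hD (iff_of_false (rho_big le_rfl) (rho_big le_rfl))
    have t2 : pch (¬ ((a - 1 : ℤ), b) ∈ B ∧ Dv N R (a - 1) b) = 0 := by
      apply pch_false
      rintro ⟨hnB, hD⟩
      have ha' : a = 0 := by
        rcases (not_iff_not.mpr (memB ((a - 1 : ℤ), b))).mp hnB with h
        dsimp only at h
        omega
      subst ha'
      rw [Dv] at hD
      exact hD (iff_of_true (rho_neg (by omega)) (rho_neg (by omega)))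
    have t3 : pch (¬ (a, (b + 1 : ℤ)) ∈ B ∧ Dh N R a b) = pch ((a, b) = ((1:ℤ), (N:ℤ))) := by
      apply pch_congr
      constructor
      · rintro ⟨hnB, hD⟩
        have hb' : b = N := by
          rcases (not_iff_not.mpr (memB (a, (b + 1 : ℤ)))).mp hnB with h
          dsimp only at h
          omega
        subst hb'
        have := (Dh_side (by omega) (by omega)).mp hD
        simp [Prod.ext_iff, this]
      · rintro h
        rw [Prod.ext_iff] at h
        dsimp only at h
        obtain ⟨ha, hb⟩ := h
        subst ha; subst hb
        constructor
        · rw [memB]; dsimp only; omega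
        · exact (Dh_side (by omega) (by omega)).mpr rfl
    have t4 : pch (¬ (a, (b - 1 : ℤ)) ∈ B ∧ Dh N R a (b - 1)) = pch ((a, b) = ((1:ℤ), (0:ℤ))) := by
      apply pch_congr
      constructor
      · rintro ⟨hnB, hD⟩
        have hb' : b = 0 := by
          rcases (not_iff_not.mpr (memB (a, (b - 1 : ℤ)))).mp hnB with h
          dsimp only at h
          omega
        subst hb'
        have := (Dh_side (R := R) (a := a) (by omega) (by omega)).mp hD
        simp [Prod.ext_iff, this]
      · rintro h
        rw [Prod.ext_iff] at h
        dsimp only at h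
        obtain ⟨ha, hb⟩ := h
        subst ha; subst hb
        constructor
        · rw [memB]; dsimp only; omega
        · exact (Dh_side (by omega) (by omega)).mpr rfl
    have rearr : ∀ x1 x2 x3 x4 y1 y2 y3 y4 : ZMod 2,
        x1 + x2 + x3 + x4 = 0 → (x1 + y1) + (x2 + y2) + (x3 + y3) + (x4 + y4)
          = y4 + y3 + (y1 + y2) := by decide
    rw [rearr _ _ _ _ _ _ _ _ hglob, t1, t2, t3, t4]
    simp
  -- component argument
  set step : ℤ × ℤ → ℤ × ℤ → Prop := fun v u => Adj N R v u ∧ u ∈ B with hstep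
  set C : Finset (ℤ × ℤ) := B.filter (fun u => Relation.ReflTransGen step (1, 0) u) with hC
  have hCB : C ⊆ B := Finset.filter_subset _ _
  have h10B : ((1 : ℤ), (0 : ℤ)) ∈ B := by rw [memB]; dsimp only; omega
  have h10C : ((1 : ℤ), (0 : ℤ)) ∈ C := by
    rw [hC, Finset.mem_filter]; exact ⟨h10B, Relation.ReflTransGen.refl⟩
  have hclosed : ∀ w ∈ C, ∀ u ∈ B, Adj N R w u → u ∈ C := by
    intro w hw u hu hadj
    rw [hC, Finset.mem_filter] at hw ⊢
    exact ⟨hu, hw.2.tail ⟨hadj, hu⟩⟩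
  -- sum of d over C is zero
  have hsumC : ∑ w ∈ C, d w = 0 := by
    have step1 : ∀ w ∈ C, d w = ∑ u ∈ C, pch (Adj N R w u) := by
      intro w hw
      rw [hd]
      dsimp only
      refine (Finset.sum_subset hCB ?_).symm
      intro u hu hnu
      apply pch_false
      intro hadj
      exact hnu (hclosed w hw u hu hadj)
    rw [Finset.sum_congr rfl step1, ← Finset.sum_product']
    apply Finset.sum_involution (fun p _ => (p.2, p.1))
    · intro p hp
      have : pch (Adj N R p.2 p.1) = pch (Adj N R p.1 p.2) :=
        pch_congr ⟨fun h => adj_symm h, fun h => adj_symm h⟩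
      rw [this]
      exact CharTwo.add_self_eq_zero _
    · intro p hp hne heq
      apply hne
      apply pch_false
      intro hadj
      have : p.1 = p.2 := by
        have := congrArg Prod.fst heq
        exact this.symm
      rw [this] at hadj
      exact adj_irrefl hadj
    · intro p hp
      rw [Finset.mem_product] at hp ⊢
      exact ⟨hp.2, hp.1⟩
    · intro p hp
      rfl
  -- conclude (1, N) ∈ C
  have hNC : ((1 : ℤ), (N : ℤ)) ∈ C := by
    have heval : ∑ w ∈ C, d w = pch (((1:ℤ), (0:ℤ)) ∈ C) + pch (((1:ℤ), (N:ℤ)) ∈ C) := by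
      rw [Finset.sum_congr rfl (fun w hw => d_eval w (hCB hw))]
      rw [Finset.sum_add_distrib]
      have e1 : ∀ (v : ℤ × ℤ), ∑ w ∈ C, pch (w = v) = pch (v ∈ C) := by
        intro v
        have h : ∀ w : ℤ × ℤ, pch (w = v) = if w = v then (1 : ZMod 2) else 0 := by
          intro w; by_cases h : w = v <;> simp [pch, h]
        rw [Finset.sum_congr rfl (fun w _ => h w), Finset.sum_ite_eq' C v (fun _ => (1 : ZMod 2))]
        by_cases hv : v ∈ C <;> simp [pch, hv]
      rw [e1, e1]
    rw [heval, pch_true h10C] at hsumC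
    apply pch_eq_one
    have : ∀ x : ZMod 2, 1 + x = 0 → x = 1 := by decide
    exact this _ hsumC
  -- convert to GoodStep walk
  rw [hC, Finset.mem_filter] at hNC
  have conv : ∀ u, Relation.ReflTransGen step ((1 : ℤ), (0 : ℤ)) u →
      u ∈ B ∧ Relation.ReflTransGen (GoodStep N R) ((1 : ℤ), (0 : ℤ)) u := by
    intro u h
    induction h with
    | refl => exact ⟨h10B, Relation.ReflTransGen.refl⟩
    | tail hmid hst ih =>
      rename_i mid u'
      obtain ⟨hmidB, ihg⟩ := ih
      obtain ⟨hadj, hu'B⟩ := hst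
      refine ⟨hu'B, ihg.tail ?_⟩
      obtain ⟨hm1, hm2, hm3, hm4⟩ := (memB mid).mp hmidB
      obtain ⟨hu1, hu2, hu3, hu4⟩ := (memB u').mp hu'B
      refine ⟨⟨hm1, hm2, hm3, hm4⟩, ⟨hu1, hu2, hu3, hu4⟩, ?_⟩
      rcases hadj with ⟨h2, ⟨h1, hD⟩ | ⟨h1, hD⟩⟩ | ⟨h1, ⟨h2, hD⟩ | ⟨h2, hD⟩⟩
      · obtain ⟨e1, e2, e3⟩ := Dv_inner hN hcol0 hcolN (by omega) (by omega) hm3 hm4 hD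
        exact Or.inl ⟨h2, e1, e2, Or.inl ⟨h1, e3⟩⟩
      · obtain ⟨e1, e2, e3⟩ := Dv_inner hN hcol0 hcolN (by omega) (by omega) hm3 hm4 hD
        exact Or.inl ⟨h2, e1, e2, Or.inr ⟨h1, e3⟩⟩
      · obtain ⟨e1, e2, e3⟩ := Dh_inner hN hbot htop hm3 (by omega) (by omega) (by omega) hD
        exact Or.inr ⟨h1, e1, e2, Or.inl ⟨h2, e3⟩⟩
      · obtain ⟨e1, e2, e3⟩ := Dh_inner hN hbot htop (by omega) (by omega) (by omega) (by omega) hD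
        exact Or.inr ⟨h1, e1, e2, Or.inr ⟨h2, e3⟩⟩
  exact (conv _ hNC.2).2

end main

end ArcComp
namespace ArcComp

section Jan

open Set unitInterval

variable {S' : Type*} [TopologicalSpace S']

set_option maxHeartbeats 4000000 in
lemma jan (p : S') (hsc : SimplyConnectedSpace ↥({p}ᶜ : Set S'))
    {U V : Set S'} (hU : IsOpen U) (hV : IsOpen V) (hUV : U ∪ V = {p}ᶜ)
    {x y : S'} (hxU : x ∈ U) (hxV : x ∈ V) (hyU : y ∈ U) (hyV : y ∈ V)
    (hJU : JoinedIn U x y) (hJV : JoinedIn V x y) : JoinedIn (U ∩ V) x y := by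
  classical
  haveI := hsc
  have hUc : U ⊆ ({p}ᶜ : Set S') := hUV ▸ Set.subset_union_left
  have hVc : V ⊆ ({p}ᶜ : Set S') := hUV ▸ Set.subset_union_right
  obtain ⟨α, hα⟩ := hJU
  obtain ⟨β, hβ⟩ := hJV
  set x' : ↥({p}ᶜ : Set S') := ⟨x, hUc hxU⟩ with hx'
  set y' : ↥({p}ᶜ : Set S') := ⟨y, hUc hyU⟩ with hy'
  let α' : Path x' y' :=
    { toFun := fun t => ⟨α t, hUc (hα t)⟩
      continuous_toFun := α.continuous.subtype_mk _
      source' := by ext; simp; rfl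
      target' := by ext; simp; rfl }
  let β' : Path x' y' :=
    { toFun := fun t => ⟨β t, hVc (hβ t)⟩
      continuous_toFun := β.continuous.subtype_mk _
      source' := by ext; simp; rfl
      target' := by ext; simp; rfl }
  obtain ⟨H⟩ := SimplyConnectedSpace.paths_homotopic α' β'
  -- squashing reparametrization
  set sg : I → I := fun t => Set.projIcc (0:ℝ) 1 zero_le_one (2 * (t:ℝ) - 1/2) with hsg
  have hsgcont : Continuous sg := by
    apply continuous_projIcc.comp
    continuity
  have hsg0 : ∀ t : I, (t : ℝ) ≤ 1/4 → sg t = 0 := by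
    intro t ht
    rw [hsg]
    dsimp only
    rw [Set.projIcc_of_le_left _ (by linarith)]
    rfl
  have hsg1 : ∀ t : I, 3/4 ≤ (t : ℝ) → sg t = 1 := by
    intro t ht
    rw [hsg]
    dsimp only
    rw [Set.projIcc_of_right_le _ (by linarith)]
    rfl
  set Gm : I × I → S' := fun z => ((H (sg z.1, sg z.2) : ↥({p}ᶜ : Set S')) : S') with hGm
  have hGmCont : Continuous Gm := by
    apply continuous_subtype_val.comp
    exact H.continuous.comp ((hsgcont.comp continuous_fst).prodMk (hsgcont.comp continuous_snd))
  have hGleft : ∀ z : I × I, (z.2 : ℝ) ≤ 1/4 → Gm z = x := by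
    intro z hz
    rw [hGm]
    dsimp only
    rw [hsg0 z.2 hz, Path.Homotopy.source H (sg z.1)]
  have hGright : ∀ z : I × I, 3/4 ≤ (z.2 : ℝ) → Gm z = y := by
    intro z hz
    rw [hGm]
    dsimp only
    rw [hsg1 z.2 hz, Path.Homotopy.target H (sg z.1)]
  have hGbot : ∀ z : I × I, (z.1 : ℝ) ≤ 1/4 → Gm z ∈ U := by
    intro z hz
    rw [hGm]
    dsimp only
    rw [hsg0 z.1 hz]
    have h0 : H (0, sg z.2) = α' (sg z.2) := by
      rw [← ContinuousMap.HomotopyWith.coe_toHomotopy]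
      exact H.toHomotopy.apply_zero (sg z.2)
    rw [h0]
    exact hα (sg z.2)
  have hGtop : ∀ z : I × I, 3/4 ≤ (z.1 : ℝ) → Gm z ∈ V := by
    intro z hz
    rw [hGm]
    dsimp only
    rw [hsg1 z.1 hz]
    have h1 : H (1, sg z.2) = β' (sg z.2) := by
      rw [← ContinuousMap.HomotopyWith.coe_toHomotopy]
      exact H.toHomotopy.apply_one (sg z.2)
    rw [h1]
    exact hβ (sg z.2)
  have hGall : ∀ z : I × I, Gm z ∈ U ∪ V := by
    intro z
    rw [hUV]
    exact (H (sg z.1, sg z.2)).2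
  -- Lebesgue number
  have hcover : (Set.univ : Set (I × I)) ⊆ ⋃ b : Bool, (if b then Gm ⁻¹' U else Gm ⁻¹' V) := by
    intro z _
    rcases hGall z with h | h
    · exact Set.mem_iUnion.mpr ⟨true, by simpa using h⟩
    · exact Set.mem_iUnion.mpr ⟨false, by simpa using h⟩
  obtain ⟨δ, hδpos, hball⟩ := lebesgue_number_lemma_of_metric isCompact_univ
    (fun b => by
      cases b
      · exact hV.preimage hGmCont
      · exact hU.preimage hGmCont) hcover
  obtain ⟨n₀, hn₀⟩ := exists_nat_one_div_lt hδpos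
  set N : ℕ := max (n₀ + 1) 4 with hNdef
  have hN4 : 4 ≤ N := le_max_right _ _
  have hNpos : (0:ℝ) < N := by positivity
  have hNδ : 1 / (N:ℝ) < δ := by
    have h1 : (n₀ + 1 : ℝ) ≤ (N : ℝ) := by
      have := le_max_left (n₀ + 1) 4
      exact_mod_cast this
    calc 1 / (N:ℝ) ≤ 1 / (n₀ + 1 : ℝ) := by
          apply div_le_div_of_nonneg_left zero_le_one (by positivity) h1
      _ < δ := hn₀
  -- grid vertices
  have hmem : ∀ a : ℤ, 0 ≤ a → a ≤ (N:ℤ) → (a:ℝ)/N ∈ Set.Icc (0:ℝ) 1 := by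
    intro a h0 h1
    constructor
    · positivity
    · rw [div_le_one hNpos]
      exact_mod_cast h1
  set vtx : ℤ → I := fun a => Set.projIcc (0:ℝ) 1 zero_le_one ((a:ℝ)/N) with hvtx
  have hvtxval : ∀ a : ℤ, 0 ≤ a → a ≤ (N:ℤ) → ((vtx a : I) : ℝ) = (a:ℝ)/N := by
    intro a h0 h1
    rw [hvtx]
    dsimp only
    rw [Set.projIcc_of_mem _ (hmem a h0 h1)]
  -- cell colors
  set cellU : ℤ → ℤ → Prop := fun i j => ∀ z : I × I,
    (i:ℝ)/N ≤ (z.1:ℝ) → (z.1:ℝ) ≤ (i+1:ℝ)/N → (j:ℝ)/N ≤ (z.2:ℝ) → (z.2:ℝ) ≤ (j+1:ℝ)/N →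
    Gm z ∈ U with hcellU
  set cellV : ℤ → ℤ → Prop := fun i j => ∀ z : I × I,
    (i:ℝ)/N ≤ (z.1:ℝ) → (z.1:ℝ) ≤ (i+1:ℝ)/N → (j:ℝ)/N ≤ (z.2:ℝ) → (z.2:ℝ) ≤ (j+1:ℝ)/N →
    Gm z ∈ V with hcellV
  have hcellcolor : ∀ i j : ℤ, 0 ≤ i → i < (N:ℤ) → 0 ≤ j → j < (N:ℤ) →
      cellU i j ∨ cellV i j := by
    intro i j hi0 hi1 hj0 hj1
    obtain ⟨b, hb⟩ := hball (vtx i, vtx j) trivial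
    have hkey : ∀ z : I × I, (i:ℝ)/N ≤ (z.1:ℝ) → (z.1:ℝ) ≤ (i+1:ℝ)/N →
        (j:ℝ)/N ≤ (z.2:ℝ) → (z.2:ℝ) ≤ (j+1:ℝ)/N → z ∈ Metric.ball (vtx i, vtx j) δ := by
      intro z h1 h2 h3 h4
      rw [Metric.mem_ball, Prod.dist_eq]
      have ei : ((i:ℝ)+1)/N = (i:ℝ)/N + 1/N := by ring
      have ej : ((j:ℝ)+1)/N = (j:ℝ)/N + 1/N := by ring
      have e1 : dist z.1 (vtx i) < δ := by
        rw [Subtype.dist_eq, Real.dist_eq, hvtxval i hi0 (by omega), abs_sub_lt_iff]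
        constructor <;> linarith
      have e2 : dist z.2 (vtx j) < δ := by
        rw [Subtype.dist_eq, Real.dist_eq, hvtxval j hj0 (by omega), abs_sub_lt_iff]
        constructor <;> linarith
      exact max_lt e1 e2
    cases b
    · right
      intro z h1 h2 h3 h4
      have := hb (hkey z h1 h2 h3 h4)
      simpa using this
    · left
      intro z h1 h2 h3 h4
      have := hb (hkey z h1 h2 h3 h4)
      simpa using this
  have h1N4 : (1:ℝ)/N ≤ 1/4 := by
    apply one_div_le_one_div_of_le
    · norm_num
    · exact_mod_cast hN4
  have h1Npos : (0:ℝ) < 1/N := by positivity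
  -- edges
  set goodV : ℤ → ℤ → Prop := fun i b => ∀ z : I × I,
    (i:ℝ)/N ≤ (z.1:ℝ) → (z.1:ℝ) ≤ ((i:ℝ)+1)/N → (z.2:ℝ) = (b:ℝ)/N → Gm z ∈ U ∩ V with hgoodV
  set goodH : ℤ → ℤ → Prop := fun a j => ∀ z : I × I,
    (z.1:ℝ) = (a:ℝ)/N → (j:ℝ)/N ≤ (z.2:ℝ) → (z.2:ℝ) ≤ ((j:ℝ)+1)/N → Gm z ∈ U ∩ V with hgoodH
  set cstep : ℤ × ℤ → ℤ × ℤ → Prop := fun c c' =>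
    (0 ≤ c'.1 ∧ c'.1 < (N:ℤ) ∧ 0 ≤ c'.2 ∧ c'.2 < (N:ℤ)) ∧
    ((c'.1 = c.1 ∧ c'.2 = c.2 + 1 ∧ ¬ goodV c.1 c'.2) ∨
     (c'.1 = c.1 ∧ c.2 = c'.2 + 1 ∧ ¬ goodV c.1 c.2) ∨
     (c'.2 = c.2 ∧ c'.1 = c.1 + 1 ∧ ¬ goodH c'.1 c.2) ∨
     (c'.2 = c.2 ∧ c.1 = c'.1 + 1 ∧ ¬ goodH c.1 c.2)) with hcstepdef
  set R : ℤ → ℤ → Prop := fun i j =>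
    ∃ j₀ : ℤ, 0 ≤ j₀ ∧ j₀ < (N:ℤ) ∧ Relation.ReflTransGen cstep (0, j₀) (i, j) with hRdef
  -- a step with U-colored source and V-colored target is impossible
  have hedgegood : ∀ cA cB : ℤ × ℤ, cstep cA cB → cellU cA.1 cA.2 → cellV cB.1 cB.2 → False := by
    intro cA cB hst hu hv
    obtain ⟨hrange, hshape⟩ := hst
    rcases hshape with ⟨e1, e2, hng⟩ | ⟨e1, e2, hng⟩ | ⟨e1, e2, hng⟩ | ⟨e1, e2, hng⟩
    · apply hng
      intro z h1 h2 h3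
      have hc2 : ((cB.2:ℝ)) = (cA.2:ℝ) + 1 := by exact_mod_cast congrArg (Int.cast : ℤ → ℝ) e2
      have hs : ((cA.2:ℝ))/N ≤ (z.2:ℝ) := by
        rw [h3, hc2]
        have : ((cA.2:ℝ) + 1)/N = (cA.2:ℝ)/N + 1/N := by ring
        rw [this]; linarith
      refine ⟨hu z h1 h2 hs (by rw [h3, hc2]), hv z (by rw [e1]; exact h1) (by rw [e1]; exact h2)
        (le_of_eq h3.symm) ?_⟩
      have : ((cB.2:ℝ) + 1)/N = (cB.2:ℝ)/N + 1/N := by ring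
      rw [h3, this]; linarith
    · apply hng
      intro z h1 h2 h3
      have hc2 : ((cA.2:ℝ)) = (cB.2:ℝ) + 1 := by exact_mod_cast congrArg (Int.cast : ℤ → ℝ) e2
      have e' : ((cA.2:ℝ) + 1)/N = (cA.2:ℝ)/N + 1/N := by ring
      refine ⟨hu z h1 h2 (le_of_eq h3.symm) (by rw [h3, e']; linarith), hv z
        (by rw [e1]; exact h1) (by rw [e1]; exact h2) ?_ ?_⟩
      · rw [h3, hc2]
        have : ((cB.2:ℝ) + 1)/N = (cB.2:ℝ)/N + 1/N := by ring
        rw [this]; linarith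
      · rw [h3, hc2]
    · apply hng
      intro z h1 h2 h3
      have hc1 : ((cB.1:ℝ)) = (cA.1:ℝ) + 1 := by exact_mod_cast congrArg (Int.cast : ℤ → ℝ) e2
      have eA : ((cA.1:ℝ) + 1)/N = (cA.1:ℝ)/N + 1/N := by ring
      have eB : ((cB.1:ℝ) + 1)/N = (cB.1:ℝ)/N + 1/N := by ring
      refine ⟨hu z ?_ (by rw [h1, hc1]) h2 h3, hv z (le_of_eq h1.symm) (by rw [h1, eB]; linarith)
        (by rw [e1]; exact h2) (by rw [e1]; exact h3)⟩
      rw [h1, hc1, eA]; linarith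
    · apply hng
      intro z h1 h2 h3
      have hc1 : ((cA.1:ℝ)) = (cB.1:ℝ) + 1 := by exact_mod_cast congrArg (Int.cast : ℤ → ℝ) e2
      have eA : ((cA.1:ℝ) + 1)/N = (cA.1:ℝ)/N + 1/N := by ring
      have eB : ((cB.1:ℝ) + 1)/N = (cB.1:ℝ)/N + 1/N := by ring
      refine ⟨hu z (le_of_eq h1.symm) (by rw [h1, eA]; linarith) h2 h3, hv z ?_ ?_
        (by rw [e1]; exact h2) (by rw [e1]; exact h3)⟩
      · rw [h1, hc1, eB]; linarith
      · rw [h1, hc1]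
  -- reachable cells are U-colored and in range
  have hRU : ∀ c : ℤ × ℤ, ∀ j₀ : ℤ, 0 ≤ j₀ → j₀ < (N:ℤ) →
      Relation.ReflTransGen cstep (0, j₀) c →
      (0 ≤ c.1 ∧ c.1 < (N:ℤ) ∧ 0 ≤ c.2 ∧ c.2 < (N:ℤ)) ∧ cellU c.1 c.2 := by
    intro c j₀ h0 h1 hrtg
    induction hrtg with
    | refl =>
      refine ⟨⟨by omega, by omega, h0, h1⟩, ?_⟩
      intro z hz1 hz2 hz3 hz4
      apply hGbot
      have : ((0:ℤ):ℝ)/N = 0 := by norm_num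
      calc (z.1:ℝ) ≤ (((0:ℤ):ℝ)+1)/N := hz2
        _ = 1/N := by norm_num
        _ ≤ 1/4 := h1N4
    | tail hmid hst ih =>
      rename_i mid c'
      obtain ⟨hmidrange, hmidU⟩ := ih
      obtain ⟨hrange', hshape⟩ := hst
      refine ⟨hrange', ?_⟩
      rcases hcellcolor c'.1 c'.2 hrange'.1 hrange'.2.1 hrange'.2.2.1 hrange'.2.2.2 with hu | hv
      · exact hu
      · exact absurd (hedgegood mid c' ⟨hrange', hshape⟩ hmidU hv) not_false
  have hbotR : ∀ j : ℤ, 0 ≤ j → j < (N:ℤ) → R 0 j := by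
    intro j h0 h1
    rw [hRdef]
    exact ⟨j, h0, h1, Relation.ReflTransGen.refl⟩
  -- top row is V-colored
  have htopV : ∀ j : ℤ, cellV ((N:ℤ)-1) j := by
    intro j z h1 h2 h3 h4
    apply hGtop
    have hc : (((N:ℤ)-1 : ℤ):ℝ) = (N:ℝ) - 1 := by push_cast; ring
    have he : ((N:ℝ) - 1)/N = 1 - 1/N := by field_simp
    rw [hc, he] at h1
    linarith
  have htopR : ∀ j : ℤ, 0 ≤ j → j < (N:ℤ) → ¬ R ((N:ℤ)-1) j := by
    intro j h0 h1 hr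
    rw [hRdef] at hr
    obtain ⟨j₀, hj0, hj1, hrtg⟩ := hr
    rcases Relation.ReflTransGen.cases_tail hrtg with heq | ⟨mid, hmid, hst⟩
    · rw [Prod.ext_iff] at heq
      have := heq.1
      dsimp only at this
      omega
    · exact absurd (hedgegood mid _ hst (hRU mid j₀ hj0 hj1 hmid).2 (htopV j)) not_false
  -- side columns
  have hsideL : ∀ c' : ℤ × ℤ, c'.2 = 0 → ∀ cA, cstep cA c' → False := by
    intro c' h2 cA hst
    obtain ⟨hrange, hshape⟩ := hst
    have hxy : x ∈ U ∩ V := ⟨hxU, hxV⟩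
    have hgd : ∀ z : I × I, (z.2:ℝ) ≤ 1/N → Gm z ∈ U ∩ V := by
      intro z hz
      rw [hGleft z (le_trans hz h1N4)]
      exact hxy
    rcases hshape with ⟨e1, e2, hng⟩ | ⟨e1, e2, hng⟩ | ⟨e1, e2, hng⟩ | ⟨e1, e2, hng⟩
    · apply hng; intro z hz1 hz2 hz3
      apply hgd
      rw [hz3]
      have : (c'.2:ℝ) = 0 := by exact_mod_cast congrArg (Int.cast : ℤ → ℝ) h2
      rw [this, zero_div]
      positivity
    · apply hng; intro z hz1 hz2 hz3
      apply hgd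
      rw [hz3]
      have hA2 : (cA.2:ℝ) = 1 := by
        have : cA.2 = 1 := by omega
        exact_mod_cast congrArg (Int.cast : ℤ → ℝ) this
      rw [hA2]
    · apply hng; intro z hz1 hz2 hz3
      apply hgd
      have : (cA.2:ℝ) = 0 := by
        have h' : cA.2 = 0 := by omega
        exact_mod_cast congrArg (Int.cast : ℤ → ℝ) h'
      rw [this] at hz3
      calc (z.2:ℝ) ≤ (0+1)/N := hz3
        _ = 1/N := by norm_num
    · apply hng; intro z hz1 hz2 hz3
      apply hgd
      have : (cA.2:ℝ) = 0 := by
        have h' : cA.2 = 0 := by omega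
        exact_mod_cast congrArg (Int.cast : ℤ → ℝ) h'
      rw [this] at hz3
      calc (z.2:ℝ) ≤ (0+1)/N := hz3
        _ = 1/N := by norm_num
  have hsideR : ∀ c' : ℤ × ℤ, c'.2 = (N:ℤ)-1 → ∀ cA, cstep cA c' → False := by
    intro c' h2 cA hst
    obtain ⟨hrange, hshape⟩ := hst
    have hyy : y ∈ U ∩ V := ⟨hyU, hyV⟩
    have hgd : ∀ z : I × I, ((N:ℝ)-1)/N ≤ (z.2:ℝ) → Gm z ∈ U ∩ V := by
      intro z hz
      have he : ((N:ℝ) - 1)/N = 1 - 1/N := by field_simp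
      rw [hGright z (by rw [he] at hz; linarith)]
      exact hyy
    have hNcast : ((N:ℤ):ℝ) = (N:ℝ) := by norm_num
    rcases hshape with ⟨e1, e2, hng⟩ | ⟨e1, e2, hng⟩ | ⟨e1, e2, hng⟩ | ⟨e1, e2, hng⟩
    · apply hng; intro z hz1 hz2 hz3
      apply hgd
      have : (c'.2:ℝ) = (N:ℝ) - 1 := by
        rw [h2]; push_cast; ring
      rw [hz3, this]
    · apply hng; intro z hz1 hz2 hz3
      apply hgd
      have hA2 : (cA.2:ℝ) = (N:ℝ) := by
        have h' : cA.2 = (N:ℤ) := by omega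
        rw [h']; push_cast; ring
      rw [hz3, hA2]
      have hNN : (N:ℝ)/N = 1 := div_self (ne_of_gt hNpos)
      have he : ((N:ℝ) - 1)/N = 1 - 1/N := by field_simp
      rw [hNN, he]
      linarith
    · apply hng; intro z hz1 hz2 hz3
      apply hgd
      have : (cA.2:ℝ) = (N:ℝ) - 1 := by
        have h' : cA.2 = (N:ℤ) - 1 := by omega
        rw [h']; push_cast; ring
      rw [← this]
      exact hz2
    · apply hng; intro z hz1 hz2 hz3
      apply hgd
      have : (cA.2:ℝ) = (N:ℝ) - 1 := by
        have h' : cA.2 = (N:ℤ) - 1 := by omega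
        rw [h']; push_cast; ring
      rw [← this]
      exact hz2
  have hcol0R : ∀ i : ℤ, 0 ≤ i → i < (N:ℤ) → (R i 0 ↔ i = 0) := by
    intro i h0 h1
    constructor
    · intro hr
      rw [hRdef] at hr
      obtain ⟨j₀, hj0, hj1, hrtg⟩ := hr
      rcases Relation.ReflTransGen.cases_tail hrtg with heq | ⟨mid, hmid, hst⟩
      · rw [Prod.ext_iff] at heq
        have := heq.1
        dsimp only at this
        omega
      · exact absurd (hsideL (i, 0) rfl mid hst) not_false
    · rintro rfl
      exact hbotR 0 le_rfl (by omega)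
  have hcolNR : ∀ i : ℤ, 0 ≤ i → i < (N:ℤ) → (R i ((N:ℤ)-1) ↔ i = 0) := by
    intro i h0 h1
    constructor
    · intro hr
      rw [hRdef] at hr
      obtain ⟨j₀, hj0, hj1, hrtg⟩ := hr
      rcases Relation.ReflTransGen.cases_tail hrtg with heq | ⟨mid, hmid, hst⟩
      · rw [Prod.ext_iff] at heq
        have := heq.1
        dsimp only at this
        omega
      · exact absurd (hsideR (i, (N:ℤ)-1) rfl mid hst) not_false
    · rintro rfl
      exact hbotR ((N:ℤ)-1) (by omega) (by omega)
  have hcomb := comb_main (R := R) (by omega) hbotR htopR hcol0R hcolNR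
  -- endpoints
  have hvtx0 : ((vtx (0:ℤ) : I) : ℝ) = 0 := by
    rw [hvtxval 0 le_rfl (by omega)]
    norm_num
  have hvtxN : ((vtx ((N:ℤ)) : I) : ℝ) = 1 := by
    rw [hvtxval (N:ℤ) (by omega) le_rfl]
    push_cast
    exact div_self (ne_of_gt hNpos)
  have hptx : Gm (vtx 1, vtx 0) = x := by
    apply hGleft
    show ((vtx (0:ℤ) : I) : ℝ) ≤ 1/4
    rw [hvtx0]
    norm_num
  have hpty : Gm (vtx 1, vtx ((N:ℤ))) = y := by
    apply hGright
    show (3:ℝ)/4 ≤ ((vtx ((N:ℤ)) : I) : ℝ)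
    rw [hvtxN]
    norm_num
  have hdivle : ∀ u v : ℝ, u ≤ v → u/(N:ℝ) ≤ v/(N:ℝ) := by
    intro u v h
    gcongr
  have hproj_eq_vtx : ∀ (r : ℝ) (c : ℤ), r = (c:ℝ)/N →
      Set.projIcc (0:ℝ) 1 zero_le_one r = vtx c := by
    intro r c hr
    rw [hvtx, hr]
  -- a vertical interface edge gives a joining path
  have keyV : ∀ i b : ℤ, 0 ≤ i → i + 1 ≤ (N:ℤ) → 1 ≤ b → b ≤ (N:ℤ) - 1 →
      ¬ (R i (b-1) ↔ R i b) → JoinedIn (U ∩ V) (Gm (vtx i, vtx b)) (Gm (vtx (i+1), vtx b)) := by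
    intro i b hi0 hi1 hb1 hb2 hdiff
    have hgood : goodV i b := by
      by_contra hng
      by_cases hr : R i (b-1)
      · have hnr : ¬ R i b := fun h => hdiff (iff_of_true hr h)
        apply hnr
        rw [hRdef] at hr ⊢
        obtain ⟨j₀, h0, h1, hrtg⟩ := hr
        refine ⟨j₀, h0, h1, hrtg.tail ?_⟩
        exact ⟨⟨by omega, by omega, by omega, by omega⟩, Or.inl ⟨rfl, by omega, hng⟩⟩
      · have hrb : R i b := by
          by_contra hnb
          exact hdiff (iff_of_false hr hnb)
        apply hr
        rw [hRdef] at hrb ⊢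
        obtain ⟨j₀, h0, h1, hrtg⟩ := hrb
        refine ⟨j₀, h0, h1, hrtg.tail ?_⟩
        exact ⟨⟨by omega, by omega, by omega, by omega⟩, Or.inr (Or.inl ⟨rfl, by omega, hng⟩)⟩
    have hiN : (i:ℝ) + 1 ≤ (N:ℝ) := by exact_mod_cast hi1
    have hi0' : (0:ℝ) ≤ (i:ℝ) := by exact_mod_cast hi0
    have hmem1 : ∀ t : I, ((i:ℝ) + (t:ℝ))/N ∈ Set.Icc (0:ℝ) 1 := by
      intro t
      constructor
      · apply div_nonneg ?_ (le_of_lt hNpos)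
        have := t.2.1
        linarith
      · rw [div_le_one hNpos]
        have := t.2.2
        linarith
    set f : I → I × I := fun t => (Set.projIcc (0:ℝ) 1 zero_le_one (((i:ℝ) + (t:ℝ))/N), vtx b)
      with hf
    have hfval : ∀ t : I, (((f t).1 : I) : ℝ) = ((i:ℝ) + (t:ℝ))/N := by
      intro t
      rw [hf]
      dsimp only
      rw [Set.projIcc_of_mem _ (hmem1 t)]
    have hfcont : Continuous f := by
      apply Continuous.prodMk ?_ continuous_const
      apply continuous_projIcc.comp
      exact (continuous_const.add continuous_subtype_val).div_const _
    have hsrc : f 0 = (vtx i, vtx b) := by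
      rw [hf]
      dsimp only
      rw [hproj_eq_vtx _ i (by rw [Set.Icc.coe_zero]; ring)]
    have htgt : f 1 = (vtx (i+1), vtx b) := by
      rw [hf]
      dsimp only
      rw [hproj_eq_vtx _ (i+1) (by rw [Set.Icc.coe_one]; push_cast; ring)]
    refine ⟨(Path.mk ⟨f, hfcont⟩ hsrc htgt).map hGmCont, ?_⟩
    intro t
    show Gm (f t) ∈ U ∩ V
    apply hgood
    · rw [hfval t]
      apply hdivle
      have := t.2.1
      linarith
    · rw [hfval t]
      apply hdivle
      have := t.2.2
      linarith
    · show ((vtx b : I) : ℝ) = (b:ℝ)/N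
      exact hvtxval b (by omega) (by omega)
  -- a horizontal interface edge gives a joining path
  have keyH : ∀ a j : ℤ, 1 ≤ a → a ≤ (N:ℤ) - 1 → 0 ≤ j → j + 1 ≤ (N:ℤ) →
      ¬ (R (a-1) j ↔ R a j) → JoinedIn (U ∩ V) (Gm (vtx a, vtx j)) (Gm (vtx a, vtx (j+1))) := by
    intro a j ha1 ha2 hj0 hj1 hdiff
    have hgood : goodH a j := by
      by_contra hng
      by_cases hr : R (a-1) j
      · have hnr : ¬ R a j := fun h => hdiff (iff_of_true hr h)
        apply hnr
        rw [hRdef] at hr ⊢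
        obtain ⟨j₀, h0, h1, hrtg⟩ := hr
        refine ⟨j₀, h0, h1, hrtg.tail ?_⟩
        exact ⟨⟨by omega, by omega, by omega, by omega⟩,
          Or.inr (Or.inr (Or.inl ⟨rfl, by omega, hng⟩))⟩
      · have hrb : R a j := by
          by_contra hnb
          exact hdiff (iff_of_false hr hnb)
        apply hr
        rw [hRdef] at hrb ⊢
        obtain ⟨j₀, h0, h1, hrtg⟩ := hrb
        refine ⟨j₀, h0, h1, hrtg.tail ?_⟩
        exact ⟨⟨by omega, by omega, by omega, by omega⟩,
          Or.inr (Or.inr (Or.inr ⟨rfl, by omega, hng⟩))⟩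
    have hjN : (j:ℝ) + 1 ≤ (N:ℝ) := by exact_mod_cast hj1
    have hj0' : (0:ℝ) ≤ (j:ℝ) := by exact_mod_cast hj0
    have hmem1 : ∀ t : I, ((j:ℝ) + (t:ℝ))/N ∈ Set.Icc (0:ℝ) 1 := by
      intro t
      constructor
      · apply div_nonneg ?_ (le_of_lt hNpos)
        have := t.2.1
        linarith
      · rw [div_le_one hNpos]
        have := t.2.2
        linarith
    set f : I → I × I := fun t => (vtx a, Set.projIcc (0:ℝ) 1 zero_le_one (((j:ℝ) + (t:ℝ))/N))
      with hf
    have hfval : ∀ t : I, (((f t).2 : I) : ℝ) = ((j:ℝ) + (t:ℝ))/N := by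
      intro t
      rw [hf]
      dsimp only
      rw [Set.projIcc_of_mem _ (hmem1 t)]
    have hfcont : Continuous f := by
      apply Continuous.prodMk continuous_const
      apply continuous_projIcc.comp
      exact (continuous_const.add continuous_subtype_val).div_const _
    have hsrc : f 0 = (vtx a, vtx j) := by
      rw [hf]
      dsimp only
      rw [hproj_eq_vtx _ j (by rw [Set.Icc.coe_zero]; ring)]
    have htgt : f 1 = (vtx a, vtx (j+1)) := by
      rw [hf]
      dsimp only
      rw [hproj_eq_vtx _ (j+1) (by rw [Set.Icc.coe_one]; push_cast; ring)]
    refine ⟨(Path.mk ⟨f, hfcont⟩ hsrc htgt).map hGmCont, ?_⟩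
    intro t
    show Gm (f t) ∈ U ∩ V
    apply hgood
    · show ((vtx a : I) : ℝ) = (a:ℝ)/N
      exact hvtxval a (by omega) (by omega)
    · rw [hfval t]
      apply hdivle
      have := t.2.1
      linarith
    · rw [hfval t]
      apply hdivle
      have := t.2.2
      linarith
  -- each good step is a join
  have hstepJ : ∀ w u : ℤ × ℤ, GoodStep N R w u →
      JoinedIn (U ∩ V) (Gm (vtx w.1, vtx w.2)) (Gm (vtx u.1, vtx u.2)) := by
    rintro ⟨a, b⟩ ⟨a', b'⟩ ⟨hwbox, hubox, hcase⟩
    dsimp only at hwbox hubox hcase ⊢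
    rcases hcase with ⟨e2, hb1, hb2, ⟨e1, hdiff⟩ | ⟨e1, hdiff⟩⟩
      | ⟨e1, ha1, ha2, ⟨e2, hdiff⟩ | ⟨e2, hdiff⟩⟩
    · rw [e2, e1]
      exact keyV a b (by omega) (by omega) hb1 hb2 hdiff
    · rw [e2, e1]
      exact (keyV a' b (by omega) (by omega) hb1 hb2 hdiff).symm
    · rw [e1, e2]
      exact keyH a b ha1 ha2 (by omega) (by omega) hdiff
    · rw [e1, e2]
      exact (keyH a b' ha1 ha2 (by omega) (by omega) hdiff).symm
  -- walk the combinatorial path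
  have hxyUV : x ∈ U ∩ V := ⟨hxU, hxV⟩
  have hwalk : ∀ u : ℤ × ℤ, Relation.ReflTransGen (GoodStep N R) (1, 0) u →
      JoinedIn (U ∩ V) x (Gm (vtx u.1, vtx u.2)) := by
    intro u h
    induction h with
    | refl =>
      show JoinedIn (U ∩ V) x (Gm (vtx 1, vtx 0))
      rw [hptx]
      exact JoinedIn.refl hxyUV
    | tail hmid hst ih =>
      exact ih.trans (hstepJ _ _ hst)
  have hfin := hwalk (1, (N:ℤ)) hcomb
  show JoinedIn (U ∩ V) x y
  rw [← hpty]
  exact hfin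

end Jan

end ArcComp
namespace ArcComp

section SpherePart

variable {E : Type*} [NormedAddCommGroup E] [InnerProductSpace ℝ E]

lemma sphere_compl_contractible (p : Metric.sphere (0:E) 1) :
    ContractibleSpace ↥({p}ᶜ : Set (Metric.sphere (0:E) 1)) := by
  have hv : ‖(p : E)‖ = 1 := norm_eq_of_mem_sphere p
  have hp : (⟨(p : E), by simp [hv]⟩ : Metric.sphere (0:E) 1) = p := Subtype.ext rfl
  have hsrc : (stereographic hv).source = ({p}ᶜ : Set (Metric.sphere (0:E) 1)) := by
    rw [stereographic_source]
  have e1 : ↥({p}ᶜ : Set (Metric.sphere (0:E) 1)) ≃ₜ ↥(stereographic hv).target :=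
    (Homeomorph.setCongr hsrc.symm).trans (stereographic hv).toHomeomorphSourceTarget
  have e2 : ↥({p}ᶜ : Set (Metric.sphere (0:E) 1)) ≃ₜ ((ℝ ∙ (p:E))ᗮ : Submodule ℝ E) :=
    e1.trans ((Homeomorph.setCongr (stereographic_target hv)).trans (Homeomorph.Set.univ _))
  exact e2.contractibleSpace

lemma sphere_compl_isPathConnected (p : Metric.sphere (0:E) 1) :
    IsPathConnected ({p}ᶜ : Set (Metric.sphere (0:E) 1)) := by
  haveI := sphere_compl_contractible p
  rw [isPathConnected_iff_pathConnectedSpace]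
  infer_instance

lemma arc_aux (A : Set (Metric.sphere (0:E) 1)) (h : A ≃ₜ unitInterval) :
    IsPathConnected Aᶜ := by
  classical
  set e : unitInterval → (Metric.sphere (0:E) 1) :=
    fun t => ((h.symm t : A) : (Metric.sphere (0:E) 1)) with he
  have hecont : Continuous e := continuous_subtype_val.comp h.symm.continuous
  have heinj : Function.Injective e := by
    intro t1 t2 h12
    exact h.symm.injective (Subtype.coe_injective h12)
  have herange : ∀ t, e t ∈ A := fun t => (h.symm t).2
  set K : ℝ → ℝ → Set (Metric.sphere (0:E) 1) := fun a b => e '' {t : unitInterval | a ≤ (t:ℝ) ∧ (t:ℝ) ≤ b} with hK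
  have hKcompact : ∀ a b : ℝ, IsCompact (K a b) := by
    intro a b
    apply IsCompact.image ?_ hecont
    apply IsClosed.isCompact
    have : {t : unitInterval | a ≤ (t:ℝ) ∧ (t:ℝ) ≤ b} =
        (Subtype.val : unitInterval → ℝ) ⁻¹' (Set.Icc a b) := rfl
    rw [this]
    exact isClosed_Icc.preimage continuous_subtype_val
  have hKclosed : ∀ a b : ℝ, IsClosed (K a b) := fun a b => (hKcompact a b).isClosed
  have hKsubA : ∀ a b : ℝ, K a b ⊆ A := by
    rintro a b s ⟨t, _, rfl⟩
    exact herange t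
  have hKmono : ∀ a b a' b' : ℝ, a' ≤ a → b ≤ b' → K a b ⊆ K a' b' := by
    rintro a b a' b' ha hb s ⟨t, ⟨h1, h2⟩, rfl⟩
    exact ⟨t, ⟨le_trans ha h1, le_trans h2 hb⟩, rfl⟩
  have hKA : K 0 1 = A := by
    ext s
    constructor
    · rintro ⟨t, _, rfl⟩
      exact herange t
    · intro hs
      refine ⟨h ⟨s, hs⟩, ⟨(h ⟨s, hs⟩).2.1, (h ⟨s, hs⟩).2.2⟩, ?_⟩
      rw [he]
      dsimp only
      rw [h.symm_apply_apply]
  -- Janiszewski bisection step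
  have hstep : ∀ x y : (Metric.sphere (0:E) 1), x ∈ Aᶜ → y ∈ Aᶜ → ∀ a b : ℝ, 0 ≤ a → a ≤ b → b ≤ 1 →
      ¬ JoinedIn (K a b)ᶜ x y →
      ¬ JoinedIn (K a ((a+b)/2))ᶜ x y ∨ ¬ JoinedIn (K ((a+b)/2) b)ᶜ x y := by
    intro x y hx hy a b h0 hab h1 hJ
    by_contra hcon
    push_neg at hcon
    obtain ⟨hJ1, hJ2⟩ := hcon
    apply hJ
    set m : ℝ := (a+b)/2 with hm
    have ham : a ≤ m := by rw [hm]; linarith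
    have hmb : m ≤ b := by rw [hm]; linarith
    have hm0 : 0 ≤ m := le_trans h0 ham
    have hm1 : m ≤ 1 := le_trans hmb h1
    set mI : unitInterval := ⟨m, hm0, hm1⟩ with hmI
    set pt : (Metric.sphere (0:E) 1) := e mI with hpt
    have hUopen : IsOpen (K a m)ᶜ := (hKclosed a m).isOpen_compl
    have hVopen : IsOpen (K m b)ᶜ := (hKclosed m b).isOpen_compl
    have hUV : (K a m)ᶜ ∪ (K m b)ᶜ = ({pt}ᶜ : Set (Metric.sphere (0:E) 1)) := by
      rw [← Set.compl_inter]
      congr 1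
      ext s
      constructor
      · rintro ⟨⟨t1, ⟨h11, h12⟩, rfl⟩, ⟨t2, ⟨h21, h22⟩, hee⟩⟩
        have ht : t2 = t1 := heinj hee
        subst ht
        have : (t2 : ℝ) = m := le_antisymm h12 h21
        have ht2 : t2 = mI := Subtype.ext this
        rw [ht2]
        rfl
      · rintro rfl
        exact ⟨⟨mI, ⟨ham, le_rfl⟩, rfl⟩, ⟨mI, ⟨le_rfl, hmb⟩, rfl⟩⟩
    have hcap : (K a m)ᶜ ∩ (K m b)ᶜ = (K a b)ᶜ := by
      rw [← Set.compl_union]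
      congr 1
      ext s
      constructor
      · rintro (⟨t, ⟨h1', h2'⟩, rfl⟩ | ⟨t, ⟨h1', h2'⟩, rfl⟩)
        · exact ⟨t, ⟨h1', le_trans h2' hmb⟩, rfl⟩
        · exact ⟨t, ⟨le_trans ham h1', h2'⟩, rfl⟩
      · rintro ⟨t, ⟨h1', h2'⟩, rfl⟩
        by_cases hc : (t:ℝ) ≤ m
        · exact Or.inl ⟨t, ⟨h1', hc⟩, rfl⟩
        · exact Or.inr ⟨t, ⟨le_of_not_ge hc, h2'⟩, rfl⟩
    have hxU : x ∈ (K a m)ᶜ := fun hk => hx (hKsubA _ _ hk)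
    have hxV : x ∈ (K m b)ᶜ := fun hk => hx (hKsubA _ _ hk)
    have hyU : y ∈ (K a m)ᶜ := fun hk => hy (hKsubA _ _ hk)
    have hyV : y ∈ (K m b)ᶜ := fun hk => hy (hKsubA _ _ hk)
    haveI := ArcComp.sphere_compl_contractible pt
    have := ArcComp.jan pt inferInstance hUopen hVopen hUV hxU hxV hyU hyV hJ1 hJ2
    rwa [hcap] at this
  -- nonemptiness of the complement
  have hAcne : Aᶜ.Nonempty := by
    by_contra hne
    rw [Set.not_nonempty_iff_eq_empty, ← Set.compl_univ, compl_inj_iff] at hne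
    set mI : unitInterval := ⟨1/2, by norm_num, by norm_num⟩ with hmI
    set pt : (Metric.sphere (0:E) 1) := e mI with hpt
    have hpc := (ArcComp.sphere_compl_isPathConnected pt).isConnected.isPreconnected
    have hKhalf : K 0 (1/2) ∪ K (1/2) 1 = Set.univ := by
      rw [← hne, ← hKA]
      ext s
      constructor
      · rintro (⟨t, ⟨h1', h2'⟩, rfl⟩ | ⟨t, ⟨h1', h2'⟩, rfl⟩)
        · exact ⟨t, ⟨h1', le_trans h2' (by norm_num)⟩, rfl⟩
        · exact ⟨t, ⟨le_trans (by norm_num) h1', h2'⟩, rfl⟩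
      · rintro ⟨t, ⟨h1', h2'⟩, rfl⟩
        by_cases hc : (t:ℝ) ≤ 1/2
        · exact Or.inl ⟨t, ⟨h1', hc⟩, rfl⟩
        · exact Or.inr ⟨t, ⟨le_of_not_ge hc, h2'⟩, rfl⟩
    have hepc : e ⟨0, le_rfl, zero_le_one⟩ ∈ ({pt}ᶜ : Set (Metric.sphere (0:E) 1)) := by
      intro hc
      have : (⟨0, le_rfl, zero_le_one⟩ : unitInterval) = mI := heinj hc
      rw [Subtype.ext_iff] at this
      norm_num [hmI] at this
    have hepc1 : e ⟨1, zero_le_one, le_rfl⟩ ∈ ({pt}ᶜ : Set (Metric.sphere (0:E) 1)) := by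
      intro hc
      have : (⟨1, zero_le_one, le_rfl⟩ : unitInterval) = mI := heinj hc
      rw [Subtype.ext_iff] at this
      norm_num [hmI] at this
    have hsep := hpc ((K (1/2) 1)ᶜ) ((K 0 (1/2))ᶜ)
      (hKclosed _ _).isOpen_compl (hKclosed _ _).isOpen_compl
      (by
        intro s hs
        by_cases hc : s ∈ K (1/2) 1
        · right
          intro hk
          obtain ⟨t1, ⟨h11, h12⟩, rfl⟩ := hc
          obtain ⟨t2, ⟨h21, h22⟩, hee⟩ := hk
          have ht : t2 = t1 := heinj hee
          subst ht
          have h12' : (t2:ℝ) = 1/2 := le_antisymm h22 h11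
          apply hs
          rw [hpt, Set.mem_singleton_iff]
          exact congrArg e (Subtype.ext h12')
        · left; exact hc)
      ⟨e ⟨0, le_rfl, zero_le_one⟩, hepc, by
        intro hk
        obtain ⟨t, ⟨h1', h2'⟩, hee⟩ := hk
        have ht : t = (⟨0, le_rfl, zero_le_one⟩ : unitInterval) := heinj hee
        have h0 : (t:ℝ) = 0 := congrArg Subtype.val ht
        rw [h0] at h1'
        norm_num at h1'⟩
      ⟨e ⟨1, zero_le_one, le_rfl⟩, hepc1, by
        intro hk
        obtain ⟨t, ⟨h1', h2'⟩, hee⟩ := hk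
        have ht : t = (⟨1, zero_le_one, le_rfl⟩ : unitInterval) := heinj hee
        have h0 : (t:ℝ) = 1 := congrArg Subtype.val ht
        rw [h0] at h2'
        norm_num at h2'⟩
    obtain ⟨s, hs1, hs2, hs3⟩ := hsep
    have : s ∈ K 0 (1/2) ∪ K (1/2) 1 := hKhalf ▸ Set.mem_univ s
    rcases this with hks | hks
    · exact hs3 hks
    · exact hs2 hks
  -- main bisection argument
  have hmain : ∀ x y : (Metric.sphere (0:E) 1), x ∈ Aᶜ → y ∈ Aᶜ → JoinedIn Aᶜ x y := by
    intro x y hx hy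
    by_contra hJ
    rw [← hKA] at hJ
    -- iterated bisection
    set Q := {q : ℝ × ℝ // 0 ≤ q.1 ∧ q.1 ≤ q.2 ∧ q.2 ≤ 1 ∧ ¬ JoinedIn (K q.1 q.2)ᶜ x y} with hQ
    set T : Q → Q := fun q =>
      if hc : ¬ JoinedIn (K q.1.1 ((q.1.1 + q.1.2)/2))ᶜ x y
      then ⟨(q.1.1, (q.1.1 + q.1.2)/2),
        ⟨q.2.1, by have := q.2.2.1; dsimp only; linarith,
          by have h1 := q.2.2.1; have h2 := q.2.2.2.1; dsimp only; linarith, hc⟩⟩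
      else ⟨((q.1.1 + q.1.2)/2, q.1.2),
        ⟨by have h0 := q.2.1; have h1 := q.2.2.1; dsimp only; linarith,
          by have := q.2.2.1; dsimp only; linarith, q.2.2.2.1, by
            rcases hstep x y hx hy q.1.1 q.1.2 q.2.1 q.2.2.1 q.2.2.2.1 q.2.2.2.2 with hL | hR
            · exact absurd hL hc
            · exact hR⟩⟩ with hT
    set f : ℕ → Q := fun k => T^[k] ⟨(0, 1), ⟨le_rfl, zero_le_one, le_rfl, hJ⟩⟩ with hf
    have hfsucc : ∀ k, f (k+1) = T (f k) := by
      intro k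
      rw [hf]
      exact Function.iterate_succ_apply' T k _
    have hTle : ∀ q : Q, q.1.1 ≤ (T q).1.1 ∧ (T q).1.2 ≤ q.1.2 ∧
        (T q).1.2 - (T q).1.1 = (q.1.2 - q.1.1)/2 := by
      intro q
      rw [hT]
      dsimp only
      by_cases hc : ¬ JoinedIn (K q.1.1 ((q.1.1 + q.1.2)/2))ᶜ x y
      · rw [dif_pos hc]
        have := q.2.2.1
        constructor
        · exact le_rfl
        constructor
        · dsimp only; linarith
        · dsimp only; ring
      · rw [dif_neg hc]
        have := q.2.2.1
        constructor
        · dsimp only; linarith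
        constructor
        · exact le_rfl
        · dsimp only; ring
    set aseq : ℕ → ℝ := fun k => (f k).1.1 with haseq
    set bseq : ℕ → ℝ := fun k => (f k).1.2 with hbseq
    have hwidth : ∀ k, bseq k - aseq k = (1/2)^k := by
      intro k
      induction k with
      | zero =>
        show (1:ℝ) - (0:ℝ) = (1/2:ℝ)^0
        norm_num
      | succ k ih =>
        show (f (k+1)).1.2 - (f (k+1)).1.1 = (1/2:ℝ)^(k+1)
        rw [hfsucc k, (hTle (f k)).2.2]
        have ih' : (f k).1.2 - (f k).1.1 = (1/2:ℝ)^k := ih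
        rw [ih']
        ring
    have hamono : Monotone aseq := by
      apply monotone_nat_of_le_succ
      intro k
      show (f k).1.1 ≤ (f (k+1)).1.1
      rw [hfsucc k]
      exact (hTle (f k)).1
    have hbanti : Antitone bseq := by
      apply antitone_nat_of_succ_le
      intro k
      show (f (k+1)).1.2 ≤ (f k).1.2
      rw [hfsucc k]
      exact (hTle (f k)).2.1
    have hab : ∀ k, aseq k ≤ bseq k := fun k => (f k).2.2.1
    have ha0 : ∀ k, 0 ≤ aseq k := fun k => (f k).2.1
    have hb1 : ∀ k, bseq k ≤ 1 := fun k => (f k).2.2.2.1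
    have hbdd : BddAbove (Set.range aseq) := by
      refine ⟨1, ?_⟩
      rintro r ⟨k, rfl⟩
      exact le_trans (hab k) (hb1 k)
    set ts : ℝ := ⨆ k, aseq k with hts
    have hats : ∀ k, aseq k ≤ ts := fun k => le_ciSup hbdd k
    have htsb : ∀ k, ts ≤ bseq k := by
      intro k
      apply ciSup_le
      intro m
      calc aseq m ≤ aseq (max m k) := hamono (le_max_left m k)
        _ ≤ bseq (max m k) := hab _
        _ ≤ bseq k := hbanti (le_max_right m k)
    have hts0 : 0 ≤ ts := le_trans (ha0 0) (hats 0)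
    have hts1 : ts ≤ 1 := le_trans (htsb 0) (hb1 0)
    set tI : unitInterval := ⟨ts, hts0, hts1⟩ with htI
    set pt : (Metric.sphere (0:E) 1) := e tI with hptdef
    have hxp : x ∈ ({pt}ᶜ : Set (Metric.sphere (0:E) 1)) := fun hc => hx (by rw [Set.mem_singleton_iff] at hc; rw [hc]; exact herange tI)
    have hyp : y ∈ ({pt}ᶜ : Set (Metric.sphere (0:E) 1)) := fun hc => hy (by rw [Set.mem_singleton_iff] at hc; rw [hc]; exact herange tI)
    obtain ⟨γ, hγ⟩ := (ArcComp.sphere_compl_isPathConnected pt).joinedIn x hxp y hyp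
    -- the compact sets K (aseq k) (bseq k) ∩ range γ
    set C : ℕ → Set (Metric.sphere (0:E) 1) := fun k => K (aseq k) (bseq k) ∩ Set.range γ with hC
    have hCnonempty : ∀ k, (C k).Nonempty := by
      intro k
      by_contra hne
      rw [Set.not_nonempty_iff_eq_empty] at hne
      apply (f k).2.2.2.2
      refine ⟨γ, ?_⟩
      intro t
      intro hkk
      have : γ t ∈ C k := ⟨hkk, ⟨t, rfl⟩⟩
      rw [hne] at this
      exact this
    have hCdec : ∀ k, C (k+1) ⊆ C k := by
      intro k
      apply Set.inter_subset_inter_left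
      apply hKmono
      · show (f k).1.1 ≤ (f (k+1)).1.1
        rw [hfsucc k]
        exact (hTle (f k)).1
      · show (f (k+1)).1.2 ≤ (f k).1.2
        rw [hfsucc k]
        exact (hTle (f k)).2.1
    have hCcompact : ∀ k, IsCompact (C k) := by
      intro k
      apply (hKcompact _ _).inter_right
      exact (isCompact_range γ.continuous).isClosed
    have hCclosed : ∀ k, IsClosed (C k) := fun k => (hCcompact k).isClosed
    obtain ⟨s, hsmem⟩ := IsCompact.nonempty_iInter_of_sequence_nonempty_isCompact_isClosed
      C hCdec hCnonempty (hCcompact 0) hCclosed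
    rw [Set.mem_iInter] at hsmem
    -- s must be pt
    obtain ⟨t0, ⟨ht01, ht02⟩, ht0e⟩ := (hsmem 0).1
    have htk : ∀ k, aseq k ≤ (t0:ℝ) ∧ (t0:ℝ) ≤ bseq k := by
      intro k
      obtain ⟨tk, ⟨h1', h2'⟩, htke⟩ := (hsmem k).1
      have : tk = t0 := heinj (htke.trans ht0e.symm)
      rw [← this]
      exact ⟨h1', h2'⟩
    have ht0ts : (t0:ℝ) = ts := by
      have hbound : ∀ k : ℕ, |(t0:ℝ) - ts| ≤ (1/2)^k := by
        intro k
        rw [abs_le]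
        have h1' := (htk k).1
        have h2' := (htk k).2
        have h3' := hats k
        have h4' := htsb k
        have h5' := hwidth k
        constructor <;> linarith
      have hlim : Filter.Tendsto (fun k : ℕ => ((1:ℝ)/2)^k) Filter.atTop (nhds 0) := by
        apply tendsto_pow_atTop_nhds_zero_of_lt_one <;> norm_num
      have : |(t0:ℝ) - ts| ≤ 0 :=
        le_of_tendsto_of_tendsto' tendsto_const_nhds hlim hbound
      have := abs_nonpos_iff.mp this
      linarith [sub_eq_zero.mp this]
    have hspt : s = pt := by
      rw [← ht0e, hptdef]
      exact congrArg e (Subtype.ext ht0ts)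
    obtain ⟨u, hu⟩ := (hsmem 0).2
    apply hγ u
    rw [hu, hspt]
    rfl
  obtain ⟨x, hx⟩ := hAcne
  exact ⟨x, hx, fun y hy => hmain x y hx hy⟩


end SpherePart

end ArcComp

theorem arc_complement_pathConnected_sphere (n : ℕ) (hn : 2 ≤ n)
    (A : Set (Metric.sphere (0 : EuclideanSpace ℝ (Fin (n + 1))) 1))
    (hA : Nonempty (A ≃ₜ unitInterval)) :
    IsPathConnected Aᶜ :=
  ArcComp.arc_aux A hA.some
end

section
/- The complement of any arc in S¹ is homeomorphic to an open interval; in particular, if A ⊊ S¹ is homeomorphic to [0,1] then S¹ \ A is path-connected. -/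
/-!
Cut the circle `AddCircle p` open at a point `↑s` outside the arc `K`: the chart
`(s, s + p) ≃ₜ {↑s}ᶜ` carries `K` to a compact connected subset of `(s, s + p)`, that is, to an
interval `[c, d]` with `d < c + p`. Since `[c, c + p)` maps bijectively onto the circle, the
complement of `K` is the image of `(d, c + p)`, an interval of length less than `p`, on which the
quotient map `ℝ → AddCircle p` is a homeomorphism onto its image. The unit circle in `ℂ` is
`AddCircle (2π)` via `t ↦ exp (i t)`.
-/

open Set

section Interval

variable {𝕜 : Type*} [Field 𝕜] [LinearOrder 𝕜] [IsStrictOrderedRing 𝕜] [TopologicalSpace 𝕜]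
  [IsTopologicalRing 𝕜]

noncomputable def iooHomeoIooZeroOne (a b : 𝕜) (h : a < b) : Ioo a b ≃ₜ Ioo (0 : 𝕜) 1 :=
  (((affineHomeomorph (b - a) a (sub_pos.2 h).ne').image _).trans <|
    .setCongr <| by rw [affineHomeomorph_image_Ioo _ _ _ _ (sub_pos.2 h)]; simp).symm

end Interval

namespace AddCircle

variable {p : ℝ} [Fact (0 < p)]

theorem exists_eq_image_Icc_of_ne_univ {K : Set (AddCircle p)} (hK : IsCompact K)
    (hKc : IsConnected K) (hne : K ≠ univ) :
    ∃ c d : ℝ, c ≤ d ∧ d < c + p ∧ K = (↑) '' Icc c d := by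
  obtain ⟨x, hx⟩ := (ne_univ_iff_exists_notMem K).1 hne
  obtain ⟨s, rfl⟩ := QuotientAddGroup.mk_surjective x
  set e := openPartialHomeomorphCoe p s
  have hKt : K ⊆ e.target := fun y hy hys => hx (hys ▸ hy)
  set L := e.symm '' K
  have hLs : L ⊆ Ioo s (s + p) := image_subset_iff.2 fun y hy => e.mapsTo_symm (hKt hy)
  have hL : L = Icc (sInf L) (sSup L) :=
    eq_Icc_of_connected_compact (hKc.image _ (e.continuousOn_symm.mono hKt))
      (hK.image_of_continuousOn (e.continuousOn_symm.mono hKt))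
  have hcd : sInf L ≤ sSup L := nonempty_Icc.1 (hL ▸ hKc.nonempty.image _)
  have hc := hLs (hL.symm.subset (left_mem_Icc.2 hcd))
  have hd := hLs (hL.symm.subset (right_mem_Icc.2 hcd))
  refine ⟨sInf L, sSup L, hcd, by linarith [hc.1, hd.2], ?_⟩
  rw [← hL]
  exact (e.image_symm_image_of_subset_target hKt).symm

theorem compl_image_Icc {c d : ℝ} (hcd : c ≤ d) (hdc : d < c + p) :
    ((↑) '' Icc c d : Set (AddCircle p))ᶜ = (↑) '' Ioo d (c + p) := by
  have hinj : InjOn ((↑) : ℝ → AddCircle p) (Ico c (c + p)) :=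
    fun x hx y hy => (coe_eq_coe_iff_of_mem_Ico hx hy).1
  rw [compl_eq_univ_sdiff, ← coe_image_Ico_eq p c,
    ← hinj.image_sdiff_subset (Icc_subset_Ico_right hdc)]
  congr 1
  ext t
  simp only [mem_sdiff, mem_Ico, mem_Icc, mem_Ioo]
  constructor
  · rintro ⟨⟨hct, htp⟩, hn⟩
    exact ⟨lt_of_not_ge fun htd => hn ⟨hct, htd⟩, htp⟩
  · rintro ⟨hdt, htp⟩
    exact ⟨⟨by linarith, htp⟩, fun h => by linarith [h.2]⟩

noncomputable def homeomorphImageIoo {a b : ℝ} (h : b ≤ a + p) :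
    Ioo a b ≃ₜ ((↑) '' Ioo a b : Set (AddCircle p)) :=
  (openPartialHomeomorphCoe p a).homeomorphOfImageSubsetSource (Ioo_subset_Ioo_right h) rfl

theorem nonempty_homeomorph_compl_Ioo {K : Set (AddCircle p)} (hK : IsCompact K)
    (hKc : IsConnected K) (hne : K ≠ univ) : Nonempty (↥Kᶜ ≃ₜ Ioo (0 : ℝ) 1) := by
  obtain ⟨c, d, hcd, hdc, rfl⟩ := exists_eq_image_Icc_of_ne_univ hK hKc hne
  rw [compl_image_Icc hcd hdc]
  exact ⟨(homeomorphImageIoo (by linarith)).symm.trans (iooHomeoIooZeroOne _ _ hdc)⟩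

end AddCircle

theorem arc_complement_in_circle
    (A : Set (Metric.sphere (0 : ℂ) 1))
    (hA : Nonempty (A ≃ₜ unitInterval)) (hne : A ≠ Set.univ) :
    Nonempty ((Aᶜ : Set (Metric.sphere (0 : ℂ) 1)) ≃ₜ Set.Ioo (0 : ℝ) 1) ∧
    IsPathConnected Aᶜ := by
  obtain ⟨h⟩ := hA
  have : Fact (0 < 2 * Real.pi) := ⟨Real.two_pi_pos⟩
  let Φ : Metric.sphere (0 : ℂ) 1 ≃ₜ AddCircle (2 * Real.pi) := AddCircle.homeomorphCircle'.symm
  have hAcpt : IsCompact A := isCompact_iff_compactSpace.2 h.symm.compactSpace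
  have hAconn : IsConnected A :=
    isConnected_iff_connectedSpace.2 (h.symm.surjective.connectedSpace h.symm.continuous)
  obtain ⟨ψ⟩ := AddCircle.nonempty_homeomorph_compl_Ioo (hAcpt.image Φ.continuous)
    (hAconn.image _ Φ.continuous.continuousOn)
    (by rwa [Ne, ← image_univ_of_surjective Φ.surjective, Φ.injective.image_injective.eq_iff])
  let e : (Aᶜ : Set (Metric.sphere (0 : ℂ) 1)) ≃ₜ Ioo (0 : ℝ) 1 :=
    (Φ.image Aᶜ).trans ((Homeomorph.setCongr (Φ.image_compl A)).trans ψ)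
  have : PathConnectedSpace (Ioo (0 : ℝ) 1) := isPathConnected_iff_pathConnectedSpace.1
    ((convex_Ioo 0 1).isPathConnected (nonempty_Ioo.2 zero_lt_one))
  exact ⟨⟨e⟩, isPathConnected_iff_pathConnectedSpace.2
    (e.symm.surjective.pathConnectedSpace e.symm.continuous)⟩
end

section
/- Let C be a simple closed curve in S² written as the union of two arcs A and B meeting exactly in two points. If the complement S² \ C is path-connected, then (with x ∈ S² \ C) the homomorphism π₁(S² \ A, x) → π₁(S² \ {a,b}, x) induced by inclusion is trivial, where {a,b} = A ∩ B. -/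
open Set

theorem aux_null {X : Type*} [TopologicalSpace X] [CompactSpace X] [T2Space X]
    {A : Set X} {a b x : X} (e : A ≃ₜ unitInterval) (h : ({a}ᶜ : Set X) ≃ₜ ℂ)
    (haA : a ∈ A) (hbA : b ∈ A) (hab : a ≠ b) (hxA : x ∉ A)
    (hsub : (Aᶜ : Set X) ⊆ ({a, b}ᶜ : Set X)) (hxab : x ∈ ({a, b}ᶜ : Set X))
    (γ : Path (⟨x, hxA⟩ : (Aᶜ : Set X)) (⟨x, hxA⟩ : (Aᶜ : Set X))) :
    (γ.map (continuous_inclusion hsub)).Homotopic (Path.refl (⟨x, hxab⟩ : ({a, b}ᶜ : Set X))) := by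
  classical
  have hba : b ∈ ({a}ᶜ : Set X) := by simpa using (Ne.symm hab)
  -- real parameters
  set sa : ℝ := (e ⟨a, haA⟩ : ℝ) with hsa_def
  set sb : ℝ := (e ⟨b, hbA⟩ : ℝ) with hsb_def
  have hsa_mem : sa ∈ Icc (0:ℝ) 1 := (e ⟨a, haA⟩).2
  have hsb_mem : sb ∈ Icc (0:ℝ) 1 := (e ⟨b, hbA⟩).2
  have hsab : sb ≠ sa := by
    intro hh
    apply hab
    have h1 : e ⟨b, hbA⟩ = e ⟨a, haA⟩ := Subtype.ext hh
    have h2 := e.injective h1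
    exact (congrArg Subtype.val h2).symm
  -- the curve π from b to a inside A
  set cmb : ℝ → ℝ := fun t => (1 - t) * sb + t * sa with hcmb_def
  have hcmb_mem : ∀ t ∈ Icc (0:ℝ) 1, cmb t ∈ Icc (0:ℝ) 1 := by
    intro t ht
    obtain ⟨h0, h1⟩ := ht
    obtain ⟨hb0, hb1⟩ := hsb_mem
    obtain ⟨ha0, ha1⟩ := hsa_mem
    constructor <;> simp only [hcmb_def] <;> nlinarith
  set π : ℝ → X := fun t => ((e.symm (projIcc 0 1 zero_le_one (cmb t)) : A) : X) with hπ_def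
  have hπcont : Continuous π := by
    apply continuous_subtype_val.comp
    apply e.symm.continuous.comp
    apply continuous_projIcc.comp
    fun_prop
  have hπA : ∀ t, π t ∈ A := fun t => (e.symm _).2
  have hπ0 : π 0 = b := by
    have h0 : cmb 0 = sb := by simp [hcmb_def]
    have : projIcc (0:ℝ) 1 zero_le_one (cmb 0) = e ⟨b, hbA⟩ := by
      rw [h0, projIcc_of_mem _ hsb_mem]
    simp only [hπ_def, this, Homeomorph.symm_apply_apply]
  have hπ1 : π 1 = a := by
    have h0 : cmb 1 = sa := by simp [hcmb_def]
    have : projIcc (0:ℝ) 1 zero_le_one (cmb 1) = e ⟨a, haA⟩ := by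
      rw [h0, projIcc_of_mem _ hsa_mem]
    simp only [hπ_def, this, Homeomorph.symm_apply_apply]
  have hπne : ∀ t ∈ Ico (0:ℝ) 1, π t ≠ a := by
    intro t ht heq
    have h1 : (e.symm (projIcc 0 1 zero_le_one (cmb t))) = (⟨a, haA⟩ : A) :=
      Subtype.ext heq
    have h2 : projIcc (0:ℝ) 1 zero_le_one (cmb t) = e ⟨a, haA⟩ := by
      have := congrArg e h1
      rwa [e.apply_symm_apply] at this
    have h3 : cmb t = sa := by
      have h4 := congrArg Subtype.val h2
      rwa [projIcc_of_mem _ (hcmb_mem t ⟨ht.1, ht.2.le⟩)] at h4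
    have h5 : (1 - t) * (sb - sa) = 0 := by
      have : cmb t - sa = (1 - t) * (sb - sa) := by simp [hcmb_def]; ring
      rw [h3] at this; linarith [this.symm]
    rcases mul_eq_zero.mp h5 with h6 | h6
    · linarith [ht.2]
    · exact hsab (by linarith)
  have hπmem : ∀ t ∈ Ico (0:ℝ) 1, π t ∈ ({a}ᶜ : Set X) := by
    intro t ht
    simpa using hπne t ht
  -- the loop F in ℂ
  set ι : (Aᶜ : Set X) → ({a}ᶜ : Set X) := fun y =>
    ⟨y.1, fun hy => y.2 (by rw [Set.eq_of_mem_singleton hy]; exact haA)⟩ with hι_def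
  have hιcont : Continuous ι := Continuous.subtype_mk continuous_subtype_val _
  set F : ℝ → ℂ := fun t => h (ι (γ.extend t)) with hF_def
  have hFcont : Continuous F := h.continuous.comp (hιcont.comp γ.continuous_extend)
  have hF01 : F 1 = F 0 := by
    simp only [hF_def, Path.extend_one, Path.extend_zero, Path.source, Path.target]
  -- bound on F
  obtain ⟨r, hr⟩ := ((isCompact_Icc.image hFcont).isBounded).subset_closedBall 0
  have hFb : ∀ t ∈ Icc (0:ℝ) 1, ‖F t‖ ≤ r := by
    intro t ht
    have := hr (Set.mem_image_of_mem F ht)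
    simpa [Metric.mem_closedBall, dist_zero_right] using this
  -- far point on the curve
  have hfar : ∃ y : ({a}ᶜ : Set X), (y : X) ∈ π '' (Ico 0 1) ∧ r < ‖h y‖ := by
    by_contra hcon
    push_neg at hcon
    set M : Set ({a}ᶜ : Set X) := h.symm '' (Metric.closedBall 0 r) with hM_def
    have hMcomp : IsCompact M := (isCompact_closedBall (0:ℂ) r).image h.symm.continuous
    have hW : IsCompact (Subtype.val '' M : Set X) := hMcomp.image continuous_subtype_val
    have hsubW : π '' Ico 0 1 ⊆ Subtype.val '' M := by
      rintro _ ⟨t, ht, rfl⟩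
      refine ⟨⟨π t, hπmem t ht⟩, ?_, rfl⟩
      refine ⟨h ⟨π t, hπmem t ht⟩, ?_, h.symm_apply_apply _⟩
      rw [Metric.mem_closedBall, dist_zero_right]
      exact hcon ⟨π t, hπmem t ht⟩ ⟨t, ht, rfl⟩
    have hclos : a ∈ closure (π '' Ico 0 1) := by
      have h1c : (1:ℝ) ∈ closure (Ico (0:ℝ) 1) := by
        rw [closure_Ico (by norm_num : (0:ℝ) ≠ 1)]
        exact ⟨zero_le_one, le_refl 1⟩
      have himg := image_closure_subset_closure_image hπcont (s := Ico (0:ℝ) 1)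
      have : π 1 ∈ closure (π '' Ico 0 1) := himg ⟨1, h1c, rfl⟩
      rwa [hπ1] at this
    have haW : a ∈ Subtype.val '' M :=
      (closure_minimal hsubW hW.isClosed) hclos
    obtain ⟨y, _, hy⟩ := haW
    exact y.2 (by rw [hy]; exact rfl)
  obtain ⟨yfar, ⟨t₁, ht₁, hπt₁⟩, hyfar⟩ := hfar
  -- the path c from p₀ to the far point z
  set m : ℝ → ℝ := fun s => max 0 (min s 1) with hm_def
  have hm0 : m 0 = 0 := by simp [hm_def]
  have hm1 : m 1 = 1 := by simp [hm_def]
  have hmmem : ∀ s, m s ∈ Icc (0:ℝ) 1 := by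
    intro s
    constructor
    · exact le_max_left _ _
    · simp [hm_def]
  have hmc : Continuous m := by fun_prop
  have harg : ∀ s, m s * t₁ ∈ Ico (0:ℝ) 1 := by
    intro s
    obtain ⟨hm0', hm1'⟩ := hmmem s
    obtain ⟨ht0, ht1⟩ := ht₁
    constructor
    · positivity
    · nlinarith
  set c : ℝ → ℂ := fun s => h ⟨π (m s * t₁), hπmem _ (harg s)⟩ with hc_def
  have hccont : Continuous c := by
    apply h.continuous.comp
    apply Continuous.subtype_mk
    exact hπcont.comp (by fun_prop)
  have hc0 : c 0 = h ⟨b, hba⟩ := by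
    simp only [hc_def]
    congr 1
    apply Subtype.ext
    simp only [hm0, zero_mul, hπ0]
  have hc1 : c 1 = h yfar := by
    simp only [hc_def]
    congr 1
    apply Subtype.ext
    simp only [hm1, one_mul]
    exact hπt₁
  have hcF : ∀ s t, F t ≠ c s := by
    intro s t heq
    have h1 := h.injective heq
    have hv : ((γ.extend t : (Aᶜ : Set X)) : X) = π (m s * t₁) := congrArg Subtype.val h1
    exact (γ.extend t).2 (hv ▸ hπA (m s * t₁))
  set p₀ : ℂ := h ⟨b, hba⟩ with hp₀_def
  set z : ℂ := h yfar with hz_def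
  set x₀ : ℂ := F 0 with hx₀_def
  have hx0r : ‖x₀‖ ≤ r := hFb 0 (by norm_num)
  have hzx : x₀ ≠ z := by rw [← hc1]; exact hcF 1 0
  have hp₀x : x₀ ≠ p₀ := by rw [← hc0]; exact hcF 0 0
  set d : ℂ := x₀ - p₀ with hd_def
  have hdne : d ≠ 0 := sub_ne_zero.mpr hp₀x
  have hzxne : x₀ - z ≠ 0 := sub_ne_zero.mpr hzx
  have hzr : r < ‖z‖ := hyfar
  -- the normalized homotopy in ℂ
  set N : ℝ × ℝ → ℂ := fun q =>
    if q.1 ≤ (1/2 : ℝ) then (F q.2 - c (2 * q.1)) * d / (x₀ - c (2 * q.1))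
    else (((1 - (2 * q.1 - 1) : ℝ) : ℂ) * F q.2 + ((2 * q.1 - 1 : ℝ) : ℂ) * x₀ - z) * d / (x₀ - z)
    with hN_def
  have hden1 : ∀ s : ℝ, x₀ - c s ≠ 0 := fun s => sub_ne_zero.mpr (hcF s 0)
  have hNcont : Continuous N := by
    apply Continuous.if_le
    · apply Continuous.div
      · exact ((hFcont.comp continuous_snd).sub
          (hccont.comp (continuous_const.mul continuous_fst))).mul continuous_const
      · exact continuous_const.sub (hccont.comp (continuous_const.mul continuous_fst))
      · intro q; exact hden1 (2 * q.1)
    · apply Continuous.div_const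
      apply Continuous.mul _ continuous_const
      apply Continuous.sub _ continuous_const
      apply Continuous.add
      · exact (Complex.continuous_ofReal.comp (by fun_prop)).mul (hFcont.comp continuous_snd)
      · exact (Complex.continuous_ofReal.comp (by fun_prop)).mul continuous_const
    · exact continuous_fst
    · exact continuous_const
    · intro q hq
      rw [hq]
      norm_num
      rw [hc1]
  -- boundary computations
  have hN0 : ∀ t : ℝ, N (0, t) = F t - p₀ := by
    intro t
    simp only [hN_def]
    rw [if_pos (by norm_num)]
    rw [mul_zero, hc0, ← hd_def]
    rw [mul_div_assoc, div_self hdne, mul_one]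
  have hN1 : ∀ t : ℝ, N (1, t) = d := by
    intro t
    simp only [hN_def]
    rw [if_neg (by norm_num)]
    norm_num
    rw [mul_comm, mul_div_assoc, div_self hzxne, mul_one]
  have hNs0 : ∀ s : ℝ, N (s, 0) = d := by
    intro s
    simp only [hN_def]
    split_ifs with hs
    · rw [← hx₀_def, mul_comm, mul_div_assoc, div_self (hden1 (2 * s)), mul_one]
    · rw [← hx₀_def]
      have : ((1 - (2 * s - 1) : ℝ) : ℂ) * x₀ + ((2 * s - 1 : ℝ) : ℂ) * x₀ - z = x₀ - z := by
        push_cast; ring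
      rw [this, mul_comm, mul_div_assoc, div_self hzxne, mul_one]
  have hNs1 : ∀ s : ℝ, N (s, 1) = d := by
    intro s
    simp only [hN_def]
    rw [hF01]
    split_ifs with hs
    · rw [mul_comm, mul_div_assoc, div_self (hden1 (2 * s)), mul_one]
    · have : ((1 - (2 * s - 1) : ℝ) : ℂ) * x₀ + ((2 * s - 1 : ℝ) : ℂ) * x₀ - z = x₀ - z := by
        push_cast; ring
      rw [this, mul_comm, mul_div_assoc, div_self hzxne, mul_one]
  -- nonvanishing on the square
  have hNne : ∀ s t : ℝ, s ∈ Icc (0:ℝ) 1 → t ∈ Icc (0:ℝ) 1 → N (s, t) ≠ 0 := by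
    intro s t hs ht
    simp only [hN_def]
    split_ifs with hcase
    · exact div_ne_zero (mul_ne_zero (sub_ne_zero.mpr (hcF (2 * s) t)) hdne) (hden1 (2 * s))
    · apply div_ne_zero (mul_ne_zero ?_ hdne) hzxne
      set u : ℝ := 2 * s - 1 with hu_def
      have hu0 : 0 ≤ u := by simp only [hu_def]; push_neg at hcase; linarith
      have hu1 : u ≤ 1 := by simp only [hu_def]; linarith [hs.2]
      intro hzero
      have hw : ((1 - u : ℝ) : ℂ) * F t + ((u : ℝ) : ℂ) * x₀ = z := by
        have := sub_eq_zero.mp hzero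
        linear_combination this
      have hbound : ‖((1 - u : ℝ) : ℂ) * F t + ((u : ℝ) : ℂ) * x₀‖ ≤ r := by
        calc ‖((1 - u : ℝ) : ℂ) * F t + ((u : ℝ) : ℂ) * x₀‖
            ≤ ‖((1 - u : ℝ) : ℂ) * F t‖ + ‖((u : ℝ) : ℂ) * x₀‖ := norm_add_le _ _
          _ = (1 - u) * ‖F t‖ + u * ‖x₀‖ := by
              rw [norm_mul, norm_mul, Complex.norm_real, Complex.norm_real,
                Real.norm_eq_abs, Real.norm_eq_abs,
                abs_of_nonneg (show (0:ℝ) ≤ 1 - u by linarith), abs_of_nonneg hu0]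
          _ ≤ (1 - u) * r + u * r := by
              have h1 := hFb t ht
              have h2 := hx0r
              have hr0 : (0:ℝ) ≤ ‖F t‖ := norm_nonneg _
              nlinarith
          _ = r := by ring
      rw [hw] at hbound
      linarith
  -- the final homotopy
  have hmem' : ∀ (st : unitInterval × unitInterval),
      ((h.symm (N (st.1, st.2) + p₀) : ({a}ᶜ : Set X)) : X) ∈ ({a, b}ᶜ : Set X) := by
    intro st hmem
    rcases hmem with h1 | h2
    · exact (h.symm _).2 h1
    · have hN := hNne st.1 st.2 st.1.2 st.2.2
      apply hN
      have hb : h.symm (N (st.1, st.2) + p₀) = ⟨b, hba⟩ := Subtype.ext h2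
      have := congrArg h hb
      rw [h.apply_symm_apply] at this
      rw [← hp₀_def] at this
      linear_combination this
  have hvald : ((h.symm (d + p₀) : ({a}ᶜ : Set X)) : X) = x := by
    have hdp : d + p₀ = x₀ := by rw [hd_def]; ring
    rw [hdp, hx₀_def, hF_def]
    simp only [Homeomorph.symm_apply_apply]
    show ((γ.extend 0 : (Aᶜ : Set X)) : X) = x
    rw [Path.extend_zero]
  refine ⟨⟨⟨⟨fun st => ⟨(h.symm (N (st.1, st.2) + p₀) : X), hmem' st⟩, ?_⟩, ?_, ?_⟩, ?_⟩⟩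
  · -- continuity
    apply Continuous.subtype_mk
    apply continuous_subtype_val.comp
    apply h.symm.continuous.comp
    apply Continuous.add _ continuous_const
    exact hNcont.comp (by fun_prop)
  · -- map_zero_left
    intro t
    apply Subtype.ext
    show ((h.symm (N ((0:unitInterval), t) + p₀) : ({a}ᶜ : Set X)) : X) = _
    rw [show ((0:unitInterval):ℝ) = (0:ℝ) from rfl, hN0]
    rw [sub_add_cancel, hF_def]
    simp only [Homeomorph.symm_apply_apply]
    show ((γ.extend t : (Aᶜ : Set X)) : X) = _
    rw [γ.extend_extends' t]
    rfl
  · -- map_one_left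
    intro t
    apply Subtype.ext
    show ((h.symm (N ((1:unitInterval), t) + p₀) : ({a}ᶜ : Set X)) : X) = x
    rw [show ((1:unitInterval):ℝ) = (1:ℝ) from rfl, hN1]
    exact hvald
  · -- prop' (rel endpoints)
    intro s t ht
    rcases ht with h0 | h1
    · apply Subtype.ext
      subst h0
      show ((h.symm (N (s, (0:unitInterval)) + p₀) : ({a}ᶜ : Set X)) : X) = _
      rw [show ((0:unitInterval):ℝ) = (0:ℝ) from rfl, hNs0]
      rw [hvald]
      show x = ((γ.map (continuous_inclusion hsub)) 0 : X)
      simp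
    · apply Subtype.ext
      have h1' : t = 1 := h1
      subst h1'
      show ((h.symm (N (s, (1:unitInterval)) + p₀) : ({a}ᶜ : Set X)) : X) = _
      rw [show ((1:unitInterval):ℝ) = (1:ℝ) from rfl, hNs1]
      rw [hvald]
      show x = ((γ.map (continuous_inclusion hsub)) 1 : X)
      simp


/-- If a simple closed curve `C = A ∪ B` in `S²` (with `A`, `B` arcs meeting exactly in the
two points `a ≠ b`) has path-connected complement, then the homomorphism
`π₁(S² \ A, x) → π₁(S² \ {a,b}, x)` induced by inclusion is trivial:
every loop in `S² \ A` at `x` becomes null-homotopic in `S² \ {a,b}`. -/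
theorem inclusion_induced_trivial
    (A B : Set (Metric.sphere (0 : EuclideanSpace ℝ (Fin 3)) 1))
    (hA : Nonempty (A ≃ₜ unitInterval)) (hB : Nonempty (B ≃ₜ unitInterval))
    (a b : (Metric.sphere (0 : EuclideanSpace ℝ (Fin 3)) 1))
    (hab : a ≠ b) (hAB : A ∩ B = {a, b})
    (hC : Nonempty ((A ∪ B : Set (Metric.sphere (0 : EuclideanSpace ℝ (Fin 3)) 1))
      ≃ₜ Metric.sphere (0 : ℂ) 1))
    (hW : IsPathConnected ((A ∪ B)ᶜ :
      Set (Metric.sphere (0 : EuclideanSpace ℝ (Fin 3)) 1)))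
    (x : (Metric.sphere (0 : EuclideanSpace ℝ (Fin 3)) 1)) (hx : x ∉ A ∪ B)
    (γ : Path (⟨x, fun h => hx (Set.mem_union_left B h)⟩ : (Aᶜ :
      Set (Metric.sphere (0 : EuclideanSpace ℝ (Fin 3)) 1)))
      ⟨x, fun h => hx (Set.mem_union_left B h)⟩) :
    (γ.map (continuous_inclusion
      (show (Aᶜ : Set (Metric.sphere (0 : EuclideanSpace ℝ (Fin 3)) 1)) ⊆ {a, b}ᶜ
        from fun y hy hmem => hy (by rw [← hAB] at hmem; exact hmem.1)))).Homotopic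
    (Path.refl (⟨x, fun h => hx (Set.mem_union_left B
      (by rw [← hAB] at h; exact h.1))⟩ :
      (({a, b}ᶜ : Set (Metric.sphere (0 : EuclideanSpace ℝ (Fin 3)) 1))))) := by
  obtain ⟨e⟩ := hA
  have haA : a ∈ A := by
    have : a ∈ A ∩ B := by rw [hAB]; exact Or.inl rfl
    exact this.1
  have hbA : b ∈ A := by
    have : b ∈ A ∩ B := by rw [hAB]; exact Or.inr rfl
    exact this.1
  have hxA : x ∉ A := fun h => hx (Set.mem_union_left B h)
  haveI : Fact (Module.finrank ℝ (EuclideanSpace ℝ (Fin 3)) = 2 + 1) :=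
    ⟨by simp [finrank_euclideanSpace_fin]⟩
  let h : (({a}ᶜ : Set (Metric.sphere (0 : EuclideanSpace ℝ (Fin 3)) 1))) ≃ₜ ℂ :=
    (Homeomorph.setCongr (stereographic'_source (n := 2) a).symm).trans <|
      (stereographic' 2 a).toHomeomorphSourceTarget.trans <|
        (Homeomorph.setCongr (stereographic'_target (n := 2) a)).trans <|
          (Homeomorph.Set.univ _).trans <|
            (EuclideanSpace.equiv (Fin 2) ℝ).toHomeomorph.trans <|
              (Homeomorph.piFinTwo (fun _ => ℝ)).trans
                Complex.equivRealProdCLM.symm.toHomeomorph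
  exact aux_null e h haA hbA hab hxA _ _ γ
end

section
/- Let g : S¹ → ℝ² \ {0} be a continuous map whose image is contained in the open ball B(0,r) for some r > 0, and let λ : [0,1] → ℝ² be a path with λ(0) = 0, ∥λ(1)∥ > r, such that for all z ∈ S¹ and t ∈ [0,1], g(z) ≠ λ(t). Then g is null-homotopic as a map into ℝ² \ {0}. -/
/-- If `g : S¹ → ℝ² \ {0}` has image inside the open ball `B(0, r)` and there is a path
`ℓ` in `ℝ²` from `0` to a point of norm `> r` which avoids the image of `g`, then `g` is
null-homotopic as a map into `ℝ² \ {0}`. -/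
theorem nullhomotopic_of_avoiding_path (r : ℝ) (hr : 0 < r)
    (g : C(Metric.sphere (0 : ℂ) 1, ({(0 : EuclideanSpace ℝ (Fin 2))}ᶜ :
      Set (EuclideanSpace ℝ (Fin 2)))))
    (hgr : ∀ z, ‖(g z : EuclideanSpace ℝ (Fin 2))‖ < r)
    (ℓ : C(unitInterval, EuclideanSpace ℝ (Fin 2)))
    (hℓ0 : ℓ 0 = 0) (hℓ1 : r < ‖ℓ 1‖)
    (havoid : ∀ z t, (g z : EuclideanSpace ℝ (Fin 2)) ≠ ℓ t) :
    ∃ y, g.Homotopic (ContinuousMap.const _ y) := by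
  classical
  have hℓ1ne : ℓ 1 ≠ 0 := by
    intro h
    rw [h, norm_zero] at hℓ1
    linarith
  have hneℓ1 : (-ℓ 1) ∈ ({(0 : EuclideanSpace ℝ (Fin 2))}ᶜ :
      Set (EuclideanSpace ℝ (Fin 2))) := by
    simpa using hℓ1ne
  have hmid : ∀ z : Metric.sphere (0 : ℂ) 1, ∀ t : unitInterval,
      ((g z : EuclideanSpace ℝ (Fin 2)) - ℓ t) ∈
        ({(0 : EuclideanSpace ℝ (Fin 2))}ᶜ : Set (EuclideanSpace ℝ (Fin 2))) := by
    intro z t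
    simpa [sub_eq_zero] using havoid z t
  have hscale : ∀ (t : unitInterval) (z : Metric.sphere (0 : ℂ) 1),
      ((1 - (t : ℝ)) • (g z : EuclideanSpace ℝ (Fin 2)) - ℓ 1) ∈
        ({(0 : EuclideanSpace ℝ (Fin 2))}ᶜ : Set (EuclideanSpace ℝ (Fin 2))) := by
    intro t z
    simp only [Set.mem_compl_iff, Set.mem_singleton_iff, sub_eq_zero]
    intro h
    have h1 : ‖(1 - (t : ℝ)) • (g z : EuclideanSpace ℝ (Fin 2))‖ ≤
        ‖(g z : EuclideanSpace ℝ (Fin 2))‖ := by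
      rw [norm_smul, Real.norm_eq_abs,
        abs_of_nonneg (by linarith [t.2.2] : (0 : ℝ) ≤ 1 - (t : ℝ))]
      nlinarith [norm_nonneg (g z : EuclideanSpace ℝ (Fin 2)), t.2.1]
    have := hgr z
    rw [← h] at hℓ1
    linarith
  set f1 : C(Metric.sphere (0 : ℂ) 1, ({(0 : EuclideanSpace ℝ (Fin 2))}ᶜ :
      Set (EuclideanSpace ℝ (Fin 2)))) :=
    ⟨fun z => ⟨(g z : EuclideanSpace ℝ (Fin 2)) - ℓ 1, hmid z 1⟩, by
      apply Continuous.subtype_mk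
      exact (continuous_subtype_val.comp g.continuous).sub continuous_const⟩ with hf1
  let F1 : C(unitInterval × Metric.sphere (0 : ℂ) 1, ({(0 : EuclideanSpace ℝ (Fin 2))}ᶜ :
      Set (EuclideanSpace ℝ (Fin 2)))) :=
    ⟨fun p => ⟨(g p.2 : EuclideanSpace ℝ (Fin 2)) - ℓ p.1, hmid p.2 p.1⟩, by
      apply Continuous.subtype_mk
      exact ((continuous_subtype_val.comp g.continuous).comp continuous_snd).sub
        (ℓ.continuous.comp continuous_fst)⟩
  have H1 : g.Homotopic f1 := by
    refine ⟨{ toContinuousMap := F1, map_zero_left := ?_, map_one_left := ?_ }⟩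
    · intro z
      ext
      simp [F1, hℓ0]
    · intro z
      rfl
  let F2 : C(unitInterval × Metric.sphere (0 : ℂ) 1, ({(0 : EuclideanSpace ℝ (Fin 2))}ᶜ :
      Set (EuclideanSpace ℝ (Fin 2)))) :=
    ⟨fun p => ⟨(1 - (p.1 : ℝ)) • (g p.2 : EuclideanSpace ℝ (Fin 2)) - ℓ 1,
        hscale p.1 p.2⟩, by
      apply Continuous.subtype_mk
      exact (((continuous_const.sub ((continuous_subtype_val.comp continuous_fst).comp
        continuous_id)).smul
        ((continuous_subtype_val.comp g.continuous).comp continuous_snd)).sub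
        continuous_const)⟩
  have H2 : f1.Homotopic (ContinuousMap.const _ ⟨-ℓ 1, hneℓ1⟩) := by
    refine ⟨{ toContinuousMap := F2, map_zero_left := ?_, map_one_left := ?_ }⟩
    · intro z
      ext
      simp [F2, hf1]
    · intro z
      ext
      simp [F2]
  exact ⟨_, H1.trans H2⟩
end

section
/- With notation as in the van Kampen pushout computation: given a pushout of groupoids over J with totally disconnected C and connected A, B, and p ∈ J, the free group F on { f_x : x ∈ J, x ≠ p } is a retract of the vertex group G(p) of the pushout. Consequently, if J has more than one element then G(p) is nontrivial, and if J has more than two elements then G(p) is nonabelian. -/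
open CategoryTheory

/-- The hom-type of a groupoid structure `g` on `J`. -/
abbrev GHom {J : Type} (g : Groupoid J) (x y : J) : Type :=
  @Quiver.Hom J g.toCategory.toCategoryStruct.toQuiver x y

/-- Identity morphism of `g`. -/
abbrev Gid {J : Type} (g : Groupoid J) (x : J) : GHom g x x :=
  g.toCategory.toCategoryStruct.id x

/-- Composition in `g` (diagrammatic order). -/
abbrev Gcomp {J : Type} (g : Groupoid J) {x y z : J}
    (f : GHom g x y) (f' : GHom g y z) : GHom g x z :=
  g.toCategory.toCategoryStruct.comp f f'

/-- Inverse in `g`. -/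
abbrev Ginv {J : Type} (g : Groupoid J) {x y : J} (f : GHom g x y) : GHom g y x :=
  g.inv f

/-- A morphism of groupoids over `J`: a functor which is the identity on objects. -/
structure OverJHom {J : Type} (g h : Groupoid J) where
  map : ∀ {x y : J}, GHom g x y → GHom h x y
  map_id : ∀ x : J, map (Gid g x) = Gid h x
  map_comp : ∀ {x y z : J} (f : GHom g x y) (f' : GHom g y z),
    map (Gcomp g f f') = Gcomp h (map f) (map f')

/-- Composition of morphisms of groupoids over `J`. -/
def OverJHom.comp' {J : Type} {g h k : Groupoid J}
    (F : OverJHom g h) (F' : OverJHom h k) : OverJHom g k where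
  map f := F'.map (F.map f)
  map_id x := by show F'.map (F.map (Gid g x)) = Gid k x; rw [F.map_id, F'.map_id]
  map_comp f f' := by
    show F'.map (F.map (Gcomp g f f')) = Gcomp k (F'.map (F.map f)) (F'.map (F.map f'))
    rw [F.map_comp, F'.map_comp]

/-- The vertex group structure on `GHom g p p`. -/
noncomputable instance {J : Type} (g : Groupoid J) (p : J) : Group (GHom g p p) :=
  @Groupoid.vertexGroup J g p

/-!
A loop at `p` in the pushout `G` is detected by mapping `G` into the groupoid whose hom-sets are
all the free group `F` on `{x ≠ p}`: send `A` to the trivial morphism and `B` to the coboundary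
`(x ⟶ y) ↦ (c x)⁻¹ c y` of the potential `c` taking `x ≠ p` to its generator and `p` to `1`.
These agree on `C`, which has only loops, so the universal property yields `G → F`; on the vertex
group at `p` it sends `(u α_x)⁻¹ (v β_x)` to the generator at `x`. Hence the lift of these loops
is a section, and `F` embeds into `G(p)`.
-/

namespace OverJHom

variable {J : Type} {g h : Groupoid J}

lemma ext {F G : OverJHom g h} (hm : ∀ {x y : J} (f : GHom g x y), F.map f = G.map f) :
    F = G := by
  obtain ⟨Fm, _, _⟩ := F
  obtain ⟨Gm, _, _⟩ := G
  obtain rfl : @Fm = @Gm := by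
    funext x y f
    exact hm f
  rfl

lemma map_inv (F : OverJHom g h) {x y : J} (f : GHom g x y) :
    F.map (Ginv g f) = Ginv h (F.map f) :=
  calc F.map (Ginv g f)
      = Gcomp h (Gid h y) (F.map (Ginv g f)) := (h.id_comp _).symm
    _ = Gcomp h (Gcomp h (Ginv h (F.map f)) (F.map f)) (F.map (Ginv g f)) :=
        congrArg (Gcomp h · _) (h.inv_comp (F.map f)).symm
    _ = Gcomp h (Ginv h (F.map f)) (Gcomp h (F.map f) (F.map (Ginv g f))) := h.assoc ..
    _ = Gcomp h (Ginv h (F.map f)) (Gid h x) := by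
        rw [← F.map_comp, ← F.map_id]
        exact congrArg (Gcomp h _ <| F.map ·) (g.comp_inv f)
    _ = Ginv h (F.map f) := h.comp_id _

noncomputable def vertexHom (F : OverJHom g h) (p : J) : GHom g p p →* GHom h p p :=
  MonoidHom.mk' F.map F.map_comp

end OverJHom

abbrev groupGroupoid (J : Type) (F : Type) [Group F] : Groupoid J where
  Hom _ _ := F
  id _ := 1
  comp f g := f * g
  id_comp := one_mul
  comp_id := mul_one
  assoc := mul_assoc
  inv f := f⁻¹
  inv_comp := inv_mul_cancel
  comp_inv := mul_inv_cancel

namespace OverJHom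

variable {J : Type} {F : Type} [Group F]

def coboundary (g : Groupoid J) (c : J → F) : OverJHom g (groupGroupoid J F) where
  map {x y} _ := (c x)⁻¹ * c y
  map_id x := inv_mul_cancel (c x)
  map_comp {x y z} _ _ := by
    change (c x)⁻¹ * c z = (c x)⁻¹ * c y * ((c y)⁻¹ * c z)
    group

lemma coboundary_map {g : Groupoid J} (c : J → F) {x y : J} (f : GHom g x y) :
    (coboundary g c).map f = (c x)⁻¹ * c y :=
  rfl

lemma comp_coboundary_eq_of_isEmpty {gC gA gB : Groupoid J}
    (hC : ∀ x y : J, x ≠ y → IsEmpty (GHom gC x y))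
    (i : OverJHom gC gA) (j : OverJHom gC gB) (c c' : J → F) :
    i.comp' (coboundary gA c) = j.comp' (coboundary gB c') := by
  refine ext fun {x y} f => ?_
  obtain rfl | hxy := eq_or_ne x y
  · exact (inv_mul_cancel (c x)).trans (inv_mul_cancel (c' x)).symm
  · exact (hC x y hxy).elim f

end OverJHom

lemma FreeGroup.comp_lift_eq_id {X H : Type} [Group H] (ρ : H →* FreeGroup X) (s : X → H)
    (hs : ∀ x, ρ (s x) = FreeGroup.of x) : ρ.comp (FreeGroup.lift s) = MonoidHom.id _ :=
  FreeGroup.ext_hom _ _ fun x => by simp [hs]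

lemma FreeGroup.of_mul_of_ne {X : Type} {x y : X} (hxy : x ≠ y) :
    FreeGroup.of x * FreeGroup.of y ≠ FreeGroup.of y * FreeGroup.of x := by
  classical
  intro h
  have hword : x = y ∧ y = x := by
    simpa [FreeGroup.toWord_mul, FreeGroup.reduce] using congrArg FreeGroup.toWord h
  exact hxy hword.1

theorem exists_vertexHom_freeGroup_of_pushout {J : Type}
    {gC gA gB gG : Groupoid J}
    {i : OverJHom gC gA} {j : OverJHom gC gB}
    (u : OverJHom gA gG) (v : OverJHom gB gG)
    (huniv : ∀ (gH : Groupoid J) (a : OverJHom gA gH) (b : OverJHom gB gH),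
      i.comp' a = j.comp' b → ∃ w : OverJHom gG gH, u.comp' w = a ∧ v.comp' w = b)
    (hC : ∀ x y : J, x ≠ y → IsEmpty (GHom gC x y))
    (p : J) (α : ∀ x : J, GHom gA p x) (β : ∀ x : J, GHom gB p x) :
    ∃ ρ : GHom gG p p →* FreeGroup {x : J // x ≠ p}, ∀ (x : J) (hx : x ≠ p),
      ρ (Gcomp gG (v.map (β x)) (Ginv gG (u.map (α x)))) = FreeGroup.of ⟨x, hx⟩ := by
  classical
  let c : J → FreeGroup {x : J // x ≠ p} := fun x => if hx : x = p then 1 else .of ⟨x, hx⟩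
  obtain ⟨w, hwu, hwv⟩ :=
    huniv _ (.coboundary gA (1 : J → FreeGroup {x : J // x ≠ p})) (.coboundary gB c)
      (OverJHom.comp_coboundary_eq_of_isEmpty hC i j 1 c)
  refine ⟨w.vertexHom p, fun x hx => ?_⟩
  have hu : w.map (u.map (α x)) = (1 : FreeGroup {x : J // x ≠ p}) := by
    change (u.comp' w).map (α x) = _
    rw [hwu, OverJHom.coboundary_map]
    exact inv_mul_cancel (1 : FreeGroup {x : J // x ≠ p})
  have hv : w.map (v.map (β x)) = .of ⟨x, hx⟩ := by
    change (v.comp' w).map (β x) = _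
    rw [hwv, OverJHom.coboundary_map]
    simp only [c, dif_pos, dif_neg hx, inv_one, one_mul]
  show w.map _ = _
  rw [w.map_comp, w.map_inv, hu, hv]
  change _ * (1 : FreeGroup {x : J // x ≠ p})⁻¹ = _
  rw [inv_one, mul_one]

theorem free_group_retract_of_pushout_general {J : Type}
    (gC gA gB gG : Groupoid J)
    (i : OverJHom gC gA) (j : OverJHom gC gB)
    (u : OverJHom gA gG) (v : OverJHom gB gG)
    (huniv : ∀ (gH : Groupoid J) (a : OverJHom gA gH) (b : OverJHom gB gH),
      i.comp' a = j.comp' b →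
      ∃! w : OverJHom gG gH, u.comp' w = a ∧ v.comp' w = b)
    (hC : ∀ x y : J, x ≠ y → IsEmpty (GHom gC x y))
    (p : J)
    (α : ∀ x : J, GHom gA p x)
    (β : ∀ x : J, GHom gB p x) :
    (∃ (ι : FreeGroup {x : J // x ≠ p} →* GHom gG p p)
       (ρ : GHom gG p p →* FreeGroup {x : J // x ≠ p}),
        ρ.comp ι = MonoidHom.id (FreeGroup {x : J // x ≠ p}) ∧
        ∀ (x : J) (hx : x ≠ p),
          ι (FreeGroup.of ⟨x, hx⟩) =
            (Gcomp gG (v.map (β x)) (Ginv gG (u.map (α x))) : GHom gG p p)) ∧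
    ((∃ x : J, x ≠ p) → ∃ g : GHom gG p p, g ≠ 1) ∧
    ((∃ x y : J, x ≠ p ∧ y ≠ p ∧ x ≠ y) →
      ∃ g h : GHom gG p p, g * h ≠ h * g) := by
  obtain ⟨ρ, hρ⟩ := exists_vertexHom_freeGroup_of_pushout u v
    (fun gH a b h => (huniv gH a b h).exists) hC p α β
  let ι := FreeGroup.lift fun x : {x : J // x ≠ p} =>
    Gcomp gG (v.map (β x)) (Ginv gG (u.map (α x)))
  have hretr : ρ.comp ι = MonoidHom.id _ := FreeGroup.comp_lift_eq_id ρ _ fun x => hρ x.1 x.2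
  have hinj : Function.Injective ι :=
    Function.LeftInverse.injective (DFunLike.congr_fun hretr)
  refine ⟨⟨ι, ρ, hretr, fun x hx => FreeGroup.lift_apply_of⟩, ?_, ?_⟩
  · rintro ⟨x, hx⟩
    exact ⟨ι (.of ⟨x, hx⟩), (hinj.ne (FreeGroup.of_ne_one _)).trans_eq (map_one ι)⟩
  · rintro ⟨x, y, hx, hy, hxy⟩
    refine ⟨ι (.of ⟨x, hx⟩), ι (.of ⟨y, hy⟩), ?_⟩
    rw [← map_mul, ← map_mul, hinj.ne_iff]
    exact FreeGroup.of_mul_of_ne (Subtype.coe_injective.ne_iff.mp hxy)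

/-- Retraction corollary of the van Kampen pushout computation: the free group on
`{ f_x : x ∈ J, x ≠ p }` is a retract of the vertex group `G(p)` of the pushout
(the section carrying the generator at `x` to `f_x = (u α_x)⁻¹ (v β_x)`).
Consequently `G(p)` is nontrivial if `J` has more than one element, and nonabelian
if `J` has more than two elements. -/
theorem free_group_retract_of_pushout {J : Type}
    (gC gA gB gG : Groupoid J)
    (i : OverJHom gC gA) (j : OverJHom gC gB)
    (u : OverJHom gA gG) (v : OverJHom gB gG)
    (hcomm : i.comp' u = j.comp' v)
    (huniv : ∀ (gH : Groupoid J) (a : OverJHom gA gH) (b : OverJHom gB gH),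
      i.comp' a = j.comp' b →
      ∃! w : OverJHom gG gH, u.comp' w = a ∧ v.comp' w = b)
    (hC : ∀ x y : J, x ≠ y → IsEmpty (GHom gC x y))
    (hA : ∀ x y : J, Nonempty (GHom gA x y))
    (hB : ∀ x y : J, Nonempty (GHom gB x y))
    (p : J)
    (α : ∀ x : J, GHom gA p x) (hα : α p = Gid gA p)
    (β : ∀ x : J, GHom gB p x) (hβ : β p = Gid gB p) :
    (∃ (ι : FreeGroup {x : J // x ≠ p} →* GHom gG p p)
       (ρ : GHom gG p p →* FreeGroup {x : J // x ≠ p}),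
        ρ.comp ι = MonoidHom.id (FreeGroup {x : J // x ≠ p}) ∧
        ∀ (x : J) (hx : x ≠ p),
          ι (FreeGroup.of ⟨x, hx⟩) =
            (Gcomp gG (v.map (β x)) (Ginv gG (u.map (α x))) : GHom gG p p)) ∧
    ((∃ x : J, x ≠ p) → ∃ g : GHom gG p p, g ≠ 1) ∧
    ((∃ x y : J, x ≠ p ∧ y ≠ p ∧ x ≠ y) →
      ∃ g h : GHom gG p p, g * h ≠ h * g) :=
  free_group_retract_of_pushout_general gC gA gB gG i j u v huniv hC p α β
end
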